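/- arXiv:1504.01681 — 5 statements merged into one kernel-verified Lean document; each statement's English description precedes it below -/
import Mathlib

section
/- The index of the subgroup K^{(n)} = {w ∈ W̃_s : w(m) ≡ m (mod ns) for all m ∈ ℤ} in the affine symmetric group W̃_s equals n^{s-1} · s!. -/
/-- A partition: a weakly decreasing, eventually-zero sequence of naturals
(0-indexed: `f i` is the `(i+1)`-th part). -/
structure Partn where
  f : ℕ → ℕ
  antitone : Antitone f
  eventually_zero : ∃ N, ∀ i, N ≤ i → f i = 0

/-- The beta-set `B(λ) = {λ_i - i : i ≥ 1}`. -/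
def betaSet (p : Partn) : Set ℤ := {b | ∃ i : ℕ, b = (p.f i : ℤ) - (i + 1)}

/-- `conjCount p j` is the `(j+1)`-th part of the conjugate partition. -/
noncomputable def conjCount (p : Partn) (j : ℕ) : ℕ := Set.ncard {i : ℕ | j + 1 ≤ p.f i}

/-- Hook length of the cell in row `r+1`, column `c+1` (1-indexed formula
`1 + (λ_r - r) + (λ'_c - c)`). -/
noncomputable def hookLen (p : Partn) (r c : ℕ) : ℤ :=
  1 + ((p.f r : ℤ) - (r + 1)) + ((conjCount p c : ℤ) - (c + 1))

/-- `p` is an `s`-core: no hook length is divisible by `s`. -/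
def IsCore (s : ℕ) (p : Partn) : Prop :=
  ∀ r c : ℕ, c < p.f r → ¬ ((s : ℤ) ∣ hookLen p r c)

/-- `p` is self-conjugate. -/
def SelfConj (p : Partn) : Prop := ∀ j, p.f j = conjCount p j

/-- The `s`-set of an `s`-core: `S(λ) = (B(λ)+s) \ B(λ)`. -/
def sSet (s : ℕ) (p : Partn) : Set ℤ := {x | x - s ∈ betaSet p ∧ x ∉ betaSet p}

/-- An `s`-set: `s` integers, pairwise incongruent mod `s`, summing to `C(s,2)`. -/
def IsSSet (s : ℕ) (X : Set ℤ) : Prop :=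
  X.ncard = s ∧ (∀ a ∈ X, ∀ b ∈ X, a ≠ b → ¬ ((s : ℤ) ∣ (a - b))) ∧
    (∑ᶠ x ∈ X, x) = (s.choose 2 : ℤ)

/-- The affine symmetric group `W̃_s`, as a set of permutations of `ℤ`:
`w(m+s) = w(m)+s` and `w(0)+⋯+w(s-1) = C(s,2)`. -/
def AffSymSet (s : ℕ) : Set (Equiv.Perm ℤ) :=
  {w | (∀ m : ℤ, w (m + s) = w m + s) ∧
    (∑ i ∈ Finset.range s, w (i : ℤ)) = (s.choose 2 : ℤ)}

/-- The underlying function of the Coxeter generator `w_i` of `W̃_s`, where `a = i - 1`: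
swaps `m` and `m+1` whenever `m ≡ i - 1 (mod s)`. -/
def genFun (s : ℕ) (a : ℤ) : ℤ → ℤ := fun m =>
  if (s : ℤ) ∣ (m - a) then m + 1 else if (s : ℤ) ∣ (m - a - 1) then m - 1 else m

lemma genFun_involutive (s : ℕ) (hs : 2 ≤ s) (a : ℤ) :
    Function.Involutive (genFun s a) := by
  have h1 : ¬ ((s : ℤ) ∣ 1) := by
    intro h
    have := Int.le_of_dvd one_pos h
    omega
  intro m
  unfold genFun
  by_cases hA : (s : ℤ) ∣ (m - a)
  · rw [if_pos hA]
    have hB : ¬ (s : ℤ) ∣ (m + 1 - a) := by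
      intro h
      have := dvd_sub h hA
      rw [show m + 1 - a - (m - a) = 1 by ring] at this
      exact h1 this
    rw [if_neg hB, if_pos (by rw [show m + 1 - a - 1 = m - a by ring]; exact hA)]
    ring
  · rw [if_neg hA]
    by_cases hB : (s : ℤ) ∣ (m - a - 1)
    · rw [if_pos hB, if_pos (by rw [show m - 1 - a = m - a - 1 by ring]; exact hB)]
      ring
    · rw [if_neg hB, if_neg hA, if_neg hB]

/-- The Coxeter generator `w_i` of `W̃_s`, where `a = i - 1`. -/
def genPerm (s : ℕ) (hs : 2 ≤ s) (a : ℤ) : Equiv.Perm ℤ :=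
  (genFun_involutive s hs a).toPerm

/-- The constant `c = (s-1)(t-1)/2`. -/
def lc (s t : ℕ) : ℤ := (((s : ℤ) - 1) * ((t : ℤ) - 1)) / 2

/-- The image `ẘ_i` of the generator `w_i` under the level `t` action on `ℤ`:
`m ↦ m + t` if `m ≡ (i-1)t - c (mod s)`, `m ↦ m - t` if `m ≡ it - c (mod s)`,
`m ↦ m` otherwise. -/
def levelGenFun (s t : ℕ) (i : ℤ) : ℤ → ℤ := fun m =>
  if (s : ℤ) ∣ (m - ((i - 1) * t - lc s t)) then m + t
  else if (s : ℤ) ∣ (m - (i * t - lc s t)) then m - t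
  else m

/-- `Φ` is (the restriction to `W̃_s` of) the level `t` action of `W̃_s` on `ℤ`:
a multiplicative map on `W̃_s` sending each generator `w_i` to `ẘ_i`. -/
def IsLevelTAction (s t : ℕ) (hs : 2 ≤ s) (Φ : Equiv.Perm ℤ → Equiv.Perm ℤ) : Prop :=
  (∀ w v : Equiv.Perm ℤ, w ∈ AffSymSet s → v ∈ AffSymSet s → Φ (w * v) = Φ w * Φ v) ∧
  (∀ i m : ℤ, Φ (genPerm s hs (i - 1)) m = levelGenFun s t i m)

/-- Removing a rim hook of length `t`, in terms of beta-sets: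
`μ` is obtained from `λ` by removing a rim `t`-hook. -/
def RemoveHook (t : ℕ) (p q : Partn) : Prop :=
  ∃ b ∈ betaSet p, b - t ∉ betaSet p ∧ betaSet q = insert (b - t) (betaSet p \ {b})

namespace IdxAux

variable {s : ℕ}

lemma shift (w : Equiv.Perm ℤ) (hw : ∀ m : ℤ, w (m + s) = w m + s) (t m : ℤ) :
    w (m + s * t) = w m + s * t := by
  induction t using Int.induction_on generalizing m with
  | zero => simp
  | succ k ih =>
      have h1 : m + s * ((k : ℤ) + 1) = (m + s * k) + s := by ring
      rw [h1, hw, ih]; ring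
  | pred k ih =>
      have hw' : ∀ m : ℤ, w (m - s) = w m - s := by
        intro m; have := hw (m - s); rw [sub_add_cancel] at this; omega
      have h1 : m + s * (-(k : ℤ) - 1) = (m + s * (-k)) - s := by ring
      rw [h1, hw', ih]; ring

lemma apply_decomp (w : Equiv.Perm ℤ) (hw : ∀ m : ℤ, w (m + s) = w m + s) (m : ℤ) :
    w m = w (m % s) + s * (m / s) := by
  have := shift w hw (m / s) (m % s)
  rwa [Int.emod_add_mul_ediv m s] at this

lemma inv_periodic (w : Equiv.Perm ℤ) (hw : ∀ m : ℤ, w (m + s) = w m + s) (m : ℤ) :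
    w⁻¹ (m + s) = w⁻¹ m + s := by
  apply w.injective
  have hai : ∀ x, w (w⁻¹ x) = x := fun x => w.apply_symm_apply x
  rw [hai, hw, hai]

lemma eq_of_dvd (hs : 0 < s) (w : Equiv.Perm ℤ) (hw : ∀ m : ℤ, w (m + s) = w m + s)
    {i j : ℤ} (hi0 : 0 ≤ i) (hi : i < s) (hj0 : 0 ≤ j) (hj : j < s)
    (h : (s : ℤ) ∣ w i - w j) : i = j := by
  obtain ⟨t, ht⟩ := h
  have h1 : w (j + s * t) = w i := by rw [shift w hw]; omega
  have h2 : i = j + s * t := (w.injective h1).symm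
  have hs' : (0 : ℤ) < s := by exact_mod_cast hs
  have ht1 : t < 1 := by
    by_contra hc
    push_neg at hc
    nlinarith
  have ht2 : -1 < t := by
    by_contra hc
    push_neg at hc
    nlinarith
  have ht0 : t = 0 := by omega
  rw [ht0] at h2
  omega

lemma sum_range_cast (s : ℕ) : ∑ i ∈ Finset.range s, (i : ℤ) = (s.choose 2 : ℤ) := by
  rw [Nat.choose_two_right, ← Finset.sum_range_id]
  push_cast
  rfl


def resFun (hs : 0 < s) (w : Equiv.Perm ℤ) : Fin s → Fin s := fun i =>
  ⟨((w ((i : ℕ) : ℤ)) % s).toNat, by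
    have hs' : (0 : ℤ) < s := by exact_mod_cast hs
    have h1 := Int.emod_nonneg (w ((i : ℕ) : ℤ)) (by omega : (s : ℤ) ≠ 0)
    have h2 := Int.emod_lt_of_pos (w ((i : ℕ) : ℤ)) hs'
    omega⟩

lemma resFun_cast (hs : 0 < s) (w : Equiv.Perm ℤ) (i : Fin s) :
    ((resFun hs w i : ℕ) : ℤ) = (w ((i : ℕ) : ℤ)) % s := by
  simp only [resFun]
  have hs' : (0 : ℤ) < s := by exact_mod_cast hs
  have h1 := Int.emod_nonneg (w ((i : ℕ) : ℤ)) (by omega : (s : ℤ) ≠ 0)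
  omega

lemma resFun_bijective (hs : 0 < s) (w : Equiv.Perm ℤ)
    (hw : ∀ m : ℤ, w (m + s) = w m + s) : Function.Bijective (resFun hs w) := by
  rw [← Finite.injective_iff_bijective]
  intro i j h
  have h1 : ((resFun hs w i : ℕ) : ℤ) = ((resFun hs w j : ℕ) : ℤ) := by rw [h]
  rw [resFun_cast, resFun_cast] at h1
  have h2 : (s : ℤ) ∣ w ((i : ℕ) : ℤ) - w ((j : ℕ) : ℤ) := by
    rw [Int.dvd_iff_emod_eq_zero, Int.sub_emod, h1]
    simp
  have h3 : ((i : ℕ) : ℤ) = ((j : ℕ) : ℤ) := by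
    apply eq_of_dvd hs w hw <;> try exact h2
    · positivity
    · exact_mod_cast i.isLt
    · positivity
    · exact_mod_cast j.isLt
  ext
  exact_mod_cast h3

lemma sum_comp_aux (hs : 0 < s) (u v : Equiv.Perm ℤ)
    (hu : ∀ m : ℤ, u (m + s) = u m + s) (hv : ∀ m : ℤ, v (m + s) = v m + s) :
    ∑ i ∈ Finset.range s, u (v (i : ℤ)) =
      (∑ i ∈ Finset.range s, u (i : ℤ)) + (∑ i ∈ Finset.range s, v (i : ℤ))
        - (s.choose 2 : ℤ) := by
  have key : ∀ i : Fin s, u (v ((i : ℕ) : ℤ)) =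
      (u ((resFun hs v i : ℕ) : ℤ) - ((resFun hs v i : ℕ) : ℤ)) + v ((i : ℕ) : ℤ) := by
    intro i
    rw [resFun_cast, apply_decomp u hu (v ((i : ℕ) : ℤ))]
    have := Int.emod_add_mul_ediv (v ((i : ℕ) : ℤ)) s
    have h2 := apply_decomp u hu (v ((i : ℕ) : ℤ) % s)
    have h3 : (v ((i : ℕ) : ℤ) % s) % s = v ((i : ℕ) : ℤ) % s := Int.emod_emod_of_dvd _ dvd_rfl
    omega
  rw [← Fin.sum_univ_eq_sum_range (fun i => u (v ((i : ℕ) : ℤ))) s]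
  rw [Finset.sum_congr rfl (fun i _ => key i)]
  rw [Finset.sum_add_distrib]
  have hb := resFun_bijective hs v hv
  have h4 : ∑ i : Fin s, (u ((resFun hs v i : ℕ) : ℤ) - ((resFun hs v i : ℕ) : ℤ))
      = ∑ j : Fin s, (u ((j : ℕ) : ℤ) - ((j : ℕ) : ℤ)) :=
    Function.Bijective.sum_comp hb (fun j : Fin s => u ((j : ℕ) : ℤ) - ((j : ℕ) : ℤ))
  rw [h4, Finset.sum_sub_distrib]
  rw [Fin.sum_univ_eq_sum_range (fun i => u ((i : ℕ) : ℤ)) s]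
  rw [Fin.sum_univ_eq_sum_range (fun i => ((i : ℕ) : ℤ)) s]
  rw [Fin.sum_univ_eq_sum_range (fun i => v ((i : ℕ) : ℤ)) s]
  rw [sum_range_cast]
  ring

lemma one_mem (s : ℕ) : (1 : Equiv.Perm ℤ) ∈ AffSymSet s := by
  constructor
  · intro m; rfl
  · simpa using sum_range_cast s

lemma mul_mem (hs : 0 < s) {w v : Equiv.Perm ℤ} (hw : w ∈ AffSymSet s)
    (hv : v ∈ AffSymSet s) : w * v ∈ AffSymSet s := by
  obtain ⟨hw1, hw2⟩ := hw
  obtain ⟨hv1, hv2⟩ := hv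
  constructor
  · intro m
    simp only [Equiv.Perm.mul_apply, hv1, hw1]
  · have := sum_comp_aux hs w v hw1 hv1
    simp only [Equiv.Perm.mul_apply]
    rw [this, hw2, hv2]
    ring

lemma inv_mem (hs : 0 < s) {w : Equiv.Perm ℤ} (hw : w ∈ AffSymSet s) :
    w⁻¹ ∈ AffSymSet s := by
  obtain ⟨hw1, hw2⟩ := hw
  have hinv : ∀ m : ℤ, w⁻¹ (m + s) = w⁻¹ m + s := inv_periodic w hw1
  constructor
  · exact hinv
  · have h := sum_comp_aux hs w⁻¹ w hinv hw1
    have hia : ∀ x, w⁻¹ (w x) = x := fun x => w.symm_apply_apply x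
    simp only [hia] at h
    rw [sum_range_cast, hw2] at h
    omega


variable (s n : ℕ)

def Kset : Set (Equiv.Perm ℤ) :=
  {w' : Equiv.Perm ℤ | w' ∈ AffSymSet s ∧ ∀ m : ℤ, ((n : ℤ) * s) ∣ (w' m - m)}

def coset (w : Equiv.Perm ℤ) : Set (Equiv.Perm ℤ) :=
  {x | ∃ k ∈ Kset s n, x = w * k}

variable {s n}

lemma mem_coset_iff (hs : 0 < s) {w : Equiv.Perm ℤ} (hw : w ∈ AffSymSet s)
    (x : Equiv.Perm ℤ) :
    x ∈ coset s n w ↔ x ∈ AffSymSet s ∧ ∀ m : ℤ, ((n : ℤ) * s) ∣ (x m - w m) := by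
  constructor
  · rintro ⟨k, ⟨hkA, hkc⟩, rfl⟩
    refine ⟨mul_mem hs hw hkA, ?_⟩
    intro m
    obtain ⟨j, hj⟩ := hkc m
    have hk : k m = m + (s : ℤ) * ((n : ℤ) * j) := by linarith [hj]
    have : w (k m) = w m + (s : ℤ) * ((n : ℤ) * j) := by
      rw [hk, shift w hw.1]
    simp only [Equiv.Perm.mul_apply]
    rw [this]
    exact ⟨j, by ring⟩
  · rintro ⟨hxA, hxc⟩
    refine ⟨w⁻¹ * x, ⟨mul_mem hs (inv_mem hs hw) hxA, ?_⟩, (mul_inv_cancel_left w x).symm⟩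
    intro m
    obtain ⟨j, hj⟩ := hxc m
    have hx : x m = w m + (s : ℤ) * ((n : ℤ) * j) := by linarith [hj]
    simp only [Equiv.Perm.mul_apply]
    have hia : ∀ x, w⁻¹ (w x) = x := fun x => w.symm_apply_apply x
    rw [hx, shift w⁻¹ (inv_periodic w hw.1), hia]
    exact ⟨j, by ring⟩

lemma cong_ext (hs : 0 < s) {w w' : Equiv.Perm ℤ}
    (hw : ∀ m : ℤ, w (m + s) = w m + s) (hw' : ∀ m : ℤ, w' (m + s) = w' m + s)
    (h : ∀ i ∈ Finset.range s, ((n : ℤ) * s) ∣ (w (i : ℤ) - w' (i : ℤ)))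
    (m : ℤ) : ((n : ℤ) * s) ∣ (w m - w' m) := by
  have hs' : (0 : ℤ) < s := by exact_mod_cast hs
  have h1 := apply_decomp w hw m
  have h2 := apply_decomp w' hw' m
  have h3 : w m - w' m = w (m % s) - w' (m % s) := by omega
  rw [h3]
  have h4 : m % s = (((m % s).toNat : ℕ) : ℤ) := by
    have := Int.emod_nonneg m (by omega : (s : ℤ) ≠ 0)
    omega
  rw [h4]
  apply h
  rw [Finset.mem_range]
  have h5 := Int.emod_lt_of_pos m hs'
  have := Int.emod_nonneg m (by omega : (s : ℤ) ≠ 0)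
  omega

lemma coset_eq_iff (hs : 0 < s) {w w' : Equiv.Perm ℤ} (hw : w ∈ AffSymSet s)
    (hw' : w' ∈ AffSymSet s) :
    coset s n w = coset s n w' ↔
      ∀ i ∈ Finset.range s, ((n : ℤ) * s) ∣ (w (i : ℤ) - w' (i : ℤ)) := by
  constructor
  · intro h
    have hmem : w' ∈ coset s n w' := ⟨1, ⟨one_mem s, fun m => by simp⟩, (mul_one w').symm⟩
    rw [← h, mem_coset_iff hs hw] at hmem
    intro i _
    exact dvd_sub_comm.mp (hmem.2 (i : ℤ))
  · intro h
    have hall := cong_ext hs hw.1 hw'.1 h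
    ext x
    rw [mem_coset_iff hs hw, mem_coset_iff hs hw']
    constructor
    · rintro ⟨hxA, hxc⟩
      refine ⟨hxA, fun m => ?_⟩
      have heq : x m - w' m = (x m - w m) + (w m - w' m) := by ring
      rw [heq]; exact dvd_add (hxc m) (hall m)
    · rintro ⟨hxA, hxc⟩
      refine ⟨hxA, fun m => ?_⟩
      have heq : x m - w m = (x m - w' m) - (w m - w' m) := by ring
      rw [heq]; exact dvd_sub (hxc m) (hall m)
  

variable (s n)

def Fm (w : Equiv.Perm ℤ) : Fin s → ZMod (n * s) := fun i =>
  ((w ((i : ℕ) : ℤ) : ℤ) : ZMod (n * s))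

variable {s n}

lemma natval_cast (hs : 0 < s) (hn : 0 < n) (z : ℤ) :
    ((((z : ZMod (n * s)).val : ℕ)) : ZMod s) = ((z : ZMod s)) := by
  haveI : NeZero (n * s) := ⟨by positivity⟩
  have h1 : (((z : ZMod (n * s)).val : ℤ)) = z % ((n * s : ℕ) : ℤ) := ZMod.val_intCast z
  have h2 : ((((z : ZMod (n * s)).val : ℕ)) : ZMod s) = (((((z : ZMod (n * s)).val : ℤ))) : ZMod s) := by
    push_cast; rfl
  rw [h2, h1, ZMod.intCast_eq_intCast_iff]
  have hdvd : (s : ℤ) ∣ ((n * s : ℕ) : ℤ) := by push_cast; exact dvd_mul_left _ _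
  exact Int.emod_emod_of_dvd z hdvd

lemma Fm_mem (hs : 0 < s) (hn : 0 < n) {w : Equiv.Perm ℤ} (hw : w ∈ AffSymSet s) :
    (∀ i j : Fin s, (((Fm s n w i).val : ℕ) : ZMod s) = (((Fm s n w j).val : ℕ) : ZMod s) → i = j) ∧
      ∑ i, Fm s n w i = ((s.choose 2 : ℕ) : ZMod (n * s)) := by
  constructor
  · intro i j h
    simp only [Fm] at h
    rw [natval_cast hs hn, natval_cast hs hn] at h
    rw [ZMod.intCast_eq_intCast_iff] at h
    have hd : (s : ℤ) ∣ w ((i : ℕ) : ℤ) - w ((j : ℕ) : ℤ) := Int.ModEq.dvd h.symm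
    have h3 : ((i : ℕ) : ℤ) = ((j : ℕ) : ℤ) := by
      apply eq_of_dvd hs w hw.1 <;> try exact hd
      · positivity
      · exact_mod_cast i.isLt
      · positivity
      · exact_mod_cast j.isLt
    ext; exact_mod_cast h3
  · have h1 : ∑ i : Fin s, Fm s n w i =
        (((∑ i ∈ Finset.range s, w (i : ℤ)) : ℤ) : ZMod (n * s)) := by
      rw [← Fin.sum_univ_eq_sum_range (fun i => w (i : ℤ)) s]
      push_cast
      rfl
    rw [h1, hw.2]
    push_cast
    rfl

lemma Fm_eq_iff (hs : 0 < s) (w w' : Equiv.Perm ℤ) :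
    Fm s n w = Fm s n w' ↔
      ∀ i ∈ Finset.range s, ((n : ℤ) * s) ∣ (w (i : ℤ) - w' (i : ℤ)) := by
  rw [funext_iff]
  constructor
  · intro h i hi
    have := h ⟨i, Finset.mem_range.mp hi⟩
    rw [Fm, Fm, ZMod.intCast_eq_intCast_iff] at this
    have hd := Int.ModEq.dvd this.symm
    have : ((n * s : ℕ) : ℤ) = (n : ℤ) * s := by push_cast; ring
    rwa [this] at hd
  · intro h i
    simp only [Fm]
    rw [ZMod.intCast_eq_intCast_iff]
    have hd := h (i : ℕ) (Finset.mem_range.mpr i.isLt)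
    rw [Int.modEq_iff_dvd]
    have : ((n * s : ℕ) : ℤ) = (n : ℤ) * s := by push_cast; ring
    rw [this]
    exact dvd_sub_comm.mp hd


lemma exists_perm (hs : 0 < s) (hn : 0 < n) (a : Fin s → ZMod (n * s))
    (ha1 : ∀ i j : Fin s, (((a i).val : ℕ) : ZMod s) = (((a j).val : ℕ) : ZMod s) → i = j)
    (ha2 : ∑ i, a i = ((s.choose 2 : ℕ) : ZMod (n * s))) :
    ∃ w ∈ AffSymSet s, Fm s n w = a := by
  haveI : NeZero (n * s) := ⟨by positivity⟩
  have hs' : (0 : ℤ) < s := by exact_mod_cast hs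
  set C : ℤ := ((s.choose 2 : ℕ) : ℤ) with hC
  set c : Fin s → ℤ := fun i => ((a i).val : ℤ) with hc
  set E : ℤ := (∑ i, c i) - C with hE
  have hcval : ∀ i, ((c i : ℤ) : ZMod (n * s)) = a i := by
    intro i
    simp [hc, ZMod.natCast_val, ZMod.cast_id]
  have hNE : ((n : ℤ) * s) ∣ E := by
    have h1 : ((E : ℤ) : ZMod (n * s)) = 0 := by
      rw [hE]
      push_cast
      rw [sub_eq_zero]
      calc ∑ i, ((c i : ℤ) : ZMod (n * s)) = ∑ i, a i := by
            exact Finset.sum_congr rfl fun i _ => hcval i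
        _ = ((s.choose 2 : ℕ) : ZMod (n * s)) := ha2
        _ = ((C : ℤ) : ZMod (n * s)) := by rw [hC]; push_cast; rfl
    have h2 := (ZMod.intCast_zmod_eq_zero_iff_dvd E (n * s)).mp h1
    have h3 : ((n * s : ℕ) : ℤ) = (n : ℤ) * s := by push_cast; ring
    rwa [h3] at h2
  set i0 : Fin s := ⟨0, hs⟩ with hi0
  set b : Fin s → ℤ := fun i => if i = i0 then c i0 - E else c i with hb
  have hbalt : ∀ i, b i = c i - (if i = i0 then E else 0) := by
    intro i
    by_cases h : i = i0 <;> simp [hb, h]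
  have hbsum : ∑ i, b i = C := by
    rw [Finset.sum_congr rfl fun i _ => hbalt i, Finset.sum_sub_distrib]
    rw [Finset.sum_ite_eq' Finset.univ i0 (fun _ => E)]
    simp [hE]
  have hbcong : ∀ i, ((n : ℤ) * s) ∣ (b i - c i) := by
    intro i
    rw [hbalt i]
    have heq : c i - (if i = i0 then E else 0) - c i = -(if i = i0 then E else 0) := by ring
    rw [heq, dvd_neg]
    by_cases h : i = i0
    · simpa [h] using hNE
    · simp [h]
  have hbcast : ∀ i, ((b i : ℤ) : ZMod (n * s)) = a i := by
    intro i
    rw [← hcval i]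
    rw [ZMod.intCast_eq_intCast_iff, Int.modEq_iff_dvd]
    have h3 : ((n * s : ℕ) : ℤ) = (n : ℤ) * s := by push_cast; ring
    rw [h3]
    exact dvd_sub_comm.mp (hbcong i)
  have hsdvd : (s : ℤ) ∣ (n : ℤ) * s := dvd_mul_left _ _
  have hbinj : ∀ i j : Fin s, (s : ℤ) ∣ (b i - b j) → i = j := by
    intro i j h
    have h1 : (s : ℤ) ∣ (c i - c j) := by
      have := dvd_sub (dvd_sub (dvd_trans hsdvd (hbcong i)) (dvd_trans hsdvd (hbcong j))) h
      rw [show b i - c i - (b j - c j) - (b i - b j) = -(c i - c j) by ring] at this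
      exact (dvd_neg.mp this)
    apply ha1
    have h2 : ((c i : ℤ) : ZMod s) = ((c j : ℤ) : ZMod s) := by
      rw [ZMod.intCast_eq_intCast_iff, Int.modEq_iff_dvd]
      exact dvd_sub_comm.mp h1
    have h4 : ∀ k : Fin s, (((a k).val : ℕ) : ZMod s) = ((c k : ℤ) : ZMod s) := by
      intro k; simp [hc]
    rw [h4, h4, h2]
  -- residue function
  have hfres_lt : ∀ m : ℤ, (m % s).toNat < s := by
    intro m
    have h1 := Int.emod_nonneg m (by omega : (s : ℤ) ≠ 0)
    have h2 := Int.emod_lt_of_pos m hs'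
    omega
  set fres : ℤ → Fin s := fun m => ⟨(m % s).toNat, hfres_lt m⟩ with hfres
  have hfres_cast : ∀ m : ℤ, ((fres m : ℕ) : ℤ) = m % s := by
    intro m
    have h1 := Int.emod_nonneg m (by omega : (s : ℤ) ≠ 0)
    simp [hfres]
    omega
  set f : ℤ → ℤ := fun m => b (fres m) + s * (m / s) with hf
  have hfres_fin : ∀ i : Fin s, fres ((i : ℕ) : ℤ) = i := by
    intro i
    have h1 : ((i : ℕ) : ℤ) % s = ((i : ℕ) : ℤ) := Int.emod_eq_of_lt (by positivity) (by exact_mod_cast i.isLt)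
    ext
    simp [hfres, h1]
  have hdiv_fin : ∀ i : Fin s, ((i : ℕ) : ℤ) / s = 0 := by
    intro i
    apply Int.ediv_eq_zero_of_lt (by positivity)
    exact_mod_cast i.isLt
  have hf_fin : ∀ i : Fin s, f ((i : ℕ) : ℤ) = b i := by
    intro i
    simp [hf, hfres_fin i, hdiv_fin i]
  have hfinj : Function.Injective f := by
    intro m m' h
    simp only [hf] at h
    have hd : (s : ℤ) ∣ (b (fres m) - b (fres m')) := by
      exact ⟨m' / s - m / s, by linarith⟩
    have hr : fres m = fres m' := hbinj _ _ hd
    have hq : m / s = m' / s := by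
      rw [hr] at h
      have h' : (s : ℤ) * (m / s) = s * (m' / s) := by linarith
      exact mul_left_cancel₀ (by omega) h'
    have h1 := Int.emod_add_mul_ediv m s
    have h2 := Int.emod_add_mul_ediv m' s
    have h3 : m % s = m' % s := by
      have := congrArg (fun x : Fin s => ((x : ℕ) : ℤ)) hr
      simpa [hfres_cast] using this
    have h5 : (s : ℤ) * (m / s) = s * (m' / s) := by rw [hq]
    omega
  have hfsurj : Function.Surjective f := by
    have hrho_inj : Function.Injective (fun r : Fin s => fres (b r)) := by
      intro r r' h
      apply hbinj
      have h1 : b r % s = b r' % s := by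
        have := congrArg (fun x : Fin s => ((x : ℕ) : ℤ)) h
        simpa [hfres_cast] using this
      rw [Int.dvd_iff_emod_eq_zero, Int.sub_emod, h1]
      simp
    have hrho_surj := (Finite.injective_iff_surjective.mp hrho_inj)
    intro v
    obtain ⟨r, hr⟩ := hrho_surj (fres v)
    have h1 : b r % s = v % s := by
      have := congrArg (fun x : Fin s => ((x : ℕ) : ℤ)) hr
      simpa [hfres_cast] using this
    have h2 : (s : ℤ) ∣ v - b r := by
      rw [Int.dvd_iff_emod_eq_zero, Int.sub_emod, h1]
      simp
    obtain ⟨q, hq⟩ := h2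
    refine ⟨((r : ℕ) : ℤ) + s * q, ?_⟩
    have h3 : (((r : ℕ) : ℤ) + s * q) % s = ((r : ℕ) : ℤ) := by
      rw [Int.add_mul_emod_self_left]
      exact Int.emod_eq_of_lt (by positivity) (by exact_mod_cast r.isLt)
    have h4 : (((r : ℕ) : ℤ) + s * q) / s = q := by
      rw [Int.add_mul_ediv_left _ _ (by omega : (s : ℤ) ≠ 0), hdiv_fin r]
      ring
    have h5 : fres (((r : ℕ) : ℤ) + s * q) = r := by
      ext
      have := hfres_cast (((r : ℕ) : ℤ) + s * q)
      rw [h3] at this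
      exact_mod_cast this
    simp only [hf, h5, h4]
    omega
  set w : Equiv.Perm ℤ := Equiv.ofBijective f ⟨hfinj, hfsurj⟩ with hw
  have hwapp : ∀ m, w m = f m := fun m => rfl
  have hwper : ∀ m : ℤ, w (m + s) = w m + s := by
    intro m
    rw [hwapp, hwapp]
    simp only [hf]
    have h1 : (m + s) % s = m % s := by
      have := Int.add_mul_emod_self_left (a := m) (b := (s : ℤ)) (c := 1)
      simpa using this
    have h2 : (m + s) / s = m / s + 1 := by
      have := Int.add_mul_ediv_left m (1 : ℤ) (by omega : (s : ℤ) ≠ 0)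
      simpa using this
    have h3 : fres (m + s) = fres m := by
      ext
      have ha := hfres_cast (m + s)
      have hb := hfres_cast m
      rw [h1] at ha
      omega
    rw [h3, h2]
    ring
  refine ⟨w, ⟨hwper, ?_⟩, ?_⟩
  · rw [← Fin.sum_univ_eq_sum_range (fun i => w (i : ℤ)) s]
    calc ∑ i : Fin s, w ((i : ℕ) : ℤ) = ∑ i : Fin s, b i := by
          exact Finset.sum_congr rfl fun i _ => by rw [hwapp, hf_fin i]
      _ = C := hbsum
  · funext i
    rw [Fm, hwapp, hf_fin i, hbcast i]


lemma card_eq_T (hs : 0 < s) (hn : 0 < n) :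
    Nat.card {C : Set (Equiv.Perm ℤ) // ∃ w ∈ AffSymSet s, C = coset s n w} =
    Nat.card {a : Fin s → ZMod (n * s) //
      (∀ i j : Fin s, (((a i).val : ℕ) : ZMod s) = (((a j).val : ℕ) : ZMod s) → i = j) ∧
      ∑ i, a i = ((s.choose 2 : ℕ) : ZMod (n * s))} := by
  apply Nat.card_eq_of_bijective
    (fun x => ⟨Fm s n x.2.choose, Fm_mem hs hn x.2.choose_spec.1⟩)
  constructor
  · intro x y h
    have hx := x.2.choose_spec
    have hy := y.2.choose_spec
    have hF : Fm s n x.2.choose = Fm s n y.2.choose := congrArg Subtype.val h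
    rw [Fm_eq_iff hs] at hF
    have hco := (coset_eq_iff hs hx.1 hy.1).mpr hF
    exact Subtype.ext (hx.2.trans (hco.trans hy.2.symm))
  · intro a
    obtain ⟨w, hwA, hwF⟩ := exists_perm hs hn a.1 a.2.1 a.2.2
    have hex : ∃ w' ∈ AffSymSet s, coset s n w = coset s n w' := ⟨w, hwA, rfl⟩
    refine ⟨⟨coset s n w, hex⟩, ?_⟩
    apply Subtype.ext
    show Fm s n hex.choose = a.1
    obtain ⟨h1, h2⟩ := hex.choose_spec
    rw [← hwF]
    exact ((Fm_eq_iff hs _ _).mpr ((coset_eq_iff hs h1 hwA).mp h2.symm))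


lemma sum_val_bij (hs : 0 < s) (g : Fin s → ZMod s) (hg : Function.Bijective g) :
    ∑ i, (g i).val = s.choose 2 := by
  haveI : NeZero s := ⟨by omega⟩
  rw [Function.Bijective.sum_comp hg (fun x => x.val)]
  have e : Function.Bijective (fun x : ZMod s => (⟨x.val, x.val_lt⟩ : Fin s)) := by
    rw [Fintype.bijective_iff_injective_and_card]
    constructor
    · intro x y h
      exact ZMod.val_injective s (congrArg Fin.val h)
    · simp [ZMod.card]
  calc ∑ x : ZMod s, x.val = ∑ j : Fin s, (j : ℕ) :=
        Function.Bijective.sum_comp e (fun j : Fin s => (j : ℕ))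
    _ = s.choose 2 := by
        rw [Fin.sum_univ_eq_sum_range (fun j => j) s, Finset.sum_range_id,
          Nat.choose_two_right]

lemma natval_cast_nat (hs : 0 < s) (hn : 0 < n) (m : ℕ) :
    ((((m : ℕ) : ZMod (n * s)).val : ℕ) : ZMod s) = ((m : ℕ) : ZMod s) := by
  have := natval_cast (n := n) hs hn (m : ℤ)
  push_cast at this ⊢
  exact this

lemma card_Z (n k : ℕ) :
    Nat.card {t : Fin (k + 1) → ZMod n // ∑ i, t i = 0} = Nat.card (Fin k → ZMod n) := by
  apply Nat.card_congr
  refine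
    { toFun := fun t => Fin.init t.1
      invFun := fun u => ⟨Fin.snoc u (-(∑ i, u i)), ?_⟩
      left_inv := ?_
      right_inv := ?_ }
  · rw [Fin.sum_univ_castSucc]
    simp
  · intro t
    apply Subtype.ext
    have h := t.2
    rw [Fin.sum_univ_castSucc] at h
    have hlast : -(∑ i : Fin k, Fin.init t.1 i) = t.1 (Fin.last k) := by
      have : ∑ i : Fin k, Fin.init t.1 i = ∑ i : Fin k, t.1 i.castSucc := rfl
      rw [this]
      linear_combination -h
    show Fin.snoc (Fin.init t.1) (-(∑ i, Fin.init t.1 i)) = t.1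
    rw [hlast]
    exact Fin.snoc_init_self t.1
  · intro u
    simp

lemma card_Z' (n s : ℕ) (hs : 0 < s) :
    Nat.card {t : Fin s → ZMod n // ∑ i, t i = 0} = Nat.card (Fin (s - 1) → ZMod n) := by
  obtain ⟨k, rfl⟩ : ∃ k, s = k + 1 := ⟨s - 1, by omega⟩
  simpa using card_Z n k

lemma card_T (hs2 : 2 ≤ s) (hn : 0 < n) :
    Nat.card {a : Fin s → ZMod (n * s) //
      (∀ i j : Fin s, (((a i).val : ℕ) : ZMod s) = (((a j).val : ℕ) : ZMod s) → i = j) ∧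
      ∑ i, a i = ((s.choose 2 : ℕ) : ZMod (n * s))} = n ^ (s - 1) * s.factorial := by
  have hs : 0 < s := by omega
  haveI : NeZero s := ⟨by omega⟩
  haveI : NeZero n := ⟨by omega⟩
  haveI : NeZero (n * s) := ⟨by positivity⟩
  -- the two-component equivalence
  have key : Nat.card {a : Fin s → ZMod (n * s) //
      (∀ i j : Fin s, (((a i).val : ℕ) : ZMod s) = (((a j).val : ℕ) : ZMod s) → i = j) ∧
      ∑ i, a i = ((s.choose 2 : ℕ) : ZMod (n * s))} =
      Nat.card ({g : Fin s → ZMod s // Function.Bijective g} ×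
        {t : Fin s → ZMod n // ∑ i, t i = 0}) := by
    apply Nat.card_congr
    refine
      { toFun := fun a => (⟨fun i => (((a.1 i).val : ℕ) : ZMod s), ?_⟩,
          ⟨fun i => ((((a.1 i).val / s : ℕ)) : ZMod n), ?_⟩)
        invFun := fun p => ⟨fun i => ((((p.1.1 i).val + s * ((p.2.1 i).val) : ℕ)) : ZMod (n * s)), ?_, ?_⟩
        left_inv := ?_
        right_inv := ?_ }
    · -- bijectivity of residue part
      rw [Fintype.bijective_iff_injective_and_card]
      exact ⟨fun i j h => a.2.1 i j h, by simp [ZMod.card]⟩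
    · -- sum of quotient part is zero
      set v : Fin s → ℕ := fun i => (a.1 i).val with hv
      have hsum : ((∑ i, v i : ℕ) : ZMod (n * s)) = ((s.choose 2 : ℕ) : ZMod (n * s)) := by
        push_cast
        rw [← a.2.2]
        exact Finset.sum_congr rfl fun i _ => by
          simp [hv, ZMod.natCast_val, ZMod.cast_id]
      have hres : ∑ i, (v i % s) = s.choose 2 := by
        have hbij : Function.Bijective (fun i => ((v i : ℕ) : ZMod s)) := by
          rw [Fintype.bijective_iff_injective_and_card]
          exact ⟨fun i j h => a.2.1 i j h, by simp [ZMod.card]⟩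
        have := sum_val_bij hs _ hbij
        simpa [ZMod.val_natCast] using this
      have hdecomp : ∑ i, v i = s.choose 2 + s * (∑ i, v i / s) := by
        rw [Finset.mul_sum, ← hres, ← Finset.sum_add_distrib]
        exact Finset.sum_congr rfl fun i _ => (Nat.mod_add_div (v i) s).symm
      have hdvd : ((n * s : ℕ) : ℤ) ∣ ((∑ i, v i : ℕ) : ℤ) - ((s.choose 2 : ℕ) : ℤ) := by
        rw [← ZMod.intCast_zmod_eq_zero_iff_dvd]
        push_cast
        rw [sub_eq_zero]
        exact_mod_cast hsum
      have hq : (n : ℤ) ∣ ((∑ i, v i / s : ℕ) : ℤ) := by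
        have h1 : ((∑ i, v i : ℕ) : ℤ) - ((s.choose 2 : ℕ) : ℤ) =
            (s : ℤ) * ((∑ i, v i / s : ℕ) : ℤ) := by
          have h0 : ((∑ i, v i : ℕ) : ℤ) =
              ((s.choose 2 : ℕ) : ℤ) + (s : ℤ) * ((∑ i, v i / s : ℕ) : ℤ) := by
            exact_mod_cast congrArg (Nat.cast : ℕ → ℤ) hdecomp
          rw [h0]; ring
        rw [h1] at hdvd
        have h2 : ((n * s : ℕ) : ℤ) = (s : ℤ) * n := by push_cast; ring
        rw [h2] at hdvd
        exact (mul_dvd_mul_iff_left (by exact_mod_cast hs.ne' : (s : ℤ) ≠ 0)).mp hdvd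
      have hq2 : (((∑ i, v i / s : ℕ)) : ZMod n) = 0 := by
        rw [ZMod.natCast_eq_zero_iff]
        exact_mod_cast hq
      rw [← hq2]
      push_cast
      rfl
    · -- injectivity condition for invFun output
      intro i j h
      have hg : ∀ k : Fin s, ((((p.1.1 k).val + s * ((p.2.1 k).val) : ℕ)) : ZMod s) = p.1.1 k := by
        intro k
        push_cast
        simp [ZMod.natCast_self, ZMod.natCast_val, ZMod.cast_id]
      rw [natval_cast_nat hs hn, natval_cast_nat hs hn, hg, hg] at h
      exact p.1.2.injective h
    · -- sum condition for invFun output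
      have hsplit : ∑ i : Fin s, ((((p.1.1 i).val + s * ((p.2.1 i).val) : ℕ)) : ZMod (n * s)) =
          ((∑ i, (p.1.1 i).val : ℕ) : ZMod (n * s)) +
            (s : ZMod (n * s)) * ((∑ i, (p.2.1 i).val : ℕ) : ZMod (n * s)) := by
        push_cast
        rw [Finset.mul_sum, ← Finset.sum_add_distrib]
      rw [hsplit]
      have h1 : ∑ i, (p.1.1 i).val = s.choose 2 := sum_val_bij hs _ p.1.2
      have h2 : ((∑ i, (p.2.1 i).val : ℕ) : ZMod n) = 0 := by
        push_cast
        have hcv : ∀ i : Fin s, (((p.2.1 i).val : ℕ) : ZMod n) = p.2.1 i := fun i => by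
          simp [ZMod.natCast_val, ZMod.cast_id]
        rw [Finset.sum_congr rfl fun i _ => hcv i]
        exact p.2.2
      obtain ⟨d, hd⟩ := (ZMod.natCast_eq_zero_iff _ _).mp h2
      have h3 : (s : ZMod (n * s)) * ((∑ i, (p.2.1 i).val : ℕ) : ZMod (n * s)) = 0 := by
        have : ((s * (∑ i, (p.2.1 i).val) : ℕ) : ZMod (n * s)) = 0 := by
          rw [ZMod.natCast_eq_zero_iff]
          exact ⟨d, by rw [hd]; ring⟩
        rwa [Nat.cast_mul] at this
      rw [h1, h3, add_zero]
    · -- left inverse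
      intro a
      apply Subtype.ext
      funext i
      set v : ℕ := (a.1 i).val with hv
      show ((((((v : ℕ) : ZMod s)).val + s * (((((v / s : ℕ)) : ZMod n)).val) : ℕ)) : ZMod (n * s)) = a.1 i
      rw [ZMod.val_natCast, ZMod.val_natCast]
      have hA : a.1 i = ((v : ℕ) : ZMod (n * s)) := by
        rw [hv, ZMod.natCast_val, ZMod.cast_id]
      rw [hA, ZMod.natCast_eq_natCast_iff]
      have h1 : (v / s) % n ≡ v / s [MOD n] := Nat.mod_modEq _ n
      have h2 : s * ((v / s) % n) ≡ s * (v / s) [MOD s * n] := Nat.ModEq.mul_left' (c := s) h1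
      have h3 : v % s + s * ((v / s) % n) ≡ v % s + s * (v / s) [MOD s * n] :=
        Nat.ModEq.add_left (v % s) h2
      rw [Nat.mod_add_div] at h3
      rwa [mul_comm s n] at h3
    · -- right inverse
      rintro ⟨⟨g, hgb⟩, ⟨t, hts⟩⟩
      refine Prod.ext ?_ ?_
      · apply Subtype.ext
        funext i
        show (((((g i).val + s * ((t i).val) : ℕ) : ZMod (n * s)).val : ℕ) : ZMod s) = g i
        rw [natval_cast_nat hs hn]
        push_cast
        simp [ZMod.natCast_self, ZMod.natCast_val, ZMod.cast_id]
      · apply Subtype.ext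
        funext i
        show ((((((g i).val + s * ((t i).val) : ℕ) : ZMod (n * s)).val / s : ℕ)) : ZMod n) = t i
        have hlt : (g i).val + s * (t i).val < n * s := by
          have h1 := (g i).val_lt
          have h2 := (t i).val_lt
          nlinarith
        rw [ZMod.val_natCast, Nat.mod_eq_of_lt hlt,
          Nat.add_mul_div_left _ _ hs, Nat.div_eq_of_lt (g i).val_lt]
        simp [ZMod.natCast_val, ZMod.cast_id]
  rw [key, Nat.card_prod]
  have hB : Nat.card {g : Fin s → ZMod s // Function.Bijective g} = s.factorial := by
    have e : {g : Fin s → ZMod s // Function.Bijective g} ≃ (Fin s ≃ ZMod s) :=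
      { toFun := fun g => Equiv.ofBijective g.1 g.2
        invFun := fun e => ⟨e, e.bijective⟩
        left_inv := fun g => Subtype.ext rfl
        right_inv := fun e => Equiv.ext fun x => rfl }
    rw [Nat.card_congr e, Nat.card_eq_fintype_card,
      Fintype.card_equiv (Fintype.equivOfCardEq (by simp [ZMod.card])), Fintype.card_fin]
  have hZ : Nat.card {t : Fin s → ZMod n // ∑ i, t i = 0} = n ^ (s - 1) := by
    rw [card_Z' n s hs, Nat.card_eq_fintype_card]
    simp [Fintype.card_fun, ZMod.card]
  rw [hB, hZ]
  exact Nat.mul_comm _ _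

end IdxAux

/-- The index of `K⁽ⁿ⁾ = {w ∈ W̃_s : w(m) ≡ m (mod ns) for all m}` in `W̃_s`
(the number of left cosets) is `n^(s-1) · s!`. -/
theorem index_K (s n : ℕ) (hs : 2 ≤ s) (hn : 1 ≤ n) :
    Nat.card {C : Set (Equiv.Perm ℤ) // ∃ w ∈ AffSymSet s,
        C = {x | ∃ k ∈ {w' : Equiv.Perm ℤ | w' ∈ AffSymSet s ∧
          ∀ m : ℤ, ((n : ℤ) * s) ∣ (w' m - m)}, x = w * k}} =
      n ^ (s - 1) * Nat.factorial s := by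
  have hs0 : 0 < s := by omega
  have hn0 : 0 < n := by omega
  have h1 : Nat.card {C : Set (Equiv.Perm ℤ) // ∃ w ∈ AffSymSet s,
      C = {x | ∃ k ∈ {w' : Equiv.Perm ℤ | w' ∈ AffSymSet s ∧
        ∀ m : ℤ, ((n : ℤ) * s) ∣ (w' m - m)}, x = w * k}} =
      Nat.card {C : Set (Equiv.Perm ℤ) // ∃ w ∈ AffSymSet s, C = IdxAux.coset s n w} := rfl
  rw [h1, IdxAux.card_eq_T hs0 hn0, IdxAux.card_T hs hn0]
end

section
/- The subgroup H̃_s of W̃_s generated by the elements v_i equals {w ∈ W̃_s : w(-1-m) = -1-w(m) for all m ∈ ℤ}. -/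
/-- The generating set `{v_i : i ∈ ℤ/sℤ}` of the affine hyperoctahedral group, where
`v_0 = w_0`, `v_i = w_i w_{-i} w_i` if `i ≡ ±⌊s/2⌋`, and `v_i = w_i w_{-i}` otherwise. -/
def VSet (s : ℕ) (hs : 2 ≤ s) : Set (Equiv.Perm ℤ) :=
  {v | ∃ j : ℤ,
    ((s : ℤ) ∣ j ∧ v = genPerm s hs (j - 1)) ∨
    (¬ (s : ℤ) ∣ j ∧ ((s : ℤ) ∣ (j - (s / 2 : ℕ)) ∨ (s : ℤ) ∣ (j + (s / 2 : ℕ))) ∧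
      v = genPerm s hs (j - 1) * genPerm s hs (-j - 1) * genPerm s hs (j - 1)) ∨
    (¬ (s : ℤ) ∣ j ∧ ¬ ((s : ℤ) ∣ (j - (s / 2 : ℕ)) ∨ (s : ℤ) ∣ (j + (s / 2 : ℕ))) ∧
      v = genPerm s hs (j - 1) * genPerm s hs (-j - 1))}

namespace HypAux

def PerZ (s : ℕ) (w : Equiv.Perm ℤ) : Prop := ∀ m : ℤ, w (m + s) = w m + s

variable {s : ℕ} (hs : 2 ≤ s)

lemma s_ndvd_one (hs : 2 ≤ s) : ¬ ((s : ℤ) ∣ 1) := by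
  intro h; have := Int.le_of_dvd one_pos h; omega

lemma dvd_small {d : ℤ} (h : (s : ℤ) ∣ d) (h1 : -(s:ℤ) < d) (h2 : d < s) : d = 0 :=
  Int.eq_zero_of_abs_lt_dvd h (abs_lt.mpr ⟨h1, h2⟩)

lemma genPerm_apply (a m : ℤ) : genPerm s hs a m = genFun s a m := rfl

lemma genPerm_apply_dvd {a m : ℤ} (h : (s:ℤ) ∣ (m - a)) : genPerm s hs a m = m + 1 := by
  rw [genPerm_apply, genFun, if_pos h]

lemma genPerm_apply_dvd' {a m : ℤ} (h : (s:ℤ) ∣ (m - a - 1)) : genPerm s hs a m = m - 1 := by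
  have hn : ¬ (s:ℤ) ∣ (m - a) := by
    intro h'
    exact s_ndvd_one hs (by have := dvd_sub h' h; simpa using this)
  rw [genPerm_apply, genFun]
  rw [if_neg hn, if_pos h]

lemma genPerm_apply_ndvd {a m : ℤ} (h : ¬ (s:ℤ) ∣ (m - a)) (h' : ¬ (s:ℤ) ∣ (m - a - 1)) :
    genPerm s hs a m = m := by
  rw [genPerm_apply, genFun, if_neg h, if_neg h']

lemma genPerm_congr {a b : ℤ} (h : (s:ℤ) ∣ (a - b)) : genPerm s hs a = genPerm s hs b := by
  ext m
  rw [genPerm_apply, genPerm_apply, genFun, genFun]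
  have h1 : (s:ℤ) ∣ (m - a) ↔ (s:ℤ) ∣ (m - b) := by
    constructor <;> intro hh
    · have := dvd_add hh h; rwa [show m - a + (a - b) = m - b by ring] at this
    · have := dvd_sub hh h; rwa [show m - b - (a - b) = m - a by ring] at this
  have h2 : (s:ℤ) ∣ (m - a - 1) ↔ (s:ℤ) ∣ (m - b - 1) := by
    constructor <;> intro hh
    · have := dvd_add hh h; rwa [show m - a - 1 + (a - b) = m - b - 1 by ring] at this
    · have := dvd_sub hh h; rwa [show m - b - 1 - (a - b) = m - a - 1 by ring] at this
  rw [if_congr h1 rfl rfl, if_congr h2 rfl rfl]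

lemma genPerm_sq (a : ℤ) : genPerm s hs a * genPerm s hs a = 1 := by
  ext m
  simp [genPerm, Equiv.Perm.mul_apply, (genFun_involutive s hs a) m]

lemma perz_genPerm (a : ℤ) : PerZ s (genPerm s hs a) := by
  intro m
  by_cases h1 : (s:ℤ) ∣ (m - a)
  · rw [genPerm_apply_dvd hs h1, genPerm_apply_dvd hs (by
      have := dvd_add h1 (dvd_refl (s:ℤ)); rwa [show m - a + s = m + s - a by ring] at this)]
    ring
  · by_cases h2 : (s:ℤ) ∣ (m - a - 1)
    · rw [genPerm_apply_dvd' hs h2, genPerm_apply_dvd' hs (by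
        have := dvd_add h2 (dvd_refl (s:ℤ)); rwa [show m - a - 1 + s = m + s - a - 1 by ring] at this)]
      ring
    · rw [genPerm_apply_ndvd hs h1 h2, genPerm_apply_ndvd hs (by
        intro hh; apply h1
        have := dvd_sub hh (dvd_refl (s:ℤ)); rwa [show m + s - a - s = m - a by ring] at this) (by
        intro hh; apply h2
        have := dvd_sub hh (dvd_refl (s:ℤ)); rwa [show m + s - a - 1 - s = m - a - 1 by ring] at this)]

lemma perz_one : PerZ s (1 : Equiv.Perm ℤ) := fun m => by simp

lemma perz_mul {w v : Equiv.Perm ℤ} (hw : PerZ s w) (hv : PerZ s v) : PerZ s (w * v) := by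
  intro m
  rw [Equiv.Perm.mul_apply, Equiv.Perm.mul_apply, hv, hw]

lemma perz_inv {w : Equiv.Perm ℤ} (hw : PerZ s w) : PerZ s w⁻¹ := by
  intro m
  apply w.injective
  rw [(show ∀ x, w (w⁻¹ x) = x from fun x => Equiv.apply_symm_apply w x), hw, (show ∀ x, w (w⁻¹ x) = x from fun x => Equiv.apply_symm_apply w x)]

lemma perz_add {w : Equiv.Perm ℤ} (hw : PerZ s w) (m k : ℤ) : w (m + s * k) = w m + s * k := by
  induction k using Int.induction_on with
  | zero => simp
  | succ n ih =>
      have := hw (m + s * n)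
      rw [ih] at this
      rw [show m + s * ((n:ℤ) + 1) = m + s * n + s by ring, hw, ih]; ring
  | pred n ih =>
      have h1 := hw (m + s * (-(n:ℤ) - 1))
      rw [show m + (s:ℤ) * (-(n:ℤ) - 1) + s = m + s * (-(n:ℤ)) by ring, ih] at h1
      have h3 : (s:ℤ) * (-(n:ℤ) - 1) = s * (-(n:ℤ)) - s := by ring
      linarith

lemma perz_dvd {w : Equiv.Perm ℤ} (hw : PerZ s w) {x y : ℤ} (h : (s:ℤ) ∣ (x - y)) :
    w x = w y + (x - y) := by
  obtain ⟨k, hk⟩ := h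
  have hx : x = y + (s:ℤ) * k := by linarith
  subst hx
  rw [perz_add hw y k]
  congr 1; ring

end HypAux
namespace HypAux

/-- the unique representative in `[0,s)` of `a` mod `s`. -/
def rep (s : ℕ) (a : ℤ) : ℕ := (a % (s : ℤ)).toNat

variable {s : ℕ}

lemma rep_lt (hs : 2 ≤ s) (a : ℤ) : rep s a < s := by
  have h0 : (0:ℤ) < s := by exact_mod_cast Nat.lt_of_lt_of_le Nat.zero_lt_two hs
  have h1 := Int.emod_lt_of_pos a h0
  have h2 := Int.emod_nonneg a (by omega : (s:ℤ) ≠ 0)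
  unfold rep; omega

lemma rep_dvd (hs : 2 ≤ s) (a : ℤ) : (s : ℤ) ∣ ((rep s a : ℤ) - a) := by
  have h0 : (0:ℤ) < s := by exact_mod_cast Nat.lt_of_lt_of_le Nat.zero_lt_two hs
  have h2 := Int.emod_nonneg a (by omega : (s:ℤ) ≠ 0)
  have h3 : ((rep s a : ℤ)) = a % s := by unfold rep; omega
  have h4 := Int.mul_ediv_add_emod a (s:ℤ)
  exact ⟨-(a / s), by rw [h3]; linarith⟩

lemma rep_unique (hs : 2 ≤ s) {a : ℤ} {i : ℕ} (hi : i < s) (h : (s:ℤ) ∣ ((i:ℤ) - a)) :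
    i = rep s a := by
  have h1 := rep_lt hs (s := s) a
  have h2 := rep_dvd hs (s := s) a
  have h3 : (s:ℤ) ∣ ((i:ℤ) - (rep s a : ℤ)) := by
    have := dvd_sub h h2
    rwa [show (i:ℤ) - a - ((rep s a : ℤ) - a) = (i:ℤ) - rep s a by ring] at this
  have h4 : (i:ℤ) - rep s a = 0 := dvd_small h3 (by push_cast; omega) (by push_cast; omega)
  omega

end HypAux
namespace HypAux

variable {s : ℕ}

lemma gper_add {g : ℤ → ℤ} (hg : ∀ x, g (x + s) = g x) (m k : ℤ) : g (m + s * k) = g m := by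
  induction k using Int.induction_on with
  | zero => simp
  | succ n ih =>
      rw [show m + (s:ℤ) * ((n:ℤ) + 1) = (m + s * n) + s by ring, hg, ih]
  | pred n ih =>
      have h1 := hg (m + s * (-(n:ℤ) - 1))
      rw [show m + (s:ℤ) * (-(n:ℤ) - 1) + s = m + s * (-(n:ℤ)) by ring, ih] at h1
      rw [← h1]

lemma gper_dvd {g : ℤ → ℤ} (hg : ∀ x, g (x + s) = g x) {x y : ℤ} (h : (s:ℤ) ∣ (x - y)) :
    g x = g y := by
  obtain ⟨k, hk⟩ := h
  have hx : x = y + (s:ℤ) * k := by linarith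
  subst hx
  exact gper_add hg y k

lemma sum_residue (hs : 2 ≤ s) {g : ℤ → ℤ} (hg : ∀ x, g (x + s) = g x)
    {σ : Equiv.Perm ℤ} (hσ : PerZ s σ) :
    ∑ i ∈ Finset.range s, g (σ i) = ∑ i ∈ Finset.range s, g i := by
  have hσi : PerZ s σ⁻¹ := perz_inv hσ
  refine Finset.sum_bij' (fun (i : ℕ) (_ : i ∈ Finset.range s) => rep s (σ i))
    (fun (i : ℕ) (_ : i ∈ Finset.range s) => rep s (σ⁻¹ i)) ?_ ?_ ?_ ?_ ?_
  · intro i _; exact Finset.mem_range.mpr (rep_lt hs _)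
  · intro i _; exact Finset.mem_range.mpr (rep_lt hs _)
  · intro i hi
    have hi' : i < s := Finset.mem_range.mp hi
    have hd := rep_dvd hs (s := s) (σ (i:ℤ))
    have h2 : σ⁻¹ ((rep s (σ (i:ℤ)) : ℤ)) = (i:ℤ) + ((rep s (σ (i:ℤ)) : ℤ) - σ (i:ℤ)) := by
      have := perz_dvd hσi hd
      rw [(show ∀ x, σ⁻¹ (σ x) = x from fun x => Equiv.symm_apply_apply σ x)] at this
      exact this
    symm
    apply rep_unique hs hi'
    rw [h2]
    rw [show (i:ℤ) - ((i:ℤ) + ((rep s (σ (i:ℤ)) : ℤ) - σ (i:ℤ)))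
        = -((rep s (σ (i:ℤ)) : ℤ) - σ (i:ℤ)) by ring]
    exact dvd_neg.mpr hd
  · intro i hi
    have hi' : i < s := Finset.mem_range.mp hi
    have hd := rep_dvd hs (s := s) (σ⁻¹ (i:ℤ))
    have h2 : σ ((rep s (σ⁻¹ (i:ℤ)) : ℤ)) = (i:ℤ) + ((rep s (σ⁻¹ (i:ℤ)) : ℤ) - σ⁻¹ (i:ℤ)) := by
      have := perz_dvd hσ hd
      rw [(show ∀ x, σ (σ⁻¹ x) = x from fun x => Equiv.apply_symm_apply σ x)] at this
      exact this
    symm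
    apply rep_unique hs hi'
    rw [h2]
    rw [show (i:ℤ) - ((i:ℤ) + ((rep s (σ⁻¹ (i:ℤ)) : ℤ) - σ⁻¹ (i:ℤ)))
        = -((rep s (σ⁻¹ (i:ℤ)) : ℤ) - σ⁻¹ (i:ℤ)) by ring]
    exact dvd_neg.mpr hd
  · intro i _
    exact (gper_dvd hg (rep_dvd hs _)).symm

/-- the displacement sum. -/
def Dfun (s : ℕ) (w : Equiv.Perm ℤ) : ℤ := ∑ i ∈ Finset.range s, (w (i:ℤ) - (i:ℤ))

lemma sum_range_id_cast (s : ℕ) : ∑ i ∈ Finset.range s, ((i:ℤ)) = (s.choose 2 : ℤ) := by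
  rw [show ∑ i ∈ Finset.range s, ((i:ℤ)) = ((∑ i ∈ Finset.range s, i : ℕ) : ℤ) by push_cast; rfl,
    Finset.sum_range_id, Nat.choose_two_right]

lemma mem_affSym_iff {w : Equiv.Perm ℤ} :
    w ∈ AffSymSet s ↔ PerZ s w ∧ Dfun s w = 0 := by
  have hsplit : ∑ i ∈ Finset.range s, w (i:ℤ)
      = Dfun s w + ∑ i ∈ Finset.range s, ((i:ℤ)) := by
    rw [Dfun, ← Finset.sum_add_distrib]
    apply Finset.sum_congr rfl
    intro i _; ring
  constructor
  · rintro ⟨h1, h2⟩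
    refine ⟨h1, ?_⟩
    rw [hsplit, sum_range_id_cast] at h2
    omega
  · rintro ⟨h1, h2⟩
    refine ⟨h1, ?_⟩
    rw [hsplit, sum_range_id_cast, h2, zero_add]

lemma Dfun_one : Dfun s (1 : Equiv.Perm ℤ) = 0 := by
  unfold Dfun; simp

lemma Dfun_mul (hs : 2 ≤ s) {w v : Equiv.Perm ℤ} (hw : PerZ s w) (hv : PerZ s v) :
    Dfun s (w * v) = Dfun s w + Dfun s v := by
  have hg : ∀ x : ℤ, (w (x + s) - (x + s)) = w x - x := by
    intro x; rw [hw]; ring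
  calc Dfun s (w * v) = ∑ i ∈ Finset.range s, ((w (v (i:ℤ)) - v (i:ℤ)) + (v (i:ℤ) - (i:ℤ))) := by
        apply Finset.sum_congr rfl
        intro i _
        rw [Equiv.Perm.mul_apply]; ring
    _ = (∑ i ∈ Finset.range s, (w (v (i:ℤ)) - v (i:ℤ)))
        + ∑ i ∈ Finset.range s, (v (i:ℤ) - (i:ℤ)) := Finset.sum_add_distrib
    _ = Dfun s w + Dfun s v := by
        rw [sum_residue hs (g := fun x => w x - x) hg hv]; rfl

lemma affSym_one : (1 : Equiv.Perm ℤ) ∈ AffSymSet s := by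
  rw [mem_affSym_iff]
  exact ⟨perz_one, Dfun_one⟩

lemma affSym_mul (hs : 2 ≤ s) {w v : Equiv.Perm ℤ} (hw : w ∈ AffSymSet s) (hv : v ∈ AffSymSet s) :
    w * v ∈ AffSymSet s := by
  rw [mem_affSym_iff] at *
  exact ⟨perz_mul hw.1 hv.1, by rw [Dfun_mul hs hw.1 hv.1, hw.2, hv.2]; ring⟩

lemma affSym_inv (hs : 2 ≤ s) {w : Equiv.Perm ℤ} (hw : w ∈ AffSymSet s) :
    w⁻¹ ∈ AffSymSet s := by
  rw [mem_affSym_iff] at *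
  refine ⟨perz_inv hw.1, ?_⟩
  have h := Dfun_mul hs hw.1 (perz_inv hw.1)
  rw [mul_inv_cancel, Dfun_one (s := s), hw.2] at h
  omega

end HypAux
namespace HypAux

variable {s : ℕ}

lemma rep_ne (hs : 2 ≤ s) (a : ℤ) : rep s a ≠ rep s (a + 1) := by
  intro h
  have h1 := rep_dvd hs (s := s) a
  have h2 := rep_dvd hs (s := s) (a+1)
  rw [← h] at h2
  have := dvd_sub h1 h2
  rw [show ((rep s a : ℤ) - a) - ((rep s a : ℤ) - (a+1)) = 1 by ring] at this
  exact s_ndvd_one hs this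

lemma genPerm_eval_r1 (hs : 2 ≤ s) (a : ℤ) :
    genPerm s hs a ((rep s a : ℤ)) = (rep s a : ℤ) + 1 :=
  genPerm_apply_dvd hs (rep_dvd hs a)

lemma genPerm_eval_r2 (hs : 2 ≤ s) (a : ℤ) :
    genPerm s hs a ((rep s (a+1) : ℤ)) = (rep s (a+1) : ℤ) - 1 := by
  apply genPerm_apply_dvd' hs
  have := rep_dvd hs (s := s) (a+1)
  rwa [show ((rep s (a+1) : ℤ) - (a+1)) = (rep s (a+1) : ℤ) - a - 1 by ring] at this

lemma genPerm_eval_other (hs : 2 ≤ s) (a : ℤ) {i : ℕ} (hi : i < s)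
    (h1 : i ≠ rep s a) (h2 : i ≠ rep s (a+1)) : genPerm s hs a ((i:ℤ)) = (i:ℤ) := by
  apply genPerm_apply_ndvd hs
  · intro h; exact h1 (rep_unique hs hi h)
  · intro h
    exact h2 (rep_unique hs hi (by rwa [show (i:ℤ) - (a+1) = (i:ℤ) - a - 1 by ring]))

lemma genPerm_mem (hs : 2 ≤ s) (a : ℤ) : genPerm s hs a ∈ AffSymSet s := by
  rw [mem_affSym_iff]
  refine ⟨perz_genPerm hs a, ?_⟩
  set r1 := rep s a with hr1
  set r2 := rep s (a+1) with hr2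
  have hne : r1 ≠ r2 := rep_ne hs a
  have hsub : ({r1, r2} : Finset ℕ) ⊆ Finset.range s := by
    intro x hx
    simp only [Finset.mem_insert, Finset.mem_singleton] at hx
    rcases hx with h | h <;> subst h <;> exact Finset.mem_range.mpr (rep_lt hs _)
  rw [Dfun, ← Finset.sum_subset hsub (by
    intro i hi hni
    simp only [Finset.mem_insert, Finset.mem_singleton, not_or] at hni
    rw [genPerm_eval_other hs a (Finset.mem_range.mp hi) hni.1 hni.2]
    ring)]
  rw [Finset.sum_pair hne, genPerm_eval_r1 hs a, genPerm_eval_r2 hs a]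
  ring

/-- the quadratic length proxy. -/
def Mfun (s : ℕ) (w : Equiv.Perm ℤ) : ℤ := ∑ i ∈ Finset.range s, (w (i:ℤ) - (i:ℤ))^2

lemma Mfun_nonneg (w : Equiv.Perm ℤ) : 0 ≤ Mfun s w :=
  Finset.sum_nonneg fun i _ => sq_nonneg _

lemma Mfun_descent (hs : 2 ≤ s) {w : Equiv.Perm ℤ} (hw : PerZ s w) {a : ℤ}
    (hd : w (a + 1) < w a) : Mfun s (w * genPerm s hs a) < Mfun s w := by
  set r1 := rep s a with hr1
  set r2 := rep s (a+1) with hr2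
  have hne : r1 ≠ r2 := rep_ne hs a
  have hr1lt := rep_lt hs (s := s) a
  have hr2lt := rep_lt hs (s := s) (a+1)
  have hsub : ({r1, r2} : Finset ℕ) ⊆ Finset.range s := by
    intro x hx
    simp only [Finset.mem_insert, Finset.mem_singleton] at hx
    rcases hx with h | h <;> subst h <;> exact Finset.mem_range.mpr (rep_lt hs _)
  have key : Mfun s (w * genPerm s hs a) - Mfun s w
      = ∑ i ∈ ({r1, r2} : Finset ℕ),
        ((w (genPerm s hs a (i:ℤ)) - (i:ℤ))^2 - (w (i:ℤ) - (i:ℤ))^2) := by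
    rw [Mfun, Mfun, ← Finset.sum_sub_distrib]
    rw [← Finset.sum_subset hsub (by
      intro i hi hni
      simp only [Finset.mem_insert, Finset.mem_singleton, not_or] at hni
      rw [Equiv.Perm.mul_apply, genPerm_eval_other hs a (Finset.mem_range.mp hi) hni.1 hni.2]
      ring)]
    apply Finset.sum_congr rfl
    intro i _
    rw [Equiv.Perm.mul_apply]
  rw [Finset.sum_pair hne, genPerm_eval_r1 hs a, genPerm_eval_r2 hs a] at key
  -- relation between r1 and r2
  have hdvd12 : (s:ℤ) ∣ ((r2:ℤ) - (r1:ℤ) - 1) := by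
    have h1 := rep_dvd hs (s := s) a
    have h2 := rep_dvd hs (s := s) (a+1)
    have := dvd_sub h2 h1
    rwa [show ((r2:ℤ) - (a+1)) - ((r1:ℤ) - a) = (r2:ℤ) - r1 - 1 by ring] at this
  -- transfer the descent to r1
  have htr : w ((r1:ℤ) + 1) - w ((r1:ℤ)) = w (a+1) - w a := by
    have e1 : w ((r1:ℤ)) = w a + ((r1:ℤ) - a) := perz_dvd hw (rep_dvd hs a)
    have e2 : w ((r1:ℤ) + 1) = w (a+1) + (((r1:ℤ) + 1) - (a+1)) := by
      apply perz_dvd hw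
      have := rep_dvd hs (s := s) a
      rwa [show ((r1:ℤ) + 1) - (a+1) = (r1:ℤ) - a by ring]
    rw [e1, e2]; ring
  by_cases hcase : (r2:ℤ) - r1 - 1 = -(s:ℤ)
  · -- r1 = s - 1, r2 = 0
    have hr1v : (r1:ℤ) = (s:ℤ) - 1 := by omega
    have hr2v : (r2:ℤ) = 0 := by omega
    have hw1 : w ((r1:ℤ) + 1) = w 0 + s := by
      rw [show ((r1:ℤ) + 1) = 0 + (s:ℤ) by omega, hw 0]
    have hw2 : w ((r2:ℤ) - 1) = w ((r1:ℤ)) - s := by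
      have := hw ((r2:ℤ) - 1)
      rw [show (r2:ℤ) - 1 + s = (r1:ℤ) by omega] at this
      omega
    rw [hw1, hw2] at key
    have hAB : w 0 + (s:ℤ) < w ((r1:ℤ)) := by
      have : w ((r1:ℤ) + 1) < w ((r1:ℤ)) := by omega
      omega
    have : Mfun s (w * genPerm s hs a) - Mfun s w
        = 2 * ((w 0 + s) - w ((r1:ℤ))) := by
      rw [key, hr1v, hr2v]; ring
    omega
  · have h0 : (r2:ℤ) - r1 - 1 = 0 := by
      apply dvd_small hdvd12 (by omega)
      omega
    have hr21 : (r2:ℤ) = (r1:ℤ) + 1 := by omega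
    rw [hr21] at key
    rw [show (r1:ℤ) + 1 - 1 = (r1:ℤ) by ring] at key
    have : Mfun s (w * genPerm s hs a) - Mfun s w
        = 2 * (w ((r1:ℤ) + 1) - w ((r1:ℤ))) := by rw [key]; ring
    omega

end HypAux
namespace HypAux

variable {s : ℕ}

lemma eq_one_of_no_descent (hs : 2 ≤ s) {w : Equiv.Perm ℤ} (hw : w ∈ AffSymSet s)
    (h : ∀ a : ℤ, w a ≤ w (a + 1)) : w = 1 := by
  rw [mem_affSym_iff] at hw
  obtain ⟨hper, hD⟩ := hw
  have hstrict : ∀ a : ℤ, w a + 1 ≤ w (a + 1) := by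
    intro a
    have h1 := h a
    have h2 : w a ≠ w (a+1) := fun he => by
      have := w.injective he; omega
    omega
  have hmono : ∀ (k : ℕ) (a : ℤ), w a + k ≤ w (a + k) := by
    intro k
    induction k with
    | zero => intro a; simp
    | succ n ih =>
        intro a
        have h1 := ih a
        have h2 := hstrict (a + n)
        push_cast
        rw [show a + ((n:ℤ) + 1) = (a + n) + 1 by ring]
        omega
  -- w i = w 0 + i for i in [0, s]
  have hval : ∀ i : ℕ, i ≤ s → w ((i:ℤ)) = w 0 + i := by
    intro i hi
    have hlow : w 0 + (i:ℤ) ≤ w ((i:ℤ)) := by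
      have := hmono i 0
      simpa using this
    have hup : w ((i:ℤ)) + ((s - i : ℕ) : ℤ) ≤ w ((s:ℤ)) := by
      have := hmono (s - i) ((i:ℤ))
      rwa [show ((i:ℤ) + ((s - i : ℕ):ℤ)) = ((s:ℤ)) by push_cast; omega] at this
    have hws : w ((s:ℤ)) = w 0 + s := by
      have := hper 0
      simpa using this
    push_cast at hup
    omega
  have hw0 : w 0 = 0 := by
    have hDval : Dfun s w = s * w 0 := by
      rw [Dfun, Finset.sum_congr rfl (fun i hi => by
        rw [hval i (le_of_lt (Finset.mem_range.mp hi))]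
        ring : ∀ i ∈ Finset.range s, w ((i:ℤ)) - (i:ℤ) = w 0)]
      rw [Finset.sum_const, Finset.card_range, nsmul_eq_mul]
    rw [hDval] at hD
    have hs0 : (s:ℤ) ≠ 0 := by exact_mod_cast (by omega : s ≠ 0)
    exact (mul_eq_zero.mp hD).resolve_left hs0
  ext m
  have hrd : (s:ℤ) ∣ (m - (rep s m : ℤ)) := by
    have := dvd_neg.mpr (rep_dvd hs (s := s) m)
    rwa [show -((rep s m : ℤ) - m) = m - (rep s m : ℤ) by ring] at this
  have := perz_dvd hper hrd
  rw [hval (rep s m) (le_of_lt (rep_lt hs m)), hw0] at this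
  simp only [Equiv.Perm.one_apply]
  omega

end HypAux
namespace HypAux

variable {s : ℕ}

lemma dcomb {x y : ℤ} (h1 : (s:ℤ) ∣ x) (h2 : (s:ℤ) ∣ y) {u v z : ℤ}
    (hz : z = u * x + v * y) : (s:ℤ) ∣ z :=
  hz ▸ dvd_add (Dvd.dvd.mul_left h1 u) (Dvd.dvd.mul_left h2 v)

lemma done {x : ℤ} (h : (s:ℤ) ∣ x) {z : ℤ} (hz : z = x) : (s:ℤ) ∣ z := hz ▸ h

/-- reflection identity: `t_a (-1-m) = -1 - t_{-2-a} m`. -/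
lemma gen_reflect (hs : 2 ≤ s) (a m : ℤ) :
    genPerm s hs a (-1 - m) = -1 - genPerm s hs (-2 - a) m := by
  by_cases h1 : (s:ℤ) ∣ (m + 1 + a)
  · rw [genPerm_apply_dvd' hs (done h1 (by ring : m - (-2-a) - 1 = m + 1 + a)),
      genPerm_apply_dvd hs (done (dvd_neg.mpr h1) (by ring : (-1-m) - a = -(m+1+a)))]
    ring
  · by_cases h2 : (s:ℤ) ∣ (m + 2 + a)
    · rw [genPerm_apply_dvd hs (done h2 (by ring : m - (-2-a) = m + 2 + a)),
        genPerm_apply_dvd' hs (done (dvd_neg.mpr h2) (by ring : (-1-m) - a - 1 = -(m+2+a)))]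
      ring
    · rw [genPerm_apply_ndvd hs (a := -2-a) (fun h => h2 (done h (by ring)))
          (fun h => h1 (done h (by ring))),
        genPerm_apply_ndvd hs (a := a)
          (fun h => h1 (done (dvd_neg.mpr h) (by ring)))
          (fun h => h2 (done (dvd_neg.mpr h) (by ring)))]

end HypAux
namespace HypAux

variable {s : ℕ}

lemma braid (hs : 2 ≤ s) (hs2 : ¬ (s:ℤ) ∣ 2) (a : ℤ) :
    genPerm s hs a * genPerm s hs (a+1) * genPerm s hs a
      = genPerm s hs (a+1) * genPerm s hs a * genPerm s hs (a+1) := by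
  have n1 := s_ndvd_one hs
  set t0 := genPerm s hs a with ht0
  set t1 := genPerm s hs (a+1) with ht1
  ext m
  simp only [Equiv.Perm.mul_apply]
  by_cases hA : (s:ℤ) ∣ (m - a)
  · have l1 : t0 m = m + 1 := genPerm_apply_dvd hs hA
    have l2 : t1 (m+1) = m + 2 := by
      rw [genPerm_apply_dvd hs (done hA (by ring : (m+1) - (a+1) = m - a))]; ring
    have l3 : t0 (m+2) = m + 2 :=
      genPerm_apply_ndvd hs
        (fun h => hs2 (dcomb h hA (by ring : (2:ℤ) = 1*((m+2)-a) + (-1)*(m-a))))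
        (fun h => n1 (dcomb h hA (by ring : (1:ℤ) = 1*((m+2)-a-1) + (-1)*(m-a))))
    have r1 : t1 m = m :=
      genPerm_apply_ndvd hs
        (fun h => n1 (dcomb hA h (by ring : (1:ℤ) = 1*(m-a) + (-1)*(m-(a+1)))))
        (fun h => hs2 (dcomb hA h (by ring : (2:ℤ) = 1*(m-a) + (-1)*(m-(a+1)-1))))
    simp only [r1, l1, l2, l3]
  · by_cases hB : (s:ℤ) ∣ (m - a - 1)
    · have l1 : t0 m = m - 1 := genPerm_apply_dvd' hs hB
      have l2 : t1 (m-1) = m - 1 :=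
        genPerm_apply_ndvd hs
          (fun h => n1 (dcomb hB h (by ring : (1:ℤ) = 1*(m-a-1) + (-1)*((m-1)-(a+1)))))
          (fun h => hs2 (dcomb hB h (by ring : (2:ℤ) = 1*(m-a-1) + (-1)*((m-1)-(a+1)-1))))
      have l3 : t0 (m-1) = m := by
        rw [genPerm_apply_dvd hs (done hB (by ring : (m-1) - a = m - a - 1))]; ring
      have r1 : t1 m = m + 1 := genPerm_apply_dvd hs (done hB (by ring : m - (a+1) = m - a - 1))
      have r2 : t0 (m+1) = m + 1 :=
        genPerm_apply_ndvd hs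
          (fun h => hs2 (dcomb h hB (by ring : (2:ℤ) = 1*((m+1)-a) + (-1)*(m-a-1))))
          (fun h => n1 (dcomb h hB (by ring : (1:ℤ) = 1*((m+1)-a-1) + (-1)*(m-a-1))))
      have r3 : t1 (m+1) = m := by
        rw [genPerm_apply_dvd' hs (done hB (by ring : (m+1) - (a+1) - 1 = m - a - 1))]; ring
      simp only [l1, r1, l2, l3, r2, r3]
    · by_cases hC : (s:ℤ) ∣ (m - a - 2)
      · have l1 : t0 m = m :=
          genPerm_apply_ndvd hs
            (fun h => hs2 (dcomb hC h (by ring : (2:ℤ) = (-1)*(m-a-2) + 1*(m-a))))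
            (fun h => n1 (dcomb hC h (by ring : (1:ℤ) = (-1)*(m-a-2) + 1*(m-a-1))))
        have l2 : t1 m = m - 1 := genPerm_apply_dvd' hs (done hC (by ring : m - (a+1) - 1 = m - a - 2))
        have l3 : t0 (m-1) = m - 2 := by
          rw [genPerm_apply_dvd' hs (done hC (by ring : (m-1) - a - 1 = m - a - 2))]; ring
        have r3 : t1 (m-2) = m - 2 :=
          genPerm_apply_ndvd hs
            (fun h => n1 (dcomb hC h (by ring : (1:ℤ) = 1*(m-a-2) + (-1)*((m-2)-(a+1)))))
            (fun h => hs2 (dcomb hC h (by ring : (2:ℤ) = 1*(m-a-2) + (-1)*((m-2)-(a+1)-1))))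
        simp only [l1, l2, l3, r3]
      · have l1 : t0 m = m := genPerm_apply_ndvd hs hA hB
        have l2 : t1 m = m :=
          genPerm_apply_ndvd hs (fun h => hB (done h (by ring : m - a - 1 = m - (a+1))))
            (fun h => hC (done h (by ring : m - a - 2 = m - (a+1) - 1)))
        simp only [l1, l2]

lemma gen_commute (hs : 2 ≤ s) {a b : ℤ} (hb0 : ¬ (s:ℤ) ∣ (b - a))
    (hb1 : ¬ (s:ℤ) ∣ (b - a - 1)) (hb2 : ¬ (s:ℤ) ∣ (b - a + 1)) :
    genPerm s hs a * genPerm s hs b = genPerm s hs b * genPerm s hs a := by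
  ext m
  simp only [Equiv.Perm.mul_apply]
  by_cases hA : (s:ℤ) ∣ (m - a)
  · have e1 : genPerm s hs a m = m + 1 := genPerm_apply_dvd hs hA
    have e2 : genPerm s hs b m = m :=
      genPerm_apply_ndvd hs (fun h => hb0 (dcomb hA h (by ring : b - a = 1*(m-a) + (-1)*(m-b))))
        (fun h => hb2 (dcomb hA h (by ring : b - a + 1 = 1*(m-a) + (-1)*(m-b-1))))
    have e3 : genPerm s hs b (m+1) = m + 1 :=
      genPerm_apply_ndvd hs (fun h => hb1 (dcomb hA h (by ring : b - a - 1 = 1*(m-a) + (-1)*((m+1)-b))))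
        (fun h => hb0 (dcomb hA h (by ring : b - a = 1*(m-a) + (-1)*((m+1)-b-1))))
    rw [e2, e1, e3]
  · by_cases hB : (s:ℤ) ∣ (m - a - 1)
    · have e1 : genPerm s hs a m = m - 1 := genPerm_apply_dvd' hs hB
      have e2 : genPerm s hs b m = m :=
        genPerm_apply_ndvd hs (fun h => hb1 (dcomb hB h (by ring : b - a - 1 = 1*(m-a-1) + (-1)*(m-b))))
          (fun h => hb0 (dcomb hB h (by ring : b - a = 1*(m-a-1) + (-1)*(m-b-1))))
      have e3 : genPerm s hs b (m-1) = m - 1 :=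
        genPerm_apply_ndvd hs (fun h => hb0 (dcomb hB h (by ring : b - a = 1*(m-a-1) + (-1)*((m-1)-b))))
          (fun h => hb2 (dcomb hB h (by ring : b - a + 1 = 1*(m-a-1) + (-1)*((m-1)-b-1))))
      rw [e2, e1, e3]
    · have e1 : genPerm s hs a m = m := genPerm_apply_ndvd hs hA hB
      by_cases hC : (s:ℤ) ∣ (m - b)
      · have e2 : genPerm s hs b m = m + 1 := genPerm_apply_dvd hs hC
        have e3 : genPerm s hs a (m+1) = m + 1 :=
          genPerm_apply_ndvd hs (fun h => hb2 (dcomb hC h (by ring : b - a + 1 = (-1)*(m-b) + 1*((m+1)-a))))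
            (fun h => hb0 (dcomb hC h (by ring : b - a = (-1)*(m-b) + 1*((m+1)-a-1))))
        rw [e1, e2, e3]
      · by_cases hD : (s:ℤ) ∣ (m - b - 1)
        · have e2 : genPerm s hs b m = m - 1 := genPerm_apply_dvd' hs hD
          have e3 : genPerm s hs a (m-1) = m - 1 :=
            genPerm_apply_ndvd hs (fun h => hb0 (dcomb hD h (by ring : b - a = (-1)*(m-b-1) + 1*((m-1)-a))))
              (fun h => hb1 (dcomb hD h (by ring : b - a - 1 = (-1)*(m-b-1) + 1*((m-1)-a-1))))
          rw [e1, e2, e3]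
        · simp only [genPerm_apply_ndvd hs hC hD, e1]

end HypAux
namespace HypAux

variable {s : ℕ}

lemma odd_cancel (hs : 2 ≤ s) {k : ℕ} (hsu : (s:ℤ) = 2*(k:ℤ)+1) {x : ℤ}
    (h : (s:ℤ) ∣ 2*x) : (s:ℤ) ∣ x := by
  have h2 : (s:ℤ) ∣ ((k:ℤ)+1)*(2*x) := Dvd.dvd.mul_left h _
  have h3 : ((k:ℤ)+1)*(2*x) = s*x + x := by rw [hsu]; ring
  rw [h3] at h2
  exact (dvd_add_right (Dvd.dvd.mul_right dvd_rfl x)).mp h2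

lemma cond2_dvd (hs : 2 ≤ s) (j : ℤ)
    (h : (s:ℤ) ∣ (j - (s / 2 : ℕ)) ∨ (s:ℤ) ∣ (j + (s / 2 : ℕ))) :
    (s:ℤ) ∣ 2*j ∨ (s:ℤ) ∣ (2*j+1) ∨ (s:ℤ) ∣ (2*j-1) := by
  set u := s / 2 with hu
  rcases Nat.even_or_odd s with he | ho
  · have hsu : (s:ℤ) = 2*(u:ℤ) := by
      obtain ⟨k, hk⟩ := he
      have : u = k := by omega
      push_cast [this, hk]; ring
    left
    rcases h with h | h
    · exact dcomb h (dvd_refl (s:ℤ)) (by rw [hsu]; push_cast; ring : 2*j = 2*(j - (u:ℤ)) + 1*(s:ℤ))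
    · exact dcomb h (dvd_refl (s:ℤ)) (by rw [hsu]; push_cast; ring : 2*j = 2*(j + (u:ℤ)) + (-1)*(s:ℤ))
  · have hsu : (s:ℤ) = 2*(u:ℤ)+1 := by
      obtain ⟨k, hk⟩ := ho
      have : u = k := by omega
      push_cast [this, hk]; ring
    rcases h with h | h
    · right; left
      exact dcomb h (dvd_refl (s:ℤ)) (by rw [hsu]; push_cast; ring : 2*j+1 = 2*(j - (u:ℤ)) + 1*(s:ℤ))
    · right; right
      exact dcomb h (dvd_refl (s:ℤ)) (by rw [hsu]; push_cast; ring : 2*j-1 = 2*(j + (u:ℤ)) + (-1)*(s:ℤ))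

lemma cond3_ndvd (hs : 2 ≤ s) (j : ℤ) (h0 : ¬ (s:ℤ) ∣ j)
    (h1 : ¬ (s:ℤ) ∣ (j - (s / 2 : ℕ))) (h2 : ¬ (s:ℤ) ∣ (j + (s / 2 : ℕ))) :
    ¬ (s:ℤ) ∣ 2*j ∧ ¬ (s:ℤ) ∣ (2*j+1) ∧ ¬ (s:ℤ) ∣ (2*j-1) := by
  set u := s / 2 with hu
  rcases Nat.even_or_odd s with he | ho
  · have hsu : (s:ℤ) = 2*(u:ℤ) := by
      obtain ⟨k, hk⟩ := he
      have : u = k := by omega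
      push_cast [this, hk]; ring
    refine ⟨?_, ?_, ?_⟩
    · intro h
      rw [hsu] at h
      have hdu : (u:ℤ) ∣ j := by
        obtain ⟨c, hc⟩ := h
        exact ⟨c, by linarith⟩
      obtain ⟨m, hm⟩ := hdu
      rcases Int.even_or_odd m with ⟨n, hn⟩ | ⟨n, hn⟩
      · exact h0 (by rw [hsu]; exact ⟨n, by rw [hm, hn]; ring⟩)
      · exact h1 (by rw [hsu]; exact ⟨n, by rw [hm, hn]; push_cast; ring⟩)
    · intro h
      obtain ⟨c, hc⟩ := h
      have : (2:ℤ) ∣ 2*j+1 := ⟨(u:ℤ)*c, by rw [hc, hsu]; ring⟩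
      omega
    · intro h
      obtain ⟨c, hc⟩ := h
      have : (2:ℤ) ∣ 2*j-1 := ⟨(u:ℤ)*c, by rw [hc, hsu]; ring⟩
      omega
  · have hsu : (s:ℤ) = 2*(u:ℤ)+1 := by
      obtain ⟨k, hk⟩ := ho
      have : u = k := by omega
      push_cast [this, hk]; ring
    refine ⟨?_, ?_, ?_⟩
    · exact fun h => h0 (odd_cancel hs hsu h)
    · intro h
      apply h1
      apply odd_cancel hs hsu
      exact dcomb h (dvd_refl (s:ℤ)) (by rw [hsu]; push_cast; ring : 2*(j - (u:ℤ)) = 1*(2*j+1) + (-1)*(s:ℤ))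
    · intro h
      apply h2
      apply odd_cancel hs hsu
      exact dcomb h (dvd_refl (s:ℤ)) (by rw [hsu]; push_cast; ring : 2*(j + (u:ℤ)) = 1*(2*j-1) + 1*(s:ℤ))

end HypAux
namespace HypAux

variable {s : ℕ}

def HSet (s : ℕ) : Set (Equiv.Perm ℤ) :=
  {w : Equiv.Perm ℤ | w ∈ AffSymSet s ∧ ∀ m : ℤ, w (-1 - m) = -1 - w m}

def HGrp (s : ℕ) (hs : 2 ≤ s) : Subgroup (Equiv.Perm ℤ) where
  carrier := HSet s
  one_mem' := ⟨affSym_one, fun m => by simp⟩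
  mul_mem' := fun {a b} ha hb =>
    ⟨affSym_mul hs ha.1 hb.1, fun m => by
      rw [Equiv.Perm.mul_apply, hb.2 m, ha.2, Equiv.Perm.mul_apply]⟩
  inv_mem' := fun {a} ha =>
    ⟨affSym_inv hs ha.1, fun m => by
      apply a.injective
      rw [(show ∀ x, a (a⁻¹ x) = x from fun x => Equiv.apply_symm_apply a x), ha.2,
        (show ∀ x, a (a⁻¹ x) = x from fun x => Equiv.apply_symm_apply a x)]⟩

lemma ndvd_two_of_dvd_odd (hs : 2 ≤ s) {x : ℤ} (hx : (s:ℤ) ∣ (2*x+1) ∨ (s:ℤ) ∣ (2*x-1)) :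
    ¬ (s:ℤ) ∣ 2 := by
  intro h2
  rcases hx with h | h
  · exact s_ndvd_one hs (dcomb h h2 (by ring : (1:ℤ) = 1*(2*x+1) + (-x)*2))
  · exact s_ndvd_one hs (dcomb h h2 (by ring : (1:ℤ) = (-1)*(2*x-1) + x*2))

/-- The three-fold product identity in the `±u` case. -/
lemma triple_identity (hs : 2 ≤ s) (j : ℤ)
    (hd : (s:ℤ) ∣ 2*j ∨ (s:ℤ) ∣ (2*j+1) ∨ (s:ℤ) ∣ (2*j-1)) :
    genPerm s hs (j-1) * genPerm s hs (-j-1) * genPerm s hs (j-1)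
      = genPerm s hs (-j-1) * genPerm s hs (j-1) * genPerm s hs (-j-1) := by
  rcases hd with h | h | h
  · rw [genPerm_congr hs (dcomb h h (by ring : (-j-1) - (j-1) = (-1)*(2*j) + 0*(2*j)) :
      (s:ℤ) ∣ ((-j-1) - (j-1)))]
  · have hs2 : ¬ (s:ℤ) ∣ 2 := ndvd_two_of_dvd_odd hs (Or.inl h)
    have hcon : genPerm s hs (-j-1) = genPerm s hs ((j-1)+1) :=
      genPerm_congr hs (dcomb h h (by ring : (-j-1) - ((j-1)+1) = (-1)*(2*j+1) + 0*(2*j+1)))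
    rw [hcon]
    exact braid hs hs2 (j-1)
  · have hs2 : ¬ (s:ℤ) ∣ 2 := ndvd_two_of_dvd_odd hs (Or.inr h)
    have hcon : genPerm s hs (j-1) = genPerm s hs ((-j-1)+1) :=
      genPerm_congr hs (dcomb h h (by ring : (j-1) - ((-j-1)+1) = 1*(2*j-1) + 0*(2*j-1)))
    rw [hcon]
    exact (braid hs hs2 (-j-1)).symm

lemma vset_sub (hs : 2 ≤ s) : VSet s hs ⊆ HSet s := by
  rintro v ⟨j, hv⟩
  rcases hv with ⟨hj, hv⟩ | ⟨hj, hcond, hv⟩ | ⟨hj, hcond, hv⟩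
  · subst hv
    refine ⟨genPerm_mem hs _, fun m => ?_⟩
    rw [gen_reflect hs (j-1) m,
      genPerm_congr hs (dcomb hj hj (by ring : (-2-(j-1)) - (j-1) = (-2)*j + 0*j) :
        (s:ℤ) ∣ ((-2-(j-1)) - (j-1)))]
  · subst hv
    set t1 := genPerm s hs (j-1) with ht1
    set t2 := genPerm s hs (-j-1) with ht2
    have g1 : ∀ x : ℤ, t1 (-1-x) = -1 - t2 x := by
      intro x
      rw [ht1, gen_reflect hs (j-1) x, show (-2-(j-1) : ℤ) = -j-1 by ring, ht2]
    have g2 : ∀ x : ℤ, t2 (-1-x) = -1 - t1 x := by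
      intro x
      rw [ht2, gen_reflect hs (-j-1) x, show (-2-(-j-1) : ℤ) = j-1 by ring, ht1]
    have hbr := triple_identity hs j (cond2_dvd hs j hcond)
    rw [← ht1, ← ht2] at hbr
    refine ⟨affSym_mul hs (affSym_mul hs (genPerm_mem hs _) (genPerm_mem hs _)) (genPerm_mem hs _),
      fun m => ?_⟩
    simp only [Equiv.Perm.mul_apply]
    rw [g1 m, g2 (t2 m), g1 (t1 (t2 m))]
    have := congrFun (congrArg (fun (e : Equiv.Perm ℤ) => (e : ℤ → ℤ)) hbr) m
    simp only [Equiv.Perm.coe_mul, Function.comp_apply] at this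
    rw [← this]
  · subst hv
    set t1 := genPerm s hs (j-1) with ht1
    set t2 := genPerm s hs (-j-1) with ht2
    obtain ⟨n0, n1, n2⟩ := cond3_ndvd hs j hj (fun h => hcond (Or.inl h)) (fun h => hcond (Or.inr h))
    have g1 : ∀ x : ℤ, t1 (-1-x) = -1 - t2 x := by
      intro x
      rw [ht1, gen_reflect hs (j-1) x, show (-2-(j-1) : ℤ) = -j-1 by ring, ht2]
    have hcomm : t1 * t2 = t2 * t1 := by
      rw [ht1, ht2]
      apply gen_commute hs
      · intro h; exact n0 (dcomb h h (by ring : 2*j = (-1)*((-j-1)-(j-1)) + 0*((-j-1)-(j-1))))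
      · intro h; exact n1 (done (dvd_neg.mpr h) (by ring : 2*j+1 = -((-j-1)-(j-1)-1)))
      · intro h; exact n2 (done (dvd_neg.mpr h) (by ring : 2*j-1 = -((-j-1)-(j-1)+1)))
    have g2 : ∀ x : ℤ, t2 (-1-x) = -1 - t1 x := by
      intro x
      rw [ht2, gen_reflect hs (-j-1) x, show (-2-(-j-1) : ℤ) = j-1 by ring, ht1]
    refine ⟨affSym_mul hs (genPerm_mem hs _) (genPerm_mem hs _), fun m => ?_⟩
    simp only [Equiv.Perm.mul_apply]
    rw [g2 m, g1 (t1 m)]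
    have := congrFun (congrArg (fun (e : Equiv.Perm ℤ) => (e : ℤ → ℤ)) hcomm) m
    simp only [Equiv.Perm.coe_mul, Function.comp_apply] at this
    rw [this]

end HypAux
namespace HypAux

variable {s : ℕ}

lemma exists_v (hs : 2 ≤ s) {w : Equiv.Perm ℤ} (hw : w ∈ HSet s) {a : ℤ}
    (ha : w (a + 1) < w a) :
    ∃ v ∈ VSet s hs, Mfun s (w * v) < Mfun s w := by
  have hperz : PerZ s w := (mem_affSym_iff.mp hw.1).1
  have hsym := hw.2
  have n1 := s_ndvd_one hs
  -- the reflected descent, at b = -(a+1)-1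
  set b : ℤ := -(a+1)-1 with hb
  have hd2 : w (b + 1) < w b := by
    have e1 : w (b + 1) = -1 - w a := by
      rw [show b + 1 = -1 - a by rw [hb]; ring, hsym a]
    have e2 : w b = -1 - w (a+1) := by
      rw [show b = -1 - (a+1) by rw [hb]; ring, hsym (a+1)]
    omega
  by_cases h0 : (s:ℤ) ∣ (a+1)
  · exact ⟨genPerm s hs a,
      ⟨a+1, Or.inl ⟨h0, by rw [show (a+1-1:ℤ) = a by ring]⟩⟩,
      Mfun_descent hs hperz ha⟩
  · by_cases h1 : (s:ℤ) ∣ ((a+1) - (s / 2 : ℕ)) ∨ (s:ℤ) ∣ ((a+1) + (s / 2 : ℕ))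
    · -- the "triple" case
      rcases cond2_dvd hs (a+1) h1 with hT | hT | hT
      · -- s ∣ 2(a+1) : the element reduces to a single generator
        have hcon : genPerm s hs (-(a+1)-1) = genPerm s hs a :=
          genPerm_congr hs (done (dvd_neg.mpr hT) (by ring : (-(a+1)-1) - a = -(2*(a+1))))
        refine ⟨genPerm s hs a * genPerm s hs a * genPerm s hs a,
          ⟨a+1, Or.inr (Or.inl ⟨h0, h1, by rw [show (a+1-1:ℤ) = a by ring, hcon]⟩)⟩, ?_⟩
        rw [genPerm_sq hs a, one_mul]
        exact Mfun_descent hs hperz ha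
      · -- s ∣ 2(a+1)+1 : braid case with t_a, t_{a+1}
        have hs2 : ¬ (s:ℤ) ∣ 2 := ndvd_two_of_dvd_odd hs (Or.inl hT)
        have hcon : genPerm s hs (-(a+1)-1) = genPerm s hs (a+1) :=
          genPerm_congr hs (done (dvd_neg.mpr hT) (by ring : (-(a+1)-1) - (a+1) = -(2*(a+1)+1)))
        -- chain : w a > w (a+1) > w (a+2)
        have hchain : w (a + 2) < w (a + 1) := by
          have hdvd : (s:ℤ) ∣ (b - (a+1)) := done (dvd_neg.mpr hT) (by rw [hb]; ring)
          have e1 : w b = w (a+1) + (b - (a+1)) := perz_dvd hperz hdvd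
          have e2 : w (b+1) = w (a+2) + ((b+1) - (a+2)) :=
            perz_dvd hperz (done hdvd (by ring))
          have e3 : (b+1) - (a+2) = b - (a+1) := by ring
          omega
        set t0 := genPerm s hs a with ht0
        set t1 := genPerm s hs (a+1) with ht1
        have ev1 : t0 (a+1) = a := by
          rw [ht0, genPerm_apply_dvd' hs (done (dvd_zero (s:ℤ)) (by ring : (a+1) - a - 1 = 0))]
          ring
        have ev2 : t0 (a+2) = a+2 := by
          rw [ht0]
          exact genPerm_apply_ndvd hs (fun h => hs2 (done h (by ring : (2:ℤ) = (a+2) - a)))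
            (fun h => n1 (done h (by ring : (1:ℤ) = (a+2) - a - 1)))
        have ev3 : t1 a = a := by
          rw [ht1]
          exact genPerm_apply_ndvd hs
            (fun h => n1 (done (dvd_neg.mpr h) (by ring : (1:ℤ) = -(a - (a+1)))))
            (fun h => hs2 (done (dvd_neg.mpr h) (by ring : (2:ℤ) = -(a - (a+1) - 1))))
        have ev4 : t1 (a+1) = a+2 := by
          rw [ht1, genPerm_apply_dvd hs (done (dvd_zero (s:ℤ)) (by ring : (a+1) - (a+1) = 0))]
          ring
        have ev5 : t0 a = a + 1 := by
          rw [ht0, genPerm_apply_dvd hs (done (dvd_zero (s:ℤ)) (by ring : a - a = 0))]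
        have step1 : Mfun s (w * t0) < Mfun s w := Mfun_descent hs hperz ha
        have hp1 : PerZ s (w * t0) := perz_mul hperz (by rw [ht0]; exact perz_genPerm hs a)
        have step2 : Mfun s (w * t0 * t1) < Mfun s (w * t0) := by
          apply Mfun_descent hs hp1
          simp only [Equiv.Perm.mul_apply]
          rw [show (a+1+1:ℤ) = a+2 by ring, ev2, ev1]
          omega
        have hp2 : PerZ s (w * t0 * t1) := perz_mul hp1 (by rw [ht1]; exact perz_genPerm hs (a+1))
        have step3 : Mfun s (w * t0 * t1 * t0) < Mfun s (w * t0 * t1) := by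
          apply Mfun_descent hs hp2
          simp only [Equiv.Perm.mul_apply]
          rw [ev3, ev5, ev4, ev2]
          omega
        refine ⟨t0 * t1 * t0,
          ⟨a+1, Or.inr (Or.inl ⟨h0, h1, by rw [show (a+1-1:ℤ) = a by ring, hcon, ht0, ht1]⟩)⟩, ?_⟩
        calc Mfun s (w * (t0 * t1 * t0)) = Mfun s (w * t0 * t1 * t0) := by
              rw [mul_assoc, mul_assoc, mul_assoc]
          _ < Mfun s w := lt_trans step3 (lt_trans step2 step1)
      · -- s ∣ 2(a+1)-1 : braid case with t_{b+1}, t_b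
        have hs2 : ¬ (s:ℤ) ∣ 2 := ndvd_two_of_dvd_odd hs (Or.inr hT)
        have hcon : genPerm s hs a = genPerm s hs (b+1) :=
          genPerm_congr hs (done hT (by rw [hb]; ring : a - (b+1) = 2*(a+1)-1))
        -- chain : w b > w (b+1) > w (b+2)
        have hchain : w (b + 2) < w (b + 1) := by
          have hdvd : (s:ℤ) ∣ ((b+1) - a) := done (dvd_neg.mpr hT) (by rw [hb]; ring)
          have e1 : w (b+1) = w a + ((b+1) - a) := perz_dvd hperz hdvd
          have e2 : w (b+2) = w (a+1) + ((b+2) - (a+1)) :=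
            perz_dvd hperz (done hdvd (by ring))
          have e3 : (b+2) - (a+1) = (b+1) - a := by ring
          omega
        set t0 := genPerm s hs b with ht0
        set t1 := genPerm s hs (b+1) with ht1
        have ev1 : t1 b = b := by
          rw [ht1]
          exact genPerm_apply_ndvd hs
            (fun h => n1 (done (dvd_neg.mpr h) (by ring : (1:ℤ) = -(b - (b+1)))))
            (fun h => hs2 (done (dvd_neg.mpr h) (by ring : (2:ℤ) = -(b - (b+1) - 1))))
        have ev2 : t1 (b+1) = b+2 := by
          rw [ht1, genPerm_apply_dvd hs (done (dvd_zero (s:ℤ)) (by ring : (b+1) - (b+1) = 0))]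
          ring
        have ev3 : t1 (b+2) = b+1 := by
          rw [ht1, genPerm_apply_dvd' hs (done (dvd_zero (s:ℤ)) (by ring : (b+2) - (b+1) - 1 = 0))]
          ring
        have ev4 : t0 (b+1) = b := by
          rw [ht0, genPerm_apply_dvd' hs (done (dvd_zero (s:ℤ)) (by ring : (b+1) - b - 1 = 0))]
          ring
        have ev5 : t0 (b+2) = b+2 := by
          rw [ht0]
          exact genPerm_apply_ndvd hs (fun h => hs2 (done h (by ring : (2:ℤ) = (b+2) - b)))
            (fun h => n1 (done h (by ring : (1:ℤ) = (b+2) - b - 1)))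
        have step1 : Mfun s (w * t1) < Mfun s w := by
          apply Mfun_descent hs hperz
          rw [show (b+1+1:ℤ) = b+2 by ring]
          exact hchain
        have hp1 : PerZ s (w * t1) := perz_mul hperz (by rw [ht1]; exact perz_genPerm hs (b+1))
        have step2 : Mfun s (w * t1 * t0) < Mfun s (w * t1) := by
          apply Mfun_descent hs hp1
          simp only [Equiv.Perm.mul_apply]
          rw [ev1, ev2]
          omega
        have hp2 : PerZ s (w * t1 * t0) := perz_mul hp1 (by rw [ht0]; exact perz_genPerm hs b)
        have step3 : Mfun s (w * t1 * t0 * t1) < Mfun s (w * t1 * t0) := by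
          apply Mfun_descent hs hp2
          simp only [Equiv.Perm.mul_apply]
          rw [show (b+1+1:ℤ) = b+2 by ring, ev5, ev3, ev4, ev1]
          omega
        refine ⟨t1 * t0 * t1,
          ⟨a+1, Or.inr (Or.inl ⟨h0, h1, by
            rw [show (a+1-1:ℤ) = a by ring, hcon, ht0, ht1, hb]⟩)⟩, ?_⟩
        calc Mfun s (w * (t1 * t0 * t1)) = Mfun s (w * t1 * t0 * t1) := by
              rw [mul_assoc, mul_assoc, mul_assoc]
          _ < Mfun s w := lt_trans step3 (lt_trans step2 step1)
    · -- the "commuting pair" case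
      obtain ⟨n0, nn1, nn2⟩ := cond3_ndvd hs (a+1) h0
        (fun h => h1 (Or.inl h)) (fun h => h1 (Or.inr h))
      set t0 := genPerm s hs a with ht0
      set t1 := genPerm s hs b with ht1
      have ev1 : t0 b = b := by
        rw [ht0]
        exact genPerm_apply_ndvd hs
          (fun h => n0 (done (dvd_neg.mpr h) (by rw [hb]; ring : 2*(a+1) = -(b - a))))
          (fun h => nn1 (done (dvd_neg.mpr h) (by rw [hb]; ring : 2*(a+1)+1 = -(b - a - 1))))
      have ev2 : t0 (b+1) = b+1 := by
        rw [ht0]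
        exact genPerm_apply_ndvd hs
          (fun h => nn2 (done (dvd_neg.mpr h) (by rw [hb]; ring : 2*(a+1)-1 = -((b+1) - a))))
          (fun h => n0 (done (dvd_neg.mpr h) (by rw [hb]; ring : 2*(a+1) = -((b+1) - a - 1))))
      have step1 : Mfun s (w * t0) < Mfun s w := Mfun_descent hs hperz ha
      have hp1 : PerZ s (w * t0) := perz_mul hperz (by rw [ht0]; exact perz_genPerm hs a)
      have step2 : Mfun s (w * t0 * t1) < Mfun s (w * t0) := by
        apply Mfun_descent hs hp1
        simp only [Equiv.Perm.mul_apply]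
        rw [ev1, ev2]
        exact hd2
      refine ⟨t0 * t1,
        ⟨a+1, Or.inr (Or.inr ⟨h0, h1, by rw [show (a+1-1:ℤ) = a by ring, ht0, ht1, hb]⟩)⟩, ?_⟩
      calc Mfun s (w * (t0 * t1)) = Mfun s (w * t0 * t1) := by rw [mul_assoc]
        _ < Mfun s w := lt_trans step2 step1

end HypAux

open HypAux

/-- The subgroup `H̃_s` generated by the `v_i` equals
`{w ∈ W̃_s : w(-1-m) = -1-w(m) for all m}`. -/
theorem hyp_group_eq (s : ℕ) (hs : 2 ≤ s) :
    (Subgroup.closure (VSet s hs) : Set (Equiv.Perm ℤ)) =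
      {w : Equiv.Perm ℤ | w ∈ AffSymSet s ∧ ∀ m : ℤ, w (-1 - m) = -1 - w m} := by
  have hRHS : {w : Equiv.Perm ℤ | w ∈ AffSymSet s ∧ ∀ m : ℤ, w (-1 - m) = -1 - w m}
      = HSet s := rfl
  rw [hRHS]
  apply Set.eq_of_subset_of_subset
  · intro w hw
    exact (Subgroup.closure_le (HGrp s hs)).mpr (vset_sub hs) hw
  · intro w hw
    suffices H : ∀ n : ℕ, ∀ w : Equiv.Perm ℤ, w ∈ HSet s →
        (Mfun s w).toNat = n → w ∈ Subgroup.closure (VSet s hs) by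
      exact H _ w hw rfl
    intro n
    induction n using Nat.strong_induction_on with
    | _ n ih =>
      intro w hwH hn
      by_cases hd : ∃ a : ℤ, w (a + 1) < w a
      · obtain ⟨a, ha⟩ := hd
        obtain ⟨v, hv, hlt⟩ := exists_v hs hwH ha
        have hvH : v ∈ HSet s := vset_sub hs hv
        have hwv : w * v ∈ HSet s := (HGrp s hs).mul_mem hwH hvH
        have h1 : (Mfun s (w * v)).toNat < n := by
          have h0 := Mfun_nonneg (s := s) (w * v)
          have h0' := Mfun_nonneg (s := s) w
          omega
        have h2 := ih _ h1 (w * v) hwv rfl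
        have h3 : w = (w * v) * v⁻¹ := (mul_inv_cancel_right w v).symm
        rw [h3]
        exact Subgroup.mul_mem _ h2 (Subgroup.inv_mem _ (Subgroup.subset_closure hv))
      · push_neg at hd
        have h1 : w = 1 := eq_one_of_no_descent hs hwH.1 hd
        rw [h1]
        exact Subgroup.one_mem _
end

section
/- Under the level-t action of W̃_s on s-cores, the conjugate of w̌_i λ equals w̌_{-i} applied to the conjugate of λ, for every s-core λ and every i ∈ ℤ/sℤ. -/
/-! ### Auxiliary lemmas -/

lemma conj_le (p : Partn) (i j : ℕ) : j + 1 ≤ p.f i ↔ i + 1 ≤ conjCount p j := by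
  obtain ⟨N, hN⟩ := p.eventually_zero
  have hsub : {k : ℕ | j + 1 ≤ p.f k} ⊆ Set.Iio N := by
    intro k hk
    simp only [Set.mem_setOf_eq] at hk
    by_contra hkN
    have := hN k (le_of_not_gt hkN)
    omega
  have hfin : {k : ℕ | j + 1 ≤ p.f k}.Finite := (Set.finite_Iio N).subset hsub
  have hdc : ∀ a b : ℕ, a ≤ b → b ∈ {k : ℕ | j + 1 ≤ p.f k} → a ∈ {k : ℕ | j + 1 ≤ p.f k} := by
    intro a b hab hb
    exact le_trans hb (p.antitone hab)
  constructor
  · intro h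
    have hsub2 : Set.Iic i ⊆ {k : ℕ | j + 1 ≤ p.f k} := fun k hk => hdc k i hk h
    have hle := Set.ncard_le_ncard hsub2 hfin
    have hic : (Set.Iic i).ncard = i + 1 := by
      rw [Set.ncard_eq_toFinset_card']
      simp
    rw [hic] at hle
    exact hle
  · intro h
    by_contra hmem
    have hsub2 : {k : ℕ | j + 1 ≤ p.f k} ⊆ Set.Iio i := by
      intro k hk
      by_contra hk'
      exact hmem (hdc i k (le_of_not_gt hk') hk)
    have hle := Set.ncard_le_ncard hsub2 (Set.finite_Iio i)
    have hio : (Set.Iio i).ncard = i := by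
      rw [Set.ncard_eq_toFinset_card']
      simp
    rw [hio] at hle
    have : conjCount p j ≤ i := hle
    omega

lemma conj_antitone (p : Partn) : Antitone (conjCount p) := by
  intro j j' hjj'
  by_contra h'
  push_neg at h'
  have h1 : conjCount p j + 1 ≤ conjCount p j' := h'
  have h2 : j' + 1 ≤ p.f (conjCount p j) := (conj_le p _ j').mpr h1
  have h3 : j + 1 ≤ p.f (conjCount p j) := by omega
  have h4 := (conj_le p (conjCount p j) j).mp h3
  omega

lemma beta_disj (p : Partn) (i j : ℕ) :
    (p.f i : ℤ) - (i + 1) ≠ (j : ℤ) - conjCount p j := by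
  intro h
  rcases le_or_gt (j + 1) (p.f i) with hc | hc
  · have := (conj_le p i j).mp hc
    omega
  · have : ¬ (i + 1 ≤ conjCount p j) := fun hh => by
      have := (conj_le p i j).mpr hh; omega
    omega

lemma beta_cover (p : Partn) (x : ℤ) :
    (∃ i : ℕ, x = (p.f i : ℤ) - (i + 1)) ∨ (∃ j : ℕ, x = (j : ℤ) - conjCount p j) := by
  rcases lt_or_ge x (-(conjCount p 0 : ℤ)) with hx | hx
  · left
    have hi0 : 0 ≤ -x - 1 := by omega
    refine ⟨(-x - 1).toNat, ?_⟩
    have hc : ((-x - 1).toNat : ℤ) = -x - 1 := Int.toNat_of_nonneg hi0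
    have hf0 : p.f (-x - 1).toNat = 0 := by
      by_contra h0
      have h1 : 0 + 1 ≤ p.f (-x - 1).toNat := by omega
      have h2 := (conj_le p _ 0).mp h1
      omega
    rw [hf0]
    push_cast
    omega
  · set g := conjCount p with hg
    have hb : ∀ j : ℕ, (j : ℤ) - (g j : ℤ) ≤ x → (j : ℤ) ≤ x + g 0 := by
      intro j hj
      have : g j ≤ g 0 := conj_antitone p (Nat.zero_le j)
      omega
    set M := (x + g 0).toNat with hM
    have hMc : (M : ℤ) = x + g 0 := Int.toNat_of_nonneg (by omega)
    set T := (Finset.range (M + 1)).filter (fun j : ℕ => (j : ℤ) - g j ≤ x) with hT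
    have h0T : 0 ∈ T := by
      rw [hT, Finset.mem_filter, Finset.mem_range]
      constructor
      · omega
      · push_cast; omega
    have hTne : T.Nonempty := ⟨0, h0T⟩
    set j := T.max' hTne with hj
    have hjmem := T.max'_mem hTne
    have hjle : (j : ℤ) - g j ≤ x := (Finset.mem_filter.mp hjmem).2
    have hnext : x < ((j : ℤ) + 1) - g (j + 1) := by
      by_contra hcon
      push_neg at hcon
      have hcon' : ((j + 1 : ℕ) : ℤ) - g (j + 1) ≤ x := by push_cast; omega
      have hmm := hb (j + 1) hcon'
      have hmem : (j + 1) ∈ T := by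
        rw [hT, Finset.mem_filter, Finset.mem_range]
        exact ⟨by omega, hcon'⟩
      have := T.le_max' _ hmem
      omega
    rcases eq_or_lt_of_le hjle with heq | hlt
    · right; exact ⟨j, heq.symm⟩
    · left
      have hge0 : 0 ≤ (j : ℤ) - x := by
        have : (0 : ℤ) ≤ g (j + 1) := Int.natCast_nonneg _
        omega
      set i := ((j : ℤ) - x).toNat with hi
      have hci : (i : ℤ) = (j : ℤ) - x := Int.toNat_of_nonneg hge0
      have hi1 : i + 1 ≤ g j := by omega
      have hi2 : ¬ (i + 1 ≤ g (j + 1)) := by omega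
      have hf1 : j + 1 ≤ p.f i := (conj_le p i j).mpr hi1
      have hf2 : ¬ (j + 1 + 1 ≤ p.f i) := fun h => hi2 ((conj_le p i (j + 1)).mp h)
      have hfi : p.f i = j + 1 := by omega
      refine ⟨i, ?_⟩
      rw [hfi]
      push_cast
      omega

lemma betaConj (p : Partn) (x : ℤ) :
    (∃ j : ℕ, x = (conjCount p j : ℤ) - (j + 1)) ↔ (-1 - x) ∉ betaSet p := by
  constructor
  · rintro ⟨j, rfl⟩ ⟨i, hi⟩
    have := beta_disj p i j
    omega
  · intro h
    rcases beta_cover p (-1 - x) with ⟨i, hi⟩ | ⟨j, hj⟩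
    · exact absurd ⟨i, hi⟩ h
    · exact ⟨j, by omega⟩

lemma strictAnti_range_eq {b c : ℕ → ℤ} (hb : StrictAnti b) (hc : StrictAnti c)
    (h : Set.range b = Set.range c) : b = c := by
  have hle : ∀ n : ℕ, ∀ (b c : ℕ → ℤ), StrictAnti b → StrictAnti c →
      Set.range b = Set.range c → (∀ k, k < n → b k = c k) → b n ≤ c n := by
    intro n b c hb hc h hk
    have hmem : b n ∈ Set.range c := h ▸ Set.mem_range_self n
    obtain ⟨m, hm⟩ := hmem
    rcases lt_or_ge m n with hlt | hge
    · exfalso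
      have h1 : b m = c m := hk m hlt
      have h2 : b n < b m := hb hlt
      omega
    · calc b n = c m := hm.symm
        _ ≤ c n := hc.antitone hge
  funext n
  induction n using Nat.strong_induction_on with
  | _ n ih =>
    exact le_antisymm (hle n b c hb hc h ih)
      (hle n c b hc hb h.symm fun k hk => (ih k hk).symm)

lemma lgf_invol (s t : ℕ) (hnd : ¬ (s : ℤ) ∣ (t : ℤ)) (i : ℤ) :
    Function.Involutive (levelGenFun s t i) := by
  intro m
  unfold levelGenFun
  by_cases h1 : (s : ℤ) ∣ (m - ((i - 1) * t - lc s t))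
  · rw [if_pos h1]
    have h1' : ¬ (s : ℤ) ∣ (m + t - ((i - 1) * t - lc s t)) := by
      intro h
      have hd := dvd_sub h h1
      have e : m + t - ((i - 1) * t - lc s t) - (m - ((i - 1) * t - lc s t)) = (t : ℤ) := by ring
      rw [e] at hd
      exact hnd hd
    rw [if_neg h1']
    have h2' : (s : ℤ) ∣ (m + t - (i * t - lc s t)) := by
      have e : m + t - ((i : ℤ) * t - lc s t) = m - ((i - 1) * t - lc s t) := by ring
      rw [e]; exact h1
    rw [if_pos h2']
    ring
  · rw [if_neg h1]
    by_cases h2 : (s : ℤ) ∣ (m - ((i : ℤ) * t - lc s t))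
    · rw [if_pos h2]
      have h1' : (s : ℤ) ∣ (m - t - ((i - 1) * (t : ℤ) - lc s t)) := by
        have e : m - t - ((i - 1) * (t : ℤ) - lc s t) = m - ((i : ℤ) * t - lc s t) := by ring
        rw [e]; exact h2
      rw [if_pos h1']
      ring
    · rw [if_neg h2, if_neg h1, if_neg h2]

lemma lgf_conj (s t : ℕ) (hnd : ¬ (s : ℤ) ∣ (t : ℤ))
    (h2c : 2 * lc s t = ((s : ℤ) - 1) * ((t : ℤ) - 1)) (i n : ℤ) :
    levelGenFun s t (-i) (-1 - n) = -1 - levelGenFun s t i n := by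
  unfold levelGenFun
  have hsd : (s : ℤ) ∣ (s : ℤ) * ((t : ℤ) - 1) := dvd_mul_right _ _
  have hC1D2 : ((s : ℤ) ∣ (-1 - n - ((-i - 1) * t - lc s t))) ↔
      ((s : ℤ) ∣ (n - (i * t - lc s t))) := by
    have e : (-1 - n - ((-i - 1) * (t : ℤ) - lc s t)) =
        (s : ℤ) * ((t : ℤ) - 1) - (n - (i * t - lc s t)) := by linear_combination h2c
    rw [e]
    exact dvd_sub_right hsd
  have hC2D1 : ((s : ℤ) ∣ (-1 - n - ((-i) * t - lc s t))) ↔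
      ((s : ℤ) ∣ (n - ((i - 1) * t - lc s t))) := by
    have e : (-1 - n - ((-i) * (t : ℤ) - lc s t)) =
        (s : ℤ) * ((t : ℤ) - 1) - (n - ((i - 1) * t - lc s t)) := by linear_combination h2c
    rw [e]
    exact dvd_sub_right hsd
  by_cases hD1 : (s : ℤ) ∣ (n - ((i - 1) * t - lc s t))
  · have hD2 : ¬ (s : ℤ) ∣ (n - (i * t - lc s t)) := by
      intro h
      have hd := dvd_sub hD1 h
      have e : (n - ((i - 1) * t - lc s t)) - (n - (i * t - lc s t)) = (t : ℤ) := by ring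
      rw [e] at hd
      exact hnd hd
    rw [if_pos hD1, if_neg (fun h => hD2 (hC1D2.mp h)), if_pos (hC2D1.mpr hD1)]
    ring
  · by_cases hD2 : (s : ℤ) ∣ (n - (i * t - lc s t))
    · rw [if_neg hD1, if_pos hD2, if_pos (hC1D2.mpr hD2)]
      ring
    · rw [if_neg hD1, if_neg hD2, if_neg (fun h => hD2 (hC1D2.mp h)),
        if_neg (fun h => hD1 (hC2D1.mp h))]

/-- `(w̌_i λ)' = w̌_{-i}(λ')` for the level `t` action on `s`-cores: if `λ'` is the
conjugate of `λ`, `B(μ) = ẘ_i(B(λ))` and `B(ν) = ẘ_{-i}(B(λ'))`, then `ν = μ'`. -/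
theorem conj_action (s t : ℕ) (hs : 2 ≤ s) (ht : 0 < t) (hst : Nat.Coprime s t)
    (i : ℤ) (p p' q r : Partn) (hp : IsCore s p)
    (hp' : ∀ j : ℕ, p'.f j = conjCount p j)
    (hq : betaSet q = levelGenFun s t i '' betaSet p)
    (hr : betaSet r = levelGenFun s t (-i) '' betaSet p') :
    ∀ j : ℕ, r.f j = conjCount q j := by
  -- basic number-theoretic facts
  have hnd : ¬ (s : ℤ) ∣ (t : ℤ) := by
    intro h
    rw [Int.natCast_dvd_natCast] at h
    have := Nat.gcd_eq_left h
    rw [hst] at this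
    omega
  have h2c : 2 * lc s t = ((s : ℤ) - 1) * ((t : ℤ) - 1) := by
    have hpar : s % 2 = 1 ∨ t % 2 = 1 := by
      by_contra h
      push_neg at h
      have h2s : 2 ∣ s := by omega
      have h2t : 2 ∣ t := by omega
      have := Nat.dvd_gcd h2s h2t
      rw [hst] at this
      omega
    have hdvd : (2 : ℤ) ∣ ((s : ℤ) - 1) * ((t : ℤ) - 1) := by
      rcases hpar with h | h
      · exact dvd_mul_of_dvd_left (by omega) _
      · exact dvd_mul_of_dvd_right (by omega) _
    exact Int.mul_ediv_cancel' hdvd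
  have hwI := lgf_invol s t hnd i
  -- Step 1: B(p') is the conjugate-complement of B(p)
  have hbp' : betaSet p' = {x : ℤ | -1 - x ∉ betaSet p} := by
    ext x
    simp only [betaSet, Set.mem_setOf_eq, hp']
    exact betaConj p x
  -- Step 2: B(r) is the conjugate-complement of B(q)
  have hbr : betaSet r = {y : ℤ | -1 - y ∉ betaSet q} := by
    rw [hr, hbp', hq]
    ext y
    constructor
    · rintro ⟨x, hx, rfl⟩
      simp only [Set.mem_setOf_eq] at hx ⊢
      intro hy
      have hxn : x = -1 - (-1 - x) := by ring
      rw [hxn, lgf_conj s t hnd h2c i (-1 - x)] at hy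
      have e : -1 - (-1 - levelGenFun s t i (-1 - x)) = levelGenFun s t i (-1 - x) := by ring
      rw [e] at hy
      obtain ⟨b, hb, hbe⟩ := hy
      have heq := hwI.injective hbe
      rw [heq] at hb
      exact hx hb
    · intro hy
      simp only [Set.mem_setOf_eq] at hy
      set n := levelGenFun s t i (-1 - y) with hn
      have hwn : levelGenFun s t i n = -1 - y := hwI (-1 - y)
      have hnB : n ∉ betaSet p := fun h => hy ⟨n, h, hwn⟩
      refine ⟨-1 - n, ?_, ?_⟩
      · simp only [Set.mem_setOf_eq]
        have e : -1 - (-1 - n) = n := by ring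
        rw [e]
        exact hnB
      · rw [lgf_conj s t hnd h2c i n, hwn]
        ring
  -- Step 3: ranges equal implies functions equal
  set bR : ℕ → ℤ := fun j => (r.f j : ℤ) - (j + 1) with hbR
  set bC : ℕ → ℤ := fun j => (conjCount q j : ℤ) - (j + 1) with hbC
  have hAnti1 : StrictAnti bR := by
    intro a b hab
    have hf := r.antitone (le_of_lt hab)
    simp only [hbR]
    omega
  have hAnti2 : StrictAnti bC := by
    intro a b hab
    have hf := conj_antitone q (le_of_lt hab)
    simp only [hbC]
    omega
  have hmemr : ∀ x : ℤ, x ∈ betaSet r ↔ ∃ j : ℕ, x = bC j := by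
    intro x
    rw [hbr]
    simp only [Set.mem_setOf_eq, hbC]
    exact (betaConj q x).symm
  have hrange : Set.range bR = Set.range bC := by
    ext x
    simp only [Set.mem_range]
    constructor
    · rintro ⟨k, rfl⟩
      have hmem : bR k ∈ betaSet r := ⟨k, rfl⟩
      obtain ⟨j, hj⟩ := (hmemr (bR k)).mp hmem
      exact ⟨j, hj.symm⟩
    · rintro ⟨k, rfl⟩
      have hmem : bC k ∈ betaSet r := (hmemr (bC k)).mpr ⟨k, rfl⟩
      obtain ⟨j, hj⟩ := hmem
      exact ⟨j, hj.symm⟩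
  have hfun := strictAnti_range_eq hAnti1 hAnti2 hrange
  intro j
  have hj := congrFun hfun j
  simp only [hbR, hbC] at hj
  omega
end

section
/- An s-core λ is self-conjugate if and only if its s-set S(λ) is symmetric, i.e. s-1-x ∈ S(λ) for every x ∈ S(λ). -/
-- ### auxiliary

lemma downclosed_mem_iff (S : Set ℕ) (hfin : S.Finite) (hdc : ∀ a b : ℕ, a ≤ b → b ∈ S → a ∈ S)
    (i : ℕ) : i ∈ S ↔ i < S.ncard := by
  constructor
  · intro hi
    have h1 : Set.Iic i ⊆ S := fun a ha => hdc a i ha hi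
    have := Set.ncard_le_ncard h1 hfin
    rw [← Finset.coe_Iic, Set.ncard_coe_finset, Nat.card_Iic] at this
    omega
  · intro hi
    by_contra hni
    have h1 : S ⊆ Set.Iio i := by
      intro a ha
      by_contra hna
      simp only [Set.mem_Iio, not_lt] at hna
      exact hni (hdc i a hna ha)
    have := Set.ncard_le_ncard h1 (Set.finite_Iio i)
    rw [← Finset.coe_Iio, Set.ncard_coe_finset, Nat.card_Iio] at this
    omega

section Partn
variable (p : Partn)

/-- the beta sequence -/
def bseq (i : ℕ) : ℤ := (p.f i : ℤ) - (i + 1)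

/-- the gap sequence -/
noncomputable def gseq (j : ℕ) : ℤ := (j : ℤ) - conjCount p j

lemma bseq_strictAnti : StrictAnti (bseq p) := by
  apply strictAnti_nat_of_succ_lt
  intro i
  have := p.antitone (Nat.le_succ i); simp only [Nat.succ_eq_add_one] at this
  unfold bseq
  push_cast
  omega

lemma Tj_finite (j : ℕ) : {i : ℕ | j + 1 ≤ p.f i}.Finite := by
  obtain ⟨N, hN⟩ := p.eventually_zero
  apply Set.Finite.subset (Set.finite_Iio N)
  intro i hi
  simp only [Set.mem_setOf_eq] at hi
  simp only [Set.mem_Iio]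
  by_contra h
  have := hN i (by omega)
  omega

lemma gal (i j : ℕ) : j + 1 ≤ p.f i ↔ i + 1 ≤ conjCount p j := by
  have := downclosed_mem_iff {i : ℕ | j + 1 ≤ p.f i} (Tj_finite p j)
    (fun a b hab hb => le_trans hb (p.antitone hab)) i
  simp only [Set.mem_setOf_eq] at this
  rw [this, conjCount]
  omega

lemma conjCount_antitone : Antitone (conjCount p) := by
  intro j j' h
  exact Set.ncard_le_ncard (fun i hi => by simp only [Set.mem_setOf_eq] at *; omega)
    (Tj_finite p j)

lemma conjCount_eq_zero {j : ℕ} (h : p.f 0 ≤ j) : conjCount p j = 0 := by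
  rw [conjCount, Set.ncard_eq_zero (Tj_finite p j)]
  ext i
  simp only [Set.mem_setOf_eq, Set.mem_empty_iff_false, iff_false, not_le]
  have := p.antitone (Nat.zero_le i)
  omega

lemma conjCount_le {N : ℕ} (hN : ∀ i, N ≤ i → p.f i = 0) (j : ℕ) : conjCount p j ≤ N := by
  rw [conjCount]
  have h1 : {i : ℕ | j + 1 ≤ p.f i} ⊆ Set.Iio N := by
    intro i hi
    simp only [Set.mem_setOf_eq] at hi
    simp only [Set.mem_Iio]
    by_contra h
    have := hN i (by omega)
    omega
  have := Set.ncard_le_ncard h1 (Set.finite_Iio N)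
  rw [← Finset.coe_Iio, Set.ncard_coe_finset, Nat.card_Iio] at this
  omega

lemma gseq_strictMono : StrictMono (gseq p) := by
  apply strictMono_nat_of_lt_succ
  intro j
  have := conjCount_antitone p (Nat.le_succ j); simp only [Nat.succ_eq_add_one] at this
  unfold gseq
  push_cast
  omega

lemma bseq_ne_gseq (i j : ℕ) : bseq p i ≠ gseq p j := by
  intro h
  unfold bseq gseq at h
  by_cases hc : j + 1 ≤ p.f i
  · have := (gal p i j).mp hc
    omega
  · have : ¬ (i + 1 ≤ conjCount p j) := fun hh => hc ((gal p i j).mpr hh)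
    omega

lemma cover (n : ℤ) : (∃ i, n = bseq p i) ∨ (∃ j, n = gseq p j) := by
  obtain ⟨N, hN⟩ := p.eventually_zero
  set M := p.f 0 with hM
  by_cases h1 : (M : ℤ) ≤ n
  · right
    refine ⟨n.toNat, ?_⟩
    have hM0 : (0:ℤ) ≤ n := le_trans (by positivity) h1
    have : conjCount p n.toNat = 0 := conjCount_eq_zero p (by omega)
    unfold gseq
    rw [this]
    omega
  · by_cases h2 : n ≤ -(N:ℤ) - 1
    · left
      refine ⟨(-n-1).toNat, ?_⟩
      have h3 : ((-n-1).toNat : ℤ) = -n-1 := Int.toNat_of_nonneg (by omega)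
      have h4 : p.f (-n-1).toNat = 0 := hN _ (by omega)
      unfold bseq
      rw [h4, h3]
      omega
    · -- n ∈ Icc (-N) (M-1)
      push_neg at h1 h2
      have hA : ∀ i ∈ Finset.range N, bseq p i ∈ Finset.Icc (-(N:ℤ)) ((M:ℤ)-1) := by
        intro i hi
        simp only [Finset.mem_range] at hi
        simp only [Finset.mem_Icc]
        have hb := (bseq_strictAnti p).antitone (Nat.zero_le i)
        unfold bseq at hb ⊢
        rw [← hM] at hb
        constructor
        · have : (0:ℤ) ≤ p.f i := by positivity
          omega
        · omega
      have hC : ∀ j ∈ Finset.range M, gseq p j ∈ Finset.Icc (-(N:ℤ)) ((M:ℤ)-1) := by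
        intro j hj
        simp only [Finset.mem_range] at hj
        simp only [Finset.mem_Icc]
        have hc := conjCount_le p hN j
        unfold gseq
        omega
      set A := (Finset.range N).image (bseq p) with hAdef
      set C := (Finset.range M).image (gseq p) with hCdef
      have hCardA : A.card = N := by
        rw [hAdef, Finset.card_image_of_injective _ (bseq_strictAnti p).injective,
          Finset.card_range]
      have hCardC : C.card = M := by
        rw [hCdef, Finset.card_image_of_injective _ (gseq_strictMono p).injective,
          Finset.card_range]
      have hdisj : Disjoint A C := by
        rw [Finset.disjoint_left]
        intro a ha hc
        simp only [hAdef, hCdef, Finset.mem_image] at ha hc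
        obtain ⟨i, _, hi⟩ := ha
        obtain ⟨j, _, hj⟩ := hc
        exact bseq_ne_gseq p i j (hi.trans hj.symm)
      have hsub : A ∪ C ⊆ Finset.Icc (-(N:ℤ)) ((M:ℤ)-1) := by
        intro x hx
        rcases Finset.mem_union.mp hx with hx | hx <;>
          simp only [hAdef, hCdef, Finset.mem_image] at hx <;>
          obtain ⟨i, hi, rfl⟩ := hx
        · exact hA i hi
        · exact hC i hi
      have hcardJ : (Finset.Icc (-(N:ℤ)) ((M:ℤ)-1)).card = N + M := by
        rw [Int.card_Icc]
        omega
      have hcardU : (A ∪ C).card = N + M := by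
        rw [Finset.card_union_of_disjoint hdisj, hCardA, hCardC]
      have heq : A ∪ C = Finset.Icc (-(N:ℤ)) ((M:ℤ)-1) :=
        Finset.eq_of_subset_of_card_le hsub (by omega)
      have hnmem : n ∈ A ∪ C := by
        rw [heq]
        simp only [Finset.mem_Icc]
        omega
      rcases Finset.mem_union.mp hnmem with hx | hx <;>
        simp only [hAdef, hCdef, Finset.mem_image] at hx <;>
        obtain ⟨i, _, hi⟩ := hx
      · exact Or.inl ⟨i, hi.symm⟩
      · exact Or.inr ⟨i, hi.symm⟩

lemma not_mem_beta_iff (n : ℤ) : n ∉ betaSet p ↔ ∃ j, n = gseq p j := by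
  constructor
  · intro hn
    rcases cover p n with h | h
    · exact absurd (by obtain ⟨i, hi⟩ := h; exact ⟨i, hi⟩) hn
    · exact h
  · rintro ⟨j, rfl⟩ ⟨i, hi⟩
    exact bseq_ne_gseq p i j (hi.symm)

noncomputable def cseq (j : ℕ) : ℤ := (conjCount p j : ℤ) - (j + 1)

lemma cseq_strictAnti : StrictAnti (cseq p) := by
  apply strictAnti_nat_of_succ_lt
  intro j
  have := conjCount_antitone p (Nat.le_succ j)
  simp only [Nat.succ_eq_add_one] at this
  unfold cseq
  push_cast
  omega

lemma mem_range_cseq_iff (m : ℤ) : m ∈ Set.range (cseq p) ↔ -1 - m ∉ betaSet p := by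
  rw [not_mem_beta_iff]
  constructor
  · rintro ⟨j, rfl⟩
    exact ⟨j, by unfold gseq cseq; ring⟩
  · rintro ⟨j, hj⟩
    exact ⟨j, by unfold gseq at hj; unfold cseq; omega⟩

end Partn

lemma strictAnti_le_of_range_subset {g h : ℕ → ℤ} (hg : StrictAnti g) (hh : StrictAnti h)
    (hr : Set.range g ⊆ Set.range h) (j : ℕ) : g j ≤ h j := by
  by_contra hlt
  push_neg at hlt
  choose k hk using fun i => hr (Set.mem_range_self (f := g) i)
  have hkj : ∀ i ≤ j, k i < j := by
    intro i hi
    have h1 : h j < h (k i) := by rw [hk i]; exact lt_of_lt_of_le hlt (hg.antitone hi)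
    exact (hh.lt_iff_gt).mp h1
  have hinj : Set.InjOn k (Finset.range (j+1)) := by
    intro a _ b _ hab
    apply hg.injective
    rw [← hk a, ← hk b, hab]
  have hcard := Finset.card_le_card_of_injOn k
    (fun i hi => Finset.mem_range.mpr (hkj i (by have := Finset.mem_range.mp hi; omega))) hinj
  simp only [Finset.card_range] at hcard
  omega

lemma strictAnti_range_eq_s16 {g h : ℕ → ℤ} (hg : StrictAnti g) (hh : StrictAnti h)
    (hr : Set.range g = Set.range h) (j : ℕ) : g j = h j :=
  le_antisymm (strictAnti_le_of_range_subset hg hh hr.le j)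
    (strictAnti_le_of_range_subset hh hg hr.ge j)

lemma mem_beta_iff_bseq (p : Partn) (n : ℤ) : n ∈ betaSet p ↔ n ∈ Set.range (bseq p) := by
  constructor
  · rintro ⟨i, rfl⟩; exact ⟨i, rfl⟩
  · rintro ⟨i, rfl⟩; exact ⟨i, rfl⟩

lemma selfConj_iff_beta_sym (p : Partn) :
    SelfConj p ↔ ∀ n : ℤ, n ∈ betaSet p ↔ -1 - n ∉ betaSet p := by
  constructor
  · intro hsc n
    have hbc : bseq p = cseq p := by
      funext j
      unfold bseq cseq
      rw [hsc j]
    rw [mem_beta_iff_bseq, hbc, mem_range_cseq_iff]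
  · intro hsym j
    have hrange : Set.range (bseq p) = Set.range (cseq p) := by
      ext m
      rw [← mem_beta_iff_bseq, mem_range_cseq_iff]
      have := hsym (-1 - m)
      rw [show -1 - (-1 - m) = m by ring] at this
      tauto
    have := strictAnti_range_eq_s16 (bseq_strictAnti p) (cseq_strictAnti p) hrange j
    unfold bseq cseq at this
    omega

lemma gseq_lt_bseq_iff (p : Partn) (r c : ℕ) : gseq p c < bseq p r ↔ c < p.f r := by
  unfold gseq bseq
  constructor
  · intro h
    by_contra hc
    push_neg at hc
    have h2 : ¬ (r + 1 ≤ conjCount p c) := fun hh => by have := (gal p r c).mpr hh; omega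
    omega
  · intro h
    have := (gal p r c).mp h
    omega

lemma core_downclosed {s : ℕ} (hs : 2 ≤ s) {p : Partn} (hp : IsCore s p) :
    ∀ n ∈ betaSet p, n - s ∈ betaSet p := by
  intro n hn
  by_contra hns
  obtain ⟨r, rfl⟩ := hn
  have hb : ((p.f r : ℤ) - (r + 1)) = bseq p r := rfl
  rw [hb] at hns
  obtain ⟨c, hc⟩ := (not_mem_beta_iff p _).mp hns
  have hlt : gseq p c < bseq p r := by rw [← hc]; omega
  have hcf : c < p.f r := (gseq_lt_bseq_iff p r c).mp hlt
  apply hp r c hcf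
  have heq : hookLen p r c = bseq p r - gseq p c := by unfold hookLen bseq gseq; ring
  rw [heq, ← hc]
  exact ⟨1, by ring⟩

lemma downclosed_iter {s : ℕ} {p : Partn} (hdc : ∀ n ∈ betaSet p, n - s ∈ betaSet p)
    (n : ℤ) (hn : n ∈ betaSet p) (k : ℕ) : n - k * s ∈ betaSet p := by
  induction k with
  | zero => simpa using hn
  | succ k ih =>
    have := hdc _ ih
    have heq : n - (k + 1 : ℕ) * s = (n - k * s) - s := by push_cast; ring
    rw [heq]
    exact this

lemma beta_le (p : Partn) (n : ℤ) (hn : n ∈ betaSet p) : n ≤ (p.f 0 : ℤ) - 1 := by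
  obtain ⟨i, rfl⟩ := hn
  have h1 := p.antitone (Nat.zero_le i)
  have : (p.f i : ℤ) ≤ (p.f 0 : ℤ) := by exact_mod_cast h1
  omega

lemma neg_mem_beta (p : Partn) {N : ℕ} (hN : ∀ i, N ≤ i → p.f i = 0) (n : ℤ)
    (hn : n ≤ -(N:ℤ) - 1) : n ∈ betaSet p := by
  refine ⟨(-n-1).toNat, ?_⟩
  have h3 : ((-n-1).toNat : ℤ) = -n-1 := Int.toNat_of_nonneg (by omega)
  have h4 : p.f (-n-1).toNat = 0 := hN _ (by omega)
  rw [h4, h3]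
  omega

lemma exists_sSet_class (s : ℕ) (hs : 2 ≤ s) (p : Partn)
    (hdc : ∀ n ∈ betaSet p, n - s ∈ betaSet p) (n : ℤ) :
    ∃ u ∈ sSet s p, (s:ℤ) ∣ u - n := by
  classical
  obtain ⟨N, hN⟩ := p.eventually_zero
  set K : ℕ := (n + N + 1).toNat with hK
  set m : ℤ := n - K * s with hm
  have hKge : (K : ℤ) ≥ n + N + 1 := Int.self_le_toNat _
  have hKs : (K : ℤ) * s ≥ K := by
    have : (1:ℤ) * K ≤ (s:ℤ) * K := by
      apply mul_le_mul_of_nonneg_right (by exact_mod_cast Nat.one_le_of_lt hs) (by positivity)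
    linarith [this]
  have hmB : m ∈ betaSet p := neg_mem_beta p hN m (by omega)
  have hP : ∃ k : ℕ, m + k * s ∉ betaSet p := by
    refine ⟨(p.f 0 - m).toNat, ?_⟩
    intro hmem
    have h1 := beta_le p _ hmem
    have h2 : ((p.f 0 - m).toNat : ℤ) ≥ p.f 0 - m := Int.self_le_toNat _
    have h3 : ((p.f 0 - m).toNat : ℤ) * s ≥ ((p.f 0 - m).toNat : ℤ) := by
      have : (1:ℤ) * ((p.f 0 - m).toNat : ℤ) ≤ (s:ℤ) * ((p.f 0 - m).toNat : ℤ) := by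
        apply mul_le_mul_of_nonneg_right (by exact_mod_cast Nat.one_le_of_lt hs) (by positivity)
      linarith [this]
    omega
  set k0 : ℕ := Nat.find hP with hk0
  have hk0spec : m + k0 * s ∉ betaSet p := Nat.find_spec hP
  have hk0ne : k0 ≠ 0 := by
    intro h
    apply hk0spec
    rw [h]
    simpa using hmB
  have hk0prev : m + (k0 - 1 : ℕ) * s ∈ betaSet p := by
    by_contra h
    exact absurd (Nat.find_min hP (show k0 - 1 < k0 by omega)) (by simpa using h)
  refine ⟨m + k0 * s, ⟨?_, hk0spec⟩, ?_⟩
  · have : ((k0 - 1 : ℕ) : ℤ) = (k0 : ℤ) - 1 := by omega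
    rw [this] at hk0prev
    have heq : m + (k0:ℤ) * s - s = m + ((k0:ℤ) - 1) * s := by ring
    rw [heq]
    exact hk0prev
  · refine ⟨(k0 : ℤ) - K, ?_⟩
    rw [hm]
    ring

lemma mem_beta_iff_lt (s : ℕ) (hs : 2 ≤ s) (p : Partn)
    (hdc : ∀ n ∈ betaSet p, n - s ∈ betaSet p) (u : ℤ) (hu : u ∈ sSet s p) (m : ℤ)
    (hmod : (s:ℤ) ∣ u - m) : m ∈ betaSet p ↔ m < u := by
  obtain ⟨hu1, hu2⟩ := hu
  obtain ⟨k, hk⟩ := hmod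
  constructor
  · intro hm
    by_contra hlt
    push_neg at hlt
    -- u ≤ m, u = m - k' * s with k' = -k ≥ 0
    have hkneg : k ≤ 0 := by
      by_contra hkpos
      push_neg at hkpos
      have : (s:ℤ) * 1 ≤ (s:ℤ) * k := by
        apply mul_le_mul_of_nonneg_left (by omega) (by positivity)
      omega
    have h1 : ((-k).toNat : ℤ) = -k := Int.toNat_of_nonneg (by omega)
    have := downclosed_iter hdc m hm (-k).toNat
    rw [h1] at this
    have heq : m - (-k) * s = u := by linear_combination -hk
    rw [heq] at this
    exact hu2 this
  · intro hlt
    have hkpos : 1 ≤ k := by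
      by_contra hkn
      push_neg at hkn
      have : (s:ℤ) * k ≤ (s:ℤ) * 0 := by
        apply mul_le_mul_of_nonneg_left (by omega) (by positivity)
      omega
    have h1 : ((k-1).toNat : ℤ) = k - 1 := Int.toNat_of_nonneg (by omega)
    have := downclosed_iter hdc (u - s) hu1 (k-1).toNat
    rw [h1] at this
    have heq : u - s - (k - 1) * s = m := by
      have : (s:ℤ) * k = u - m := hk.symm
      nlinarith [this]
    rw [heq] at this
    exact this

/-- An `s`-core is self-conjugate iff its `s`-set is symmetric:
`s - 1 - x ∈ S(λ)` for every `x ∈ S(λ)`. -/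
theorem selfConj_iff_sym_sSet (s : ℕ) (hs : 2 ≤ s) (p : Partn) (hp : IsCore s p) :
    SelfConj p ↔ ∀ x ∈ sSet s p, (s : ℤ) - 1 - x ∈ sSet s p := by
  rw [selfConj_iff_beta_sym]
  have hdc := core_downclosed hs hp
  constructor
  · intro hsym x hx
    obtain ⟨hx1, hx2⟩ := hx
    constructor
    · have h1 : -1 - x ∈ betaSet p := by
        by_contra h
        exact hx2 ((hsym x).mpr (by simpa using h))
      have heq : (s:ℤ) - 1 - x - s = -1 - x := by ring
      rw [heq]
      exact h1
    · have h2 : -1 - (x - s) ∉ betaSet p := (hsym (x - s)).mp hx1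
      have heq : (s:ℤ) - 1 - x = -1 - (x - s) := by ring
      rw [heq]
      exact h2
  · intro hS n
    obtain ⟨u, hu, hdvd⟩ := exists_sSet_class s hs p hdc n
    have hu' : (s:ℤ) - 1 - u ∈ sSet s p := hS u hu
    have hdvd' : (s:ℤ) ∣ ((s:ℤ) - 1 - u) - (-1 - n) := by
      obtain ⟨k, hk⟩ := hdvd
      exact ⟨1 - k, by linear_combination -hk⟩
    rw [mem_beta_iff_lt s hs p hdc u hu n hdvd,
      mem_beta_iff_lt s hs p hdc _ hu' (-1 - n) hdvd']
    obtain ⟨k, hk⟩ := hdvd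
    constructor
    · intro h1 h2
      -- n < u and -1-n < s-1-u : 0 < u - n < s, u - n = s*k
      have hk1 : 1 ≤ k := by
        by_contra hc
        push_neg at hc
        have : (s:ℤ) * k ≤ (s:ℤ) * 0 := mul_le_mul_of_nonneg_left (by omega) (by positivity)
        omega
      have : (s:ℤ) * 1 ≤ (s:ℤ) * k := mul_le_mul_of_nonneg_left (by omega) (by positivity)
      omega
    · intro h
      push_neg at h
      omega
end

section
/- The number of self-conjugate s-cores λ such that k - l < Ns for all k, l in the s-set of λ equals N^{⌊s/2⌋}. -/
namespace SCC

/-! ### Basic beta-set facts -/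

def pbeta (p : Partn) (i : ℕ) : ℤ := (p.f i : ℤ) - (i + 1)

lemma pbeta_strictAnti (p : Partn) : StrictAnti (pbeta p) := by
  apply strictAnti_nat_of_succ_lt
  intro n
  have h : p.f (n + 1) ≤ p.f n := p.antitone (Nat.le_succ n)
  unfold pbeta
  push_cast
  omega

lemma betaSet_eq_range (p : Partn) : betaSet p = Set.range (pbeta p) := by
  ext x
  simp [betaSet, pbeta, Set.range, eq_comm]

lemma lower_eq_Iio (S : Set ℕ) (hfin : S.Finite)
    (hlow : ∀ i j : ℕ, i ≤ j → j ∈ S → i ∈ S) : S = Set.Iio S.ncard := by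
  have hne : Sᶜ.Nonempty := by
    by_contra h
    rw [Set.not_nonempty_iff_eq_empty, Set.compl_empty_iff] at h
    exact (Set.infinite_univ (α := ℕ)) (h ▸ hfin)
  obtain ⟨n, hmemc, hminc⟩ : ∃ n, n ∈ Sᶜ ∧ ∀ m, m < n → m ∉ Sᶜ :=
    ⟨sInf Sᶜ, Nat.sInf_mem hne, fun m hm hmc => absurd (Nat.sInf_le hmc) (by omega)⟩
  have hSeq : S = Set.Iio n := by
    ext x
    simp only [Set.mem_Iio]
    constructor
    · intro hx
      by_contra hxn
      push_neg at hxn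
      exact hmemc (hlow n x hxn hx)
    · intro hx
      by_contra hxS
      exact (hminc x hx) hxS
  have hcard : S.ncard = n := by
    rw [hSeq, ← Finset.coe_range, Set.ncard_coe_finset, Finset.card_range]
  rw [hcard, hSeq]

lemma rowcol (p : Partn) (r c : ℕ) : c < p.f r ↔ r < conjCount p c := by
  obtain ⟨M, hM⟩ := p.eventually_zero
  have hfin : ({i : ℕ | c + 1 ≤ p.f i}).Finite := by
    apply Set.Finite.subset (Set.finite_Iio M)
    intro i hi
    simp only [Set.mem_setOf_eq] at hi
    by_contra h
    simp only [Set.mem_Iio, not_lt] at h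
    rw [hM i h] at hi
    omega
  have hlow : ∀ i j : ℕ, i ≤ j → j ∈ {i : ℕ | c + 1 ≤ p.f i} → i ∈ {i : ℕ | c + 1 ≤ p.f i} := by
    intro i j hij hj
    exact le_trans hj (p.antitone hij)
  have hset := lower_eq_Iio _ hfin hlow
  have hcc : conjCount p c = {i : ℕ | c + 1 ≤ p.f i}.ncard := rfl
  rw [hcc]
  constructor
  · intro h
    have hr : r ∈ {i : ℕ | c + 1 ≤ p.f i} := h
    rw [hset] at hr
    exact hr
  · intro h
    have hr : r ∈ Set.Iio ({i : ℕ | c + 1 ≤ p.f i}.ncard) := h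
    rw [← hset] at hr
    exact hr

lemma conj_succ_le (p : Partn) (c : ℕ) : conjCount p (c + 1) ≤ conjCount p c := by
  by_contra h
  push_neg at h
  have h2 : c + 1 < p.f (conjCount p c) := (rowcol p _ (c+1)).2 h
  have h3 : conjCount p c < conjCount p c := (rowcol p _ c).1 (by omega)
  omega

noncomputable def gfun (p : Partn) (c : ℕ) : ℤ := (c : ℤ) - conjCount p c

lemma gfun_strictMono (p : Partn) : StrictMono (gfun p) := by
  apply strictMono_nat_of_lt_succ
  intro n
  have := conj_succ_le p n
  unfold gfun
  push_cast
  omega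

lemma strictMono_int_le {g : ℕ → ℤ} (hg : StrictMono g) (i j : ℕ) (h : i ≤ j) :
    g i + ((j - i : ℕ) : ℤ) ≤ g j := by
  induction j with
  | zero =>
    have : i = 0 := by omega
    subst this
    simp
  | succ n ih =>
    rcases Nat.eq_or_lt_of_le h with h1 | h1
    · subst h1
      simp
    · have h2 : i ≤ n := by omega
      have h3 := ih h2
      have h4 : g n < g (n+1) := hg (by omega)
      omega

lemma gfun_lt_pbeta (p : Partn) (r c : ℕ) : gfun p c < pbeta p r ↔ c < p.f r := by
  unfold gfun pbeta
  constructor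
  · intro h
    by_contra hc
    have h2 : ¬ r < conjCount p c := fun hh => hc ((rowcol p r c).2 hh)
    push_neg at h2
    have h4 : (conjCount p c : ℤ) ≤ r := by exact_mod_cast h2
    push_neg at hc
    have h5 : (p.f r : ℤ) ≤ c := by exact_mod_cast hc
    omega
  · intro h
    have h2 : r < conjCount p c := (rowcol p r c).1 h
    have h3 : (r : ℤ) < conjCount p c := by exact_mod_cast h2
    have h4 : (c : ℤ) < p.f r := by exact_mod_cast h
    omega

lemma gfun_not_mem (p : Partn) (c : ℕ) : gfun p c ∉ betaSet p := by
  rw [betaSet_eq_range]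
  rintro ⟨r, hr⟩
  rcases lt_or_ge c (p.f r) with h | h
  · have := (gfun_lt_pbeta p r c).2 h
    omega
  · have h3 : ¬ r < conjCount p c := fun hh => by
      have := (rowcol p r c).2 hh; omega
    push_neg at h3
    have h4 : (conjCount p c : ℤ) ≤ r := by exact_mod_cast h3
    have h5 : (p.f r : ℤ) ≤ c := by exact_mod_cast h
    unfold gfun pbeta at hr
    omega

lemma low_mem (p : Partn) (x : ℤ) (hx : x < -(conjCount p 0 : ℤ)) : x ∈ betaSet p := by
  rw [betaSet_eq_range]
  refine ⟨(-x - 1).toNat, ?_⟩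
  have htn : ((-x - 1).toNat : ℤ) = -x - 1 := Int.toNat_of_nonneg (by omega)
  have hf : p.f ((-x-1).toNat) = 0 := by
    by_contra h
    have h1 : 0 < p.f ((-x-1).toNat) := Nat.pos_of_ne_zero h
    have h2 := (rowcol p ((-x-1).toNat) 0).1 h1
    omega
  unfold pbeta
  rw [hf]
  push_cast
  omega

lemma not_mem_betaSet_iff (p : Partn) (x : ℤ) :
    x ∉ betaSet p ↔ ∃ c : ℕ, x = gfun p c := by
  constructor
  · intro hx
    by_cases hlow : x < -(conjCount p 0 : ℤ)
    · exact absurd (low_mem p x hlow) hx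
    push_neg at hlow
    have h0 : gfun p 0 ≤ x := by unfold gfun; push_cast; omega
    have hev : ∃ n, x < gfun p n := by
      refine ⟨(x - gfun p 0).toNat + 1, ?_⟩
      have h1 := strictMono_int_le (gfun_strictMono p) 0 ((x - gfun p 0).toNat + 1) (by omega)
      have h2 : x - gfun p 0 ≤ ((x - gfun p 0).toNat : ℤ) := Int.self_le_toNat _
      omega
    classical
    set n₀ := Nat.find hev with hn₀
    have hspec : x < gfun p n₀ := Nat.find_spec hev
    have hne0 : n₀ ≠ 0 := by
      intro h
      rw [h] at hspec
      omega
    set c := n₀ - 1 with hc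
    have hcs : c + 1 = n₀ := by omega
    have hle : gfun p c ≤ x := by
      by_contra h
      push_neg at h
      exact absurd (Nat.find_min hev (m := c) (by omega)) (by simpa using h)
    have hlt : x < gfun p (c + 1) := by rw [hcs]; exact hspec
    rcases eq_or_lt_of_le hle with heq | hlt2
    · exact ⟨c, heq.symm⟩
    exfalso
    have hg1 : x < (c:ℤ) + 1 - conjCount p (c+1) := by
      unfold gfun at hlt; push_cast at hlt; omega
    have hr0 : (0:ℤ) ≤ (c:ℤ) - x := by
      have : (0:ℤ) ≤ conjCount p (c+1) := by positivity
      omega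
    set r := ((c:ℤ) - x).toNat with hrdef
    have hrc : (r : ℤ) = (c:ℤ) - x := Int.toNat_of_nonneg hr0
    have hnlt : ¬ r < conjCount p (c+1) := by
      intro h
      have : (r:ℤ) < conjCount p (c+1) := by exact_mod_cast h
      omega
    have hfle : p.f r ≤ c + 1 := by
      by_contra h
      push_neg at h
      exact hnlt ((rowcol p r (c+1)).1 h)
    have hrlt : r < conjCount p c := by
      unfold gfun at hlt2
      have : (r:ℤ) < conjCount p c := by omega
      exact_mod_cast this
    have hfgt : c < p.f r := (rowcol p r c).2 hrlt
    have hfr : p.f r = c + 1 := by omega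
    apply hx
    rw [betaSet_eq_range]
    refine ⟨r, ?_⟩
    unfold pbeta
    rw [hfr]
    push_cast
    omega
  · rintro ⟨c, rfl⟩
    exact gfun_not_mem p c

end SCC
namespace SCC

/-! ### Enumeration uniqueness -/

lemma strictMono_eq_of_range_eq {g1 g2 : ℕ → ℤ} (h1 : StrictMono g1) (h2 : StrictMono g2)
    (h : Set.range g1 = Set.range g2) : g1 = g2 := by
  have key : ∀ (f1 f2 : ℕ → ℤ), StrictMono f1 → StrictMono f2 → Set.range f1 = Set.range f2 →
      ∀ n : ℕ, (∀ k, k < n → f1 k = f2 k) → f2 n ≤ f1 n := by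
    intro f1 f2 hf1 hf2 hr n ih
    have : f1 n ∈ Set.range f2 := hr ▸ Set.mem_range_self n
    obtain ⟨m, hm⟩ := this
    rcases lt_or_ge m n with hmn | hmn
    · exfalso
      have := ih m hmn
      have h3 : f1 m = f1 n := by omega
      have := hf1.injective h3
      omega
    · calc f2 n ≤ f2 m := hf2.monotone hmn
        _ = f1 n := hm
  funext n
  induction n using Nat.strong_induction_on with
  | _ n ih =>
    have ha := key g1 g2 h1 h2 h n ih
    have hb := key g2 g1 h2 h1 h.symm n (fun k hk => (ih k hk).symm)
    omega

lemma betaSet_injective : Function.Injective betaSet := by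
  intro p q hpq
  have h1 : StrictMono (fun n => -(pbeta p n)) := fun a b hab => by
    have := pbeta_strictAnti p hab; simpa using this
  have h2 : StrictMono (fun n => -(pbeta q n)) := fun a b hab => by
    have := pbeta_strictAnti q hab; simpa using this
  have hr : Set.range (fun n => -(pbeta p n)) = Set.range (fun n => -(pbeta q n)) := by
    have : Set.range (pbeta p) = Set.range (pbeta q) := by
      rw [← betaSet_eq_range, ← betaSet_eq_range, hpq]
    ext x
    simp only [Set.mem_range]
    constructor
    · rintro ⟨y, hy⟩
      have : pbeta p y ∈ Set.range (pbeta q) := this ▸ Set.mem_range_self y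
      obtain ⟨z, hz⟩ := this
      exact ⟨z, by omega⟩
    · rintro ⟨y, hy⟩
      have : pbeta q y ∈ Set.range (pbeta p) := this.symm ▸ Set.mem_range_self y
      obtain ⟨z, hz⟩ := this
      exact ⟨z, by omega⟩
  have heq := strictMono_eq_of_range_eq h1 h2 hr
  have hfeq : p.f = q.f := by
    funext i
    have := congrFun heq i
    unfold pbeta at this
    omega
  cases p; cases q
  simpa using hfeq

/-! ### Core characterization -/

lemma hookLen_eq (p : Partn) (r c : ℕ) : hookLen p r c = pbeta p r - gfun p c := by
  unfold hookLen pbeta gfun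
  ring

lemma closure_iter (p : Partn) (s : ℕ) (hcl : ∀ x ∈ betaSet p, x - s ∈ betaSet p)
    (x : ℤ) (hx : x ∈ betaSet p) (k : ℕ) : x - k * s ∈ betaSet p := by
  induction k with
  | zero => simpa using hx
  | succ n ih =>
    have := hcl _ ih
    have he : x - (n+1 : ℕ) * s = (x - n * s) - s := by push_cast; ring
    rw [he]
    exact this

lemma isCore_iff (s : ℕ) (hs : 1 ≤ s) (p : Partn) :
    IsCore s p ↔ ∀ x ∈ betaSet p, x - s ∈ betaSet p := by
  constructor
  · intro hcore x hx
    by_contra hns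
    rw [betaSet_eq_range] at hx
    obtain ⟨r, hr⟩ := hx
    obtain ⟨c, hc⟩ := (not_mem_betaSet_iff p (x - s)).1 hns
    have hlt : gfun p c < pbeta p r := by omega
    have hcf : c < p.f r := (gfun_lt_pbeta p r c).1 hlt
    apply hcore r c hcf
    rw [hookLen_eq]
    have : pbeta p r - gfun p c = s := by omega
    rw [this]
  · intro hcl r c hcf hdvd
    rw [hookLen_eq] at hdvd
    have hpos : 0 < pbeta p r - gfun p c := by
      have := (gfun_lt_pbeta p r c).2 hcf
      omega
    obtain ⟨k, hk⟩ := hdvd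
    have hkpos : 0 < k := by
      rcases le_or_gt k 0 with h | h
      · have : (s:ℤ) * k ≤ 0 := mul_nonpos_of_nonneg_of_nonpos (by positivity) h
        omega
      · exact h
    have hmem : pbeta p r - (k.toNat : ℕ) * s ∈ betaSet p := by
      apply closure_iter p s hcl
      rw [betaSet_eq_range]
      exact ⟨r, rfl⟩
    have hkn : ((k.toNat : ℕ) : ℤ) = k := Int.toNat_of_nonneg (by omega)
    have : gfun p c ∈ betaSet p := by
      have he : gfun p c = pbeta p r - (k.toNat : ℕ) * s := by
        push_cast
        rw [hkn, mul_comm]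
        linarith [hk]
      rw [he]
      exact hmem
    exact gfun_not_mem p c this

/-! ### Self-conjugate characterization -/

lemma selfConj_iff (p : Partn) :
    SelfConj p ↔ ∀ x : ℤ, x ∈ betaSet p ↔ (-1 - x) ∉ betaSet p := by
  constructor
  · intro hsc x
    constructor
    · intro hx
      rw [betaSet_eq_range] at hx
      obtain ⟨r, hr⟩ := hx
      rw [not_mem_betaSet_iff]
      refine ⟨r, ?_⟩
      unfold gfun
      rw [← hsc r]
      unfold pbeta at hr
      omega
    · intro hx
      rw [not_mem_betaSet_iff] at hx
      obtain ⟨c, hc⟩ := hx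
      rw [betaSet_eq_range]
      refine ⟨c, ?_⟩
      unfold gfun at hc
      rw [← hsc c] at hc
      unfold pbeta
      omega
  · intro hsym
    have h2 : StrictMono (fun c : ℕ => (c:ℤ) - p.f c) := by
      apply strictMono_nat_of_lt_succ
      intro n
      have h : p.f (n+1) ≤ p.f n := p.antitone (Nat.le_succ n)
      show (n:ℤ) - p.f n < ((n+1 : ℕ):ℤ) - p.f (n+1)
      push_cast
      omega
    have hr : Set.range (gfun p) = Set.range (fun c : ℕ => (c:ℤ) - p.f c) := by
      ext x
      constructor
      · rintro ⟨c, rfl⟩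
        have hnm : gfun p c ∉ betaSet p := gfun_not_mem p c
        have : -1 - gfun p c ∈ betaSet p := by
          by_contra h
          exact hnm ((hsym (gfun p c)).2 h)
        rw [betaSet_eq_range] at this
        obtain ⟨i, hi⟩ := this
        refine ⟨i, ?_⟩
        show (i:ℤ) - p.f i = gfun p c
        unfold pbeta at hi
        unfold gfun at *
        omega
      · rintro ⟨c, rfl⟩
        show (c:ℤ) - p.f c ∈ Set.range (gfun p)
        have hmem : pbeta p c ∈ betaSet p := by
          rw [betaSet_eq_range]; exact ⟨c, rfl⟩
        have hnm : -1 - pbeta p c ∉ betaSet p := (hsym (pbeta p c)).1 hmem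
        rw [not_mem_betaSet_iff] at hnm
        obtain ⟨d, hd⟩ := hnm
        have he : (c:ℤ) - p.f c = gfun p d := by
          unfold pbeta at hd
          omega
        rw [he]
        exact ⟨d, rfl⟩
    have heq := strictMono_eq_of_range_eq (gfun_strictMono p) h2 hr
    intro j
    have h3 : (j:ℤ) - conjCount p j = (j:ℤ) - p.f j := congrFun heq j
    omega

end SCC
namespace SCC

/-! ### Constructing a partition from a symmetric set -/

lemma exists_partn (B : Set ℤ) (M : ℕ)
    (hlow : ∀ x : ℤ, x < -(M:ℤ) → x ∈ B)
    (hhigh : ∀ x : ℤ, (M:ℤ) ≤ x → x ∉ B)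
    (hsym : ∀ x : ℤ, x ∈ B ↔ (-1 - x) ∉ B) :
    ∃ p : Partn, betaSet p = B := by
  classical
  set I : Finset ℤ := Finset.Ico (-(M:ℤ)) (M:ℤ) with hI
  set T : Finset ℤ := I.filter (· ∈ B) with hT
  set T' : Finset ℤ := I.filter (· ∉ B) with hT'
  have hIcard : I.card = 2 * M := by
    rw [hI, Int.card_Ico]
    omega
  have hsplit : T.card + T'.card = 2 * M := by
    rw [hT, hT', Finset.card_filter_add_card_filter_not, hIcard]
  have hbij : T.card = T'.card := by
    apply Finset.card_bij (fun x _ => -1 - x)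
    · intro a ha
      rw [hT] at ha
      rw [hT']
      simp only [Finset.mem_filter, hI, Finset.mem_Ico] at ha ⊢
      obtain ⟨⟨ha1, ha2⟩, ha3⟩ := ha
      exact ⟨⟨by omega, by omega⟩, (hsym a).1 ha3⟩
    · intro a _ b _ hab
      omega
    · intro b hb
      rw [hT'] at hb
      simp only [Finset.mem_filter, hI, Finset.mem_Ico] at hb
      obtain ⟨⟨hb1, hb2⟩, hb3⟩ := hb
      refine ⟨-1 - b, ?_, by ring⟩
      rw [hT]
      simp only [Finset.mem_filter, hI, Finset.mem_Ico]
      refine ⟨⟨by omega, by omega⟩, ?_⟩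
      rw [hsym (-1 - b)]
      simpa using hb3
  have hTcard : T.card = M := by omega
  set e := T.orderIsoOfFin hTcard with he
  have hTmemB : ∀ x ∈ T, x ∈ B := by
    intro x hx
    rw [hT] at hx
    simp only [Finset.mem_filter] at hx
    exact hx.2
  have hTmemI : ∀ x ∈ T, -(M:ℤ) ≤ x ∧ x < M := by
    intro x hx
    rw [hT] at hx
    simp only [Finset.mem_filter, hI, Finset.mem_Ico] at hx
    exact hx.1
  set β : ℕ → ℤ := fun i => if h : i < M then (e ⟨M - 1 - i, by omega⟩ : ℤ) else -((i:ℤ)+1)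
    with hβ
  have hkey : ∀ j : ℕ, ∀ hj : j < M, (e ⟨0, by omega⟩ : ℤ) + j ≤ (e ⟨j, hj⟩ : ℤ) := by
    intro j
    induction j with
    | zero => intro hj; simp
    | succ n ih =>
      intro hj
      have h1 := ih (by omega)
      have h2 : (e ⟨n, by omega⟩ : T) < e ⟨n+1, hj⟩ := by
        apply e.strictMono
        simp [Fin.lt_def]
      have h3 : (e ⟨n, by omega⟩ : ℤ) < (e ⟨n+1, hj⟩ : ℤ) := h2
      push_cast
      omega
  have hβlb : ∀ i : ℕ, -((i:ℤ)+1) ≤ β i := by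
    intro i
    simp only [hβ]
    by_cases h : i < M
    · rw [dif_pos h]
      have h1 := hkey (M - 1 - i) (by omega)
      have h2 := (hTmemI _ (e ⟨0, by omega⟩).2).1
      have h3 : ((M - 1 - i : ℕ) : ℤ) = (M:ℤ) - 1 - i := by omega
      omega
    · rw [dif_neg h]
  have hβanti : StrictAnti β := by
    apply strictAnti_nat_of_succ_lt
    intro n
    simp only [hβ]
    by_cases h1 : n + 1 < M
    · rw [dif_pos h1, dif_pos (by omega)]
      have : (e ⟨M - 1 - (n+1), by omega⟩ : T) < e ⟨M - 1 - n, by omega⟩ := by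
        apply e.strictMono
        simp only [Fin.lt_def]
        omega
      exact this
    · by_cases h2 : n < M
      · rw [dif_neg h1, dif_pos h2]
        have h3 := (hTmemI _ (e ⟨M - 1 - n, by omega⟩).2).1
        push_cast
        omega
      · rw [dif_neg h1, dif_neg h2]
        push_cast
        omega
  have hrange : Set.range β = B := by
    ext x
    constructor
    · rintro ⟨i, rfl⟩
      simp only [hβ]
      by_cases h : i < M
      · rw [dif_pos h]
        exact hTmemB _ (e ⟨M - 1 - i, by omega⟩).2
      · rw [dif_neg h]
        apply hlow
        push_cast
        omega
    · intro hx
      have hxM : x < M := by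
        by_contra h
        push_neg at h
        exact hhigh x h hx
      by_cases h : -(M:ℤ) ≤ x
      · have hxT : x ∈ T := by
          rw [hT]
          simp only [Finset.mem_filter, hI, Finset.mem_Ico]
          exact ⟨⟨h, hxM⟩, hx⟩
        obtain ⟨k, hk⟩ := e.surjective ⟨x, hxT⟩
        have hkM := k.isLt
        refine ⟨M - 1 - k.val, ?_⟩
        simp only [hβ]
        rw [dif_pos (show M - 1 - k.val < M by omega)]
        have heq : (⟨M - 1 - (M - 1 - k.val), by omega⟩ : Fin M) = k := by
          apply Fin.ext
          simp only
          omega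
        rw [heq, hk]
      · push_neg at h
        refine ⟨(-x - 1).toNat, ?_⟩
        have h1 : ((-x - 1).toNat : ℤ) = -x - 1 := Int.toNat_of_nonneg (by omega)
        simp only [hβ]
        rw [dif_neg (show ¬ (-x - 1).toNat < M by omega)]
        omega
  have hanti : Antitone (fun i : ℕ => (β i + i + 1).toNat) := by
    apply antitone_nat_of_succ_le
    intro n
    have h1 : β (n+1) < β n := hβanti (Nat.lt_succ_self n)
    apply Int.toNat_le_toNat
    push_cast
    omega
  have hev : ∀ i : ℕ, M ≤ i → (β i + i + 1).toNat = 0 := by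
    intro i hi
    have hb : β i = -((i:ℤ)+1) := by
      simp only [hβ]
      rw [dif_neg (show ¬ i < M by omega)]
    simp [hb]
  refine ⟨⟨fun i => (β i + i + 1).toNat, hanti, ⟨M, hev⟩⟩, ?_⟩
  have hfun : pbeta ⟨fun i => (β i + i + 1).toNat, hanti, ⟨M, hev⟩⟩ = β := by
    funext i
    show ((β i + (i:ℤ) + 1).toNat : ℤ) - ((i:ℤ) + 1) = β i
    have h1 := hβlb i
    have h2 : ((β i + (i:ℤ) + 1).toNat : ℤ) = β i + i + 1 := Int.toNat_of_nonneg (by omega)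
    omega
  rw [betaSet_eq_range, hfun, hrange]

end SCC
namespace SCC

/-! ### Sets given by per-residue maxima -/

lemma int_lt_step {x y : ℤ} {s : ℕ} (hs : 0 < s) (hd : (s:ℤ) ∣ y - x) (h : x < y) :
    x + s ≤ y := by
  obtain ⟨k, hk⟩ := hd
  have hk1 : 1 ≤ k := by
    by_contra hc
    push_neg at hc
    have h2 : k ≤ 0 := by omega
    have : (s:ℤ) * k ≤ 0 := mul_nonpos_of_nonneg_of_nonpos (by positivity) h2
    omega
  have h3 : (s:ℤ) * 1 ≤ (s:ℤ) * k := by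
    apply mul_le_mul_of_nonneg_left hk1 (by positivity)
  omega

lemma emod_eq_of {x y : ℤ} {s : ℕ} (hs : 0 < s) (h0 : 0 ≤ y) (h1 : y < s)
    (hd : (s:ℤ) ∣ x - y) : x % (s:ℤ) = y := by
  obtain ⟨k, hk⟩ := hd
  have hx : x = y + (s:ℤ) * k := by omega
  rw [hx, Int.add_mul_emod_self_left, Int.emod_eq_of_lt h0 h1]

def TSet (s : ℕ) (a : ℕ → ℤ) : Set ℤ := {x | x ≤ a (x % (s:ℤ)).toNat}

section TSetFacts

variable {s : ℕ} {a : ℕ → ℤ} (hs : 2 ≤ s)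
  (hmod : ∀ r : ℕ, r < s → (a r) % (s:ℤ) = r)

include hs in
lemma class_lt (x : ℤ) : (x % (s:ℤ)).toNat < s := by
  have h0 : 0 ≤ x % (s:ℤ) := Int.emod_nonneg x (by omega)
  have h1 : x % (s:ℤ) < s := Int.emod_lt_of_pos x (by omega)
  omega

include hs in
lemma class_cast (x : ℤ) : (((x % (s:ℤ)).toNat : ℕ) : ℤ) = x % (s:ℤ) := by
  have h0 : 0 ≤ x % (s:ℤ) := Int.emod_nonneg x (by omega)
  omega

lemma tmem {x : ℤ} {r : ℕ} (hr : x % (s:ℤ) = (r:ℤ)) : x ∈ TSet s a ↔ x ≤ a r := by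
  unfold TSet
  rw [Set.mem_setOf_eq, hr]
  simp

include hs in
lemma dvd_sub_class (x : ℤ) : (s:ℤ) ∣ x - ((x % (s:ℤ)).toNat : ℤ) := by
  rw [class_cast hs, Int.emod_def]
  exact ⟨x / s, by ring⟩

include hs hmod in
lemma dvd_sub_top (x : ℤ) : (s:ℤ) ∣ x - a ((x % (s:ℤ)).toNat) := by
  have h1 := hmod _ (class_lt hs x)
  have h2 : x % (s:ℤ) = a ((x % (s:ℤ)).toNat) % (s:ℤ) := by
    rw [h1]
    exact (class_cast hs x).symm
  rw [Int.emod_eq_emod_iff_emod_sub_eq_zero] at h2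
  exact Int.dvd_of_emod_eq_zero h2

lemma emod_sub_s (x : ℤ) : (x - (s:ℤ)) % (s:ℤ) = x % (s:ℤ) := by
  rw [Int.sub_emod, Int.emod_self, sub_zero, Int.emod_emod_of_dvd _ (dvd_refl _)]

lemma tset_closed (x : ℤ) (hx : x ∈ TSet s a) : x - s ∈ TSet s a := by
  unfold TSet at *
  rw [Set.mem_setOf_eq] at *
  rw [emod_sub_s]
  omega

include hs hmod in
lemma tset_sym (hsymA : ∀ r : ℕ, r < s → a r + a (s - 1 - r) = -(s:ℤ) - 1) (x : ℤ) :
    x ∈ TSet s a ↔ (-1 - x) ∉ TSet s a := by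
  set r := (x % (s:ℤ)).toNat with hrdef
  have hrs : r < s := class_lt hs x
  have hrc : ((r:ℕ):ℤ) = x % (s:ℤ) := class_cast hs x
  have hdx : (s:ℤ) ∣ x - (r:ℤ) := dvd_sub_class hs x
  have hcast : ((s - 1 - r : ℕ) : ℤ) = (s:ℤ) - 1 - r := by omega
  have hclass2 : (-1 - x) % (s:ℤ) = ((s - 1 - r : ℕ) : ℤ) := by
    apply emod_eq_of (by omega) (by omega) (by omega)
    rw [hcast]
    obtain ⟨k, hk⟩ := hdx
    refine ⟨-1 - k, ?_⟩
    have hr2 : (s:ℤ) * (-1 - k) = -(s:ℤ) - (s:ℤ) * k := by ring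
    rw [hr2]
    omega
  have h1 : x ∈ TSet s a ↔ x ≤ a r := tmem hrc.symm
  have h2 : (-1 - x) ∈ TSet s a ↔ (-1 - x) ≤ a (s - 1 - r) := tmem hclass2
  have hA := hsymA r hrs
  have hdax : (s:ℤ) ∣ x - a r := by
    have := dvd_sub_top hs hmod x
    rwa [← hrdef] at this
  rw [h1, h2]
  constructor
  · intro hle hcon
    omega
  · intro hnot
    push_neg at hnot
    by_contra hgt
    push_neg at hgt
    have step := int_lt_step (s := s) (by omega) hdax hgt
    omega

include hs hmod in
lemma dvd_top_sub_r (r : ℕ) (hr : r < s) : (s:ℤ) ∣ a r - (r:ℤ) := by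
  have hd := hmod r hr
  have he : a r % (s:ℤ) = a r - (s:ℤ) * (a r / (s:ℤ)) := Int.emod_def _ _
  exact ⟨a r / (s:ℤ), by linarith [hd, he]⟩

include hs hmod in
lemma top_add_s_emod (r : ℕ) (hr : r < s) : (a r + (s:ℤ)) % (s:ℤ) = (r:ℤ) := by
  apply emod_eq_of (by omega) (by positivity) (by exact_mod_cast hr)
  have h := dvd_add (dvd_top_sub_r hs hmod r hr) (dvd_refl (s:ℤ))
  rwa [show a r - (r:ℤ) + s = a r + s - r from by ring] at h

include hs hmod in
lemma tset_sSet (p : Partn) (hbp : betaSet p = TSet s a) :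
    sSet s p = {x : ℤ | ∃ r : ℕ, r < s ∧ x = a r + s} := by
  ext x
  unfold sSet
  rw [Set.mem_setOf_eq, Set.mem_setOf_eq, hbp]
  set r := (x % (s:ℤ)).toNat with hrdef
  have hrs : r < s := class_lt hs x
  have hrc : ((r:ℕ):ℤ) = x % (s:ℤ) := class_cast hs x
  have hdax : (s:ℤ) ∣ x - a r := by
    have := dvd_sub_top hs hmod x
    rwa [← hrdef] at this
  have hcl : (x - (s:ℤ)) % (s:ℤ) = (r:ℤ) := by rw [emod_sub_s, hrc]
  have h1 : (x - (s:ℤ)) ∈ TSet s a ↔ x - s ≤ a r := tmem hcl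
  have h2 : x ∈ TSet s a ↔ x ≤ a r := tmem hrc.symm
  rw [h1, h2]
  constructor
  · rintro ⟨hle, hgt⟩
    push_neg at hgt
    have step := int_lt_step (s := s) (by omega) hdax hgt
    exact ⟨r, hrs, by omega⟩
  · rintro ⟨r', hr's, rfl⟩
    have hcl' : (a r' + (s:ℤ)) % (s:ℤ) = (r':ℤ) := top_add_s_emod hs hmod r' hr's
    have hreq : r = r' := by
      rw [hrdef, hcl']
      simp
    rw [hreq]
    constructor
    · omega
    · omega

end TSetFacts

end SCC
namespace SCC

section TSetFacts2

variable {s : ℕ} {a : ℕ → ℤ} (hs : 2 ≤ s)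
  (hmod : ∀ r : ℕ, r < s → (a r) % (s:ℤ) = r)

include hs hmod in
lemma tset_good (hsymA : ∀ r : ℕ, r < s → a r + a (s - 1 - r) = -(s:ℤ) - 1) :
    ∃ p : Partn, betaSet p = TSet s a := by
  obtain ⟨M, hM⟩ : ∃ M : ℕ, ∀ r : ℕ, r < s → -(M:ℤ) ≤ a r ∧ a r < M := by
    refine ⟨(Finset.range s).sup (fun r => (a r).natAbs) + 1, ?_⟩
    intro r hr
    have h1 : (a r).natAbs ≤ (Finset.range s).sup (fun r => (a r).natAbs) :=
      Finset.le_sup (f := fun r => (a r).natAbs) (Finset.mem_range.2 hr)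
    omega
  apply exists_partn (TSet s a) M
  · intro x hx
    unfold TSet
    rw [Set.mem_setOf_eq]
    have := (hM _ (class_lt hs x)).1
    omega
  · intro x hx hmem
    unfold TSet at hmem
    rw [Set.mem_setOf_eq] at hmem
    have := (hM _ (class_lt hs x)).2
    omega
  · exact tset_sym hs hmod hsymA

include hmod in
lemma tset_mem_top (r : ℕ) (hr : r < s) : a r ∈ TSet s a :=
  (tmem (hmod r hr)).2 le_rfl

include hs hmod in
lemma tset_top_le {a' : ℕ → ℤ} (hmod' : ∀ r : ℕ, r < s → (a' r) % (s:ℤ) = r)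
    (h : TSet s a ⊆ TSet s a') (r : ℕ) (hr : r < s) : a r ≤ a' r := by
  have hmem := h (tset_mem_top hmod r hr)
  exact (tmem (hmod r hr)).1 hmem

include hs in
lemma tset_congr {a' : ℕ → ℤ} (h : ∀ r : ℕ, r < s → a r = a' r) : TSet s a = TSet s a' := by
  ext x
  unfold TSet
  rw [Set.mem_setOf_eq, Set.mem_setOf_eq, h _ (class_lt hs x)]

end TSetFacts2

/-! ### The parametrizing tops -/

def bfull (s : ℕ) (b : ℕ → ℤ) (r : ℕ) : ℤ :=
  if r < s / 2 then b r else if 2 * r + 1 = s then 0 else -(b (s - 1 - r))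

def topA (s : ℕ) (b : ℕ → ℤ) (r : ℕ) : ℤ := (r : ℤ) - s + s * bfull s b r

section TopA

variable {s : ℕ} (hs : 2 ≤ s) (b : ℕ → ℤ)

include hs in
lemma bfull_antisym (r : ℕ) (hr : r < s) :
    bfull s b r + bfull s b (s - 1 - r) = 0 := by
  unfold bfull
  by_cases h1 : r < s / 2
  · rw [if_pos h1, if_neg (show ¬ (s - 1 - r < s / 2) by omega),
      if_neg (show ¬ (2 * (s - 1 - r) + 1 = s) by omega),
      show s - 1 - (s - 1 - r) = r from by omega]
    ring
  · by_cases h2 : 2 * r + 1 = s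
    · rw [if_neg h1, if_pos h2, show s - 1 - r = r from by omega, if_neg h1, if_pos h2]
      ring
    · rw [if_neg h1, if_neg h2, if_pos (show s - 1 - r < s / 2 by omega)]
      ring

include hs in
lemma topA_mod (r : ℕ) (hr : r < s) : (topA s b r) % (s:ℤ) = r := by
  apply emod_eq_of (by omega) (by positivity) (by exact_mod_cast hr)
  unfold topA
  exact ⟨bfull s b r - 1, by ring⟩

include hs in
lemma topA_sym (r : ℕ) (hr : r < s) :
    topA s b r + topA s b (s - 1 - r) = -(s:ℤ) - 1 := by
  unfold topA
  have hanti := bfull_antisym hs b r hr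
  have hcast : ((s - 1 - r : ℕ) : ℤ) = (s:ℤ) - 1 - r := by omega
  have hmul : (s:ℤ) * bfull s b r + (s:ℤ) * bfull s b (s - 1 - r) = 0 := by
    rw [← mul_add, hanti, mul_zero]
  rw [hcast]
  linarith

include hs in
lemma topA_half (r : ℕ) (hr : r < s / 2) :
    2 * topA s b r + s + 1 = 2 * (r:ℤ) + 1 - s + 2 * (s:ℤ) * b r := by
  unfold topA bfull
  rw [if_pos hr]
  ring

end TopA

/-! ### Key integer arithmetic -/

def b0 (s N : ℕ) (r : ℕ) : ℤ := (-(N:ℤ) * s - (2 * (r:ℤ) + 1 - s)) / (2 * (s:ℤ)) + 1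

lemma adm_iff (s N : ℕ) (hs : 2 ≤ s) (hN : 1 ≤ N) (r : ℕ) (hr : r < s / 2) (b : ℤ) :
    (-((N:ℤ) * s) < 2 * (r:ℤ) + 1 - s + 2 * (s:ℤ) * b ∧
      2 * (r:ℤ) + 1 - s + 2 * (s:ℤ) * b < (N:ℤ) * s) ↔
    (b0 s N r ≤ b ∧ b < b0 s N r + N) := by
  set u : ℤ := 2 * (r:ℤ) + 1 - s with hu
  set m : ℤ := -(N:ℤ) * s - u with hm
  set d : ℤ := 2 * (s:ℤ) with hd
  set q : ℤ := m / d with hq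
  have hd0 : (0:ℤ) < d := by rw [hd]; positivity
  have hqm : d * q ≤ m ∧ m < d * q + d := by
    have h0 := Int.emod_nonneg m (show d ≠ 0 by omega)
    have h2 := Int.emod_lt_of_pos m hd0
    have h3 : m % d = m - d * q := by rw [hq, Int.emod_def]
    constructor
    · linarith
    · linarith
  have hb0 : b0 s N r = q + 1 := by rw [b0, ← hu, ← hm, ← hd, ← hq]
  rw [hb0]
  have hndvd : ¬ ((s:ℤ) ∣ (2 * (r:ℤ) + 1)) := by
    intro hdvd
    have h1 : (0:ℤ) < 2 * (r:ℤ) + 1 := by positivity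
    have h2 := Int.le_of_dvd h1 hdvd
    have h3 : 2 * r + 1 < s := by omega
    have : (2 * (r:ℤ) + 1) < s := by exact_mod_cast h3
    omega
  constructor
  · rintro ⟨h1, h2⟩
    have hmb : m < d * b := by rw [hm]; linarith
    have hqb : q < b := by
      have : d * q < d * b := by linarith [hqm.1]
      exact lt_of_mul_lt_mul_left this (by omega)
    constructor
    · omega
    · by_contra hc
      push_neg at hc
      have hbb : q + N + 1 ≤ b := by omega
      have h4 : d * (q + N + 1) ≤ d * b := by
        apply mul_le_mul_of_nonneg_left hbb (by omega)
      have h5 : d * b < m + 2 * ((N:ℤ) * s) := by rw [hm]; linarith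
      have hbridge : d * (N:ℤ) = 2 * ((N:ℤ) * (s:ℤ)) := by rw [hd]; ring
      linarith [hqm.2]
  · rintro ⟨h1, h2⟩
    have hb1 : q + 1 ≤ b := h1
    have hb2 : b ≤ q + N := by omega
    have h4 : d * (q + 1) ≤ d * b := mul_le_mul_of_nonneg_left hb1 (by omega)
    have h5 : d * b ≤ d * (q + N) := mul_le_mul_of_nonneg_left hb2 (by omega)
    have hlow : m < d * b := by linarith [hqm.2]
    have hup : d * b ≤ m + d * (N:ℤ) := by linarith [hqm.1]
    have hne : d * b ≠ m + d * N := by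
      intro heq
      apply hndvd
      refine ⟨(N:ℤ) - 2 * b + 1, ?_⟩
      have hdb : d * b = 2 * ((s:ℤ) * b) := by rw [hd]; ring
      have hdn : d * (N:ℤ) = 2 * ((s:ℤ) * N) := by rw [hd]; ring
      have hexp : (s:ℤ) * ((N:ℤ) - 2 * b + 1) = (s:ℤ) * N - 2 * ((s:ℤ) * b) + s := by ring
      linarith [heq, hm, hu]
    have hbridge : d * (N:ℤ) = 2 * ((N:ℤ) * (s:ℤ)) := by rw [hd]; ring
    constructor
    · have := hlow
      rw [hm] at this
      linarith
    · have hlt : d * b < m + d * (N:ℤ) := lt_of_le_of_ne hup hne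
      rw [hm] at hlt
      linarith

end SCC
namespace SCC

lemma pair_bound (s N : ℕ) (hs : 2 ≤ s) (hN : 1 ≤ N) (a : ℕ → ℤ)
    (hsymA : ∀ r : ℕ, r < s → a r + a (s - 1 - r) = -(s:ℤ) - 1)
    (hadm : ∀ r : ℕ, r < s / 2 →
      -((N:ℤ)*s) < 2 * a r + s + 1 ∧ 2 * a r + s + 1 < (N:ℤ)*s) :
    ∀ r r' : ℕ, r < s → r' < s → a r - a r' < (N:ℤ) * s := by
  have hNs : (1:ℤ) ≤ (N:ℤ) * s := by
    have h1 : 1 * 1 ≤ N * s := Nat.mul_le_mul hN (by omega)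
    exact_mod_cast h1
  have habs : ∀ r : ℕ, r < s → -((N:ℤ)*s) < 2 * a r + s + 1 ∧ 2 * a r + s + 1 < (N:ℤ)*s := by
    intro r hr
    by_cases h1 : r < s / 2
    · exact hadm r h1
    by_cases h2 : 2 * r + 1 = s
    · have hsym := hsymA r hr
      rw [show s - 1 - r = r from by omega] at hsym
      constructor <;> linarith
    · have hr2 : s - 1 - r < s / 2 := by omega
      have hsym := hsymA (s - 1 - r) (by omega)
      rw [show s - 1 - (s - 1 - r) = r from by omega] at hsym
      have := hadm _ hr2
      constructor <;> linarith
  intro r r' hr hr'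
  have h1 := habs r hr
  have h2 := habs r' hr'
  linarith

end SCC

open SCC in
theorem SCC.count_bounded_sc_cores_aux (s N : ℕ) (hs : 2 ≤ s) (hN : 1 ≤ N) :
    Set.ncard {p : Partn | IsCore s p ∧ SelfConj p ∧
        ∀ k ∈ sSet s p, ∀ l ∈ sSet s p, k - l < (N : ℤ) * s} = N ^ (s / 2) := by
  classical
  set A := {p : Partn | IsCore s p ∧ SelfConj p ∧
      ∀ k ∈ sSet s p, ∀ l ∈ sSet s p, k - l < (N : ℤ) * s} with hA
  set bfn : (Fin (s/2) → Fin N) → ℕ → ℤ :=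
    fun j r => b0 s N r + (if hr : r < s / 2 then ((j ⟨r, hr⟩ : ℕ) : ℤ) else 0) with hbfn
  set Ψ : (Fin (s/2) → Fin N) → Set ℤ := fun j => TSet s (topA s (bfn j)) with hΨ
  have hbfn_val : ∀ (j : Fin (s/2) → Fin N) (r : ℕ) (hr : r < s / 2),
      bfn j r = b0 s N r + ((j ⟨r, hr⟩ : ℕ) : ℤ) := by
    intro j r hr
    simp only [hbfn]
    rw [dif_pos hr]
  have hadmj : ∀ (j : Fin (s/2) → Fin N) (r : ℕ), r < s / 2 →
      -((N:ℤ)*s) < 2 * topA s (bfn j) r + s + 1 ∧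
        2 * topA s (bfn j) r + s + 1 < (N:ℤ)*s := by
    intro j r hr
    have he := topA_half hs (bfn j) r hr
    have hb := hbfn_val j r hr
    have hjlt : ((j ⟨r, hr⟩ : ℕ) : ℤ) < N := by exact_mod_cast (j ⟨r, hr⟩).isLt
    have hjnn : (0:ℤ) ≤ ((j ⟨r, hr⟩ : ℕ) : ℤ) := by positivity
    have := (adm_iff s N hs hN r hr (bfn j r)).2 ⟨by omega, by omega⟩
    constructor
    · rw [he]; exact this.1
    · rw [he]; exact this.2
  -- direction 1 : range Ψ ⊆ betaSet '' A
  have hsub1 : Set.range Ψ ⊆ betaSet '' A := by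
    rintro _ ⟨j, rfl⟩
    have hmodj := topA_mod hs (bfn j)
    have hsymj := topA_sym hs (bfn j)
    obtain ⟨p, hp⟩ := tset_good hs hmodj hsymj
    refine ⟨p, ?_, ?_⟩
    · rw [hA, Set.mem_setOf_eq]
      refine ⟨?_, ?_, ?_⟩
      · rw [isCore_iff s (by omega) p]
        intro x hx
        rw [hp] at hx ⊢
        exact tset_closed x hx
      · rw [selfConj_iff p]
        intro x
        rw [hp, ← hp]
        rw [hp]
        exact tset_sym hs hmodj hsymj x
      · intro k hk l hl
        rw [tset_sSet hs hmodj p hp] at hk hl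
        obtain ⟨r, hr, rfl⟩ := hk
        obtain ⟨r', hr', rfl⟩ := hl
        have hpair := pair_bound s N hs hN _ hsymj (hadmj j) r r' hr hr'
        linarith
    · rw [hp]
  -- direction 2 : betaSet '' A ⊆ range Ψ
  have hsub2 : betaSet '' A ⊆ Set.range Ψ := by
    rintro _ ⟨p, hpA, rfl⟩
    rw [hA, Set.mem_setOf_eq] at hpA
    obtain ⟨hcore, hsc, hbd⟩ := hpA
    have hcl : ∀ x ∈ betaSet p, x - s ∈ betaSet p := (isCore_iff s (by omega) p).1 hcore
    have hsym : ∀ x : ℤ, x ∈ betaSet p ↔ (-1 - x) ∉ betaSet p := (selfConj_iff p).1 hsc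
    have hex : ∀ r : ℕ, r < s → ∃ z : ℤ, (z ∈ betaSet p ∧ z % (s:ℤ) = (r:ℤ)) ∧
        ∀ w : ℤ, (w ∈ betaSet p ∧ w % (s:ℤ) = (r:ℤ)) → w ≤ z := by
      intro r hr
      have hbdd : ∀ z : ℤ, (z ∈ betaSet p ∧ z % (s:ℤ) = (r:ℤ)) → z ≤ pbeta p 0 := by
        rintro z ⟨hz, _⟩
        rw [betaSet_eq_range] at hz
        obtain ⟨i, rfl⟩ := hz
        exact (pbeta_strictAnti p).antitone (Nat.zero_le i)
      have hne : ∃ z : ℤ, z ∈ betaSet p ∧ z % (s:ℤ) = (r:ℤ) := by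
        set K : ℕ := conjCount p 0 + r + 1 with hK
        refine ⟨(r:ℤ) - s * K, ?_, ?_⟩
        · apply low_mem
          have h2K : 2 * (K:ℤ) ≤ (s:ℤ) * K := by
            apply mul_le_mul_of_nonneg_right _ (by positivity)
            exact_mod_cast hs
          have hrK : (r:ℤ) < K := by rw [hK]; push_cast; omega
          have hKval : (K:ℤ) = (conjCount p 0 : ℤ) + r + 1 := by rw [hK]; push_cast; ring
          linarith
        · apply emod_eq_of (by omega) (by positivity) (by exact_mod_cast hr)
          exact ⟨-(K:ℤ), by ring⟩
      obtain ⟨ub, hub1, hub2⟩ := Int.exists_greatest_of_bdd ⟨pbeta p 0, hbdd⟩ hne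
      exact ⟨ub, hub1, hub2⟩
    choose! a ha1 ha2 using hex
    have hmoda : ∀ r : ℕ, r < s → (a r) % (s:ℤ) = (r:ℤ) := fun r hr => (ha1 r hr).2
    have haB : ∀ r : ℕ, r < s → a r ∈ betaSet p := fun r hr => (ha1 r hr).1
    -- betaSet p = TSet s a
    have hBT : betaSet p = TSet s a := by
      ext x
      have hrs : (x % (s:ℤ)).toNat < s := class_lt hs x
      have hrc : (((x % (s:ℤ)).toNat : ℕ):ℤ) = x % (s:ℤ) := class_cast hs x
      set r := (x % (s:ℤ)).toNat
      constructor
      · intro hx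
        exact (tmem hrc.symm).2 ((ha2 r hrs) x ⟨hx, hrc.symm⟩)
      · intro hx
        have hxle : x ≤ a r := (tmem hrc.symm).1 hx
        have hdvd : (s:ℤ) ∣ a r - x := by
          have h1 : a r % (s:ℤ) = x % (s:ℤ) := by rw [hmoda r hrs, hrc]
          rw [Int.emod_eq_emod_iff_emod_sub_eq_zero] at h1
          exact Int.dvd_of_emod_eq_zero h1
        obtain ⟨k, hk⟩ := hdvd
        have hk0 : 0 ≤ k := by
          by_contra hc
          push_neg at hc
          have h2 : k ≤ -1 := by omega
          have h3 : (s:ℤ) * k ≤ (s:ℤ) * (-1) := by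
            apply mul_le_mul_of_nonneg_left h2 (by positivity)
          omega
        have hmem := closure_iter p s hcl (a r) (haB r hrs) k.toNat
        have hcast : ((k.toNat : ℕ) : ℤ) = k := Int.toNat_of_nonneg hk0
        have hxeq : a r - ((k.toNat : ℕ) : ℤ) * s = x := by
          have hb : ((k.toNat : ℕ) : ℤ) * s = (s:ℤ) * k := by rw [hcast]; ring
          omega
        rwa [hxeq] at hmem
    -- symmetry of the tops
    have hsymAa : ∀ r : ℕ, r < s → a r + a (s - 1 - r) = -(s:ℤ) - 1 := by
      intro r hr
      set r2 := s - 1 - r with hr2def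
      have hr2s : r2 < s := by omega
      have hc2 : ((r2:ℕ):ℤ) = (s:ℤ) - 1 - r := by rw [hr2def]; omega
      obtain ⟨k, hk⟩ := dvd_top_sub_r (a := a) hs hmoda r2 hr2s
      have hα : -(s:ℤ) - 1 - a r2 ≤ a r := by
        have hmem : (-(s:ℤ) - 1 - a r2) ∈ betaSet p := by
          rw [hsym, hBT]
          rw [show (-1 - (-(s:ℤ) - 1 - a r2)) = a r2 + s from by ring]
          rw [tmem (top_add_s_emod hs hmoda r2 hr2s)]
          omega
        rw [hBT] at hmem
        have hclm : (-(s:ℤ) - 1 - a r2) % (s:ℤ) = (r:ℤ) := by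
          apply emod_eq_of (by omega) (by positivity) (by exact_mod_cast hr)
          refine ⟨-2 - k, ?_⟩
          have hexp : (s:ℤ) * (-2 - k) = -2*(s:ℤ) - (s:ℤ)*k := by ring
          linarith
        exact (tmem hclm).1 hmem
      have hβ : a r ≤ -(s:ℤ) - 1 - a r2 := by
        have hnm : (-1 - a r2) ∉ betaSet p := (hsym (a r2)).1 (haB r2 hr2s)
        have hclm2 : (-1 - a r2) % (s:ℤ) = (r:ℤ) := by
          apply emod_eq_of (by omega) (by positivity) (by exact_mod_cast hr)
          refine ⟨-1 - k, ?_⟩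
          have hexp : (s:ℤ) * (-1 - k) = -(s:ℤ) - (s:ℤ)*k := by ring
          linarith
        rw [hBT, tmem hclm2] at hnm
        push_neg at hnm
        have hdvd2 : (s:ℤ) ∣ (-1 - a r2) - a r := by
          have hdr := dvd_top_sub_r (a := a) hs hmoda r hr
          obtain ⟨k', hk'⟩ := hdr
          refine ⟨-1 - k - k', ?_⟩
          have hexp : (s:ℤ) * (-1 - k - k') = -(s:ℤ) - (s:ℤ)*k - (s:ℤ)*k' := by ring
          linarith
        have hstep := int_lt_step (s := s) (by omega) hdvd2 hnm
        omega
      linarith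
    -- the division values
    set bb : ℕ → ℤ := fun r => (a r - ((r:ℤ) - s)) / s with hbb
    have hdiv : ∀ r : ℕ, r < s → a r = (r:ℤ) - s + s * bb r := by
      intro r hr
      obtain ⟨k, hk⟩ := dvd_top_sub_r (a := a) hs hmoda r hr
      have h1 : a r - ((r:ℤ) - s) = (s:ℤ) * (k + 1) := by
        have : (s:ℤ) * (k+1) = (s:ℤ)*k + s := by ring
        linarith
      have h2 : bb r = k + 1 := by
        simp only [hbb]
        rw [h1, Int.mul_ediv_cancel_left _ (show (s:ℤ) ≠ 0 by omega)]
      rw [h2]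
      linarith [hk]
    -- admissibility from the boundedness hypothesis
    have hadm2 : ∀ r : ℕ, r < s / 2 →
        -((N:ℤ)*s) < 2 * a r + s + 1 ∧ 2 * a r + s + 1 < (N:ℤ)*s := by
      intro r hr
      have hrs : r < s := by omega
      have hr2s : s - 1 - r < s := by omega
      have hsS := tset_sSet hs hmoda p hBT
      have hk : a r + s ∈ sSet s p := by rw [hsS]; exact ⟨r, hrs, rfl⟩
      have hl : a (s-1-r) + s ∈ sSet s p := by rw [hsS]; exact ⟨s-1-r, hr2s, rfl⟩
      have hb1 := hbd _ hk _ hl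
      have hb2 := hbd _ hl _ hk
      have hsymr := hsymAa r hrs
      constructor
      · linarith
      · linarith
    have hb0a : ∀ r : ℕ, r < s / 2 → b0 s N r ≤ bb r ∧ bb r < b0 s N r + N := by
      intro r hr
      have hrs : r < s := by omega
      have hd := hdiv r hrs
      have h2 := hadm2 r hr
      apply (adm_iff s N hs hN r hr (bb r)).1
      constructor
      · linarith [h2.1]
      · linarith [h2.2]
    set j : Fin (s/2) → Fin N := fun i =>
      ⟨(bb i.val - b0 s N i.val).toNat, by
        have := hb0a i.val i.isLt
        omega⟩ with hj
    refine ⟨j, ?_⟩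
    show TSet s (topA s (bfn j)) = betaSet p
    rw [hBT]
    apply tset_congr hs
    intro r hr
    have hbfnj : ∀ (r' : ℕ) (hr' : r' < s / 2), bfn j r' = bb r' := by
      intro r' hr'
      rw [hbfn_val j r' hr']
      have hval : ((j ⟨r', hr'⟩ : ℕ) : ℤ) = (bb r' - b0 s N r').toNat := by
        simp only [hj]
      have := hb0a r' hr'
      omega
    by_cases h1 : r < s / 2
    · unfold topA bfull
      rw [if_pos h1, hbfnj r h1]
      exact (hdiv r hr).symm
    by_cases h2 : 2 * r + 1 = s
    · unfold topA bfull
      rw [if_neg h1, if_pos h2]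
      have hsymr := hsymAa r hr
      rw [show s - 1 - r = r from by omega] at hsymr
      have hcast : 2 * (r:ℤ) + 1 = (s:ℤ) := by exact_mod_cast h2
      linarith
    · have hr2 : s - 1 - r < s / 2 := by omega
      unfold topA bfull
      rw [if_neg h1, if_neg h2, hbfnj _ hr2]
      have hsymr := hsymAa r hr
      have hd2 := hdiv (s-1-r) (by omega)
      have hc2 : ((s - 1 - r : ℕ):ℤ) = (s:ℤ) - 1 - r := by omega
      linarith
  -- injectivity of Ψ
  have hinj : Function.Injective Ψ := by
    intro j j' hjj
    have htop : ∀ r : ℕ, r < s → topA s (bfn j) r = topA s (bfn j') r := by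
      intro r hr
      have h1 := tset_top_le hs (topA_mod hs (bfn j)) (topA_mod hs (bfn j'))
        (by rw [show TSet s (topA s (bfn j)) = Ψ j from rfl, hjj]) r hr
      have h2 := tset_top_le hs (topA_mod hs (bfn j')) (topA_mod hs (bfn j))
        (by rw [show TSet s (topA s (bfn j')) = Ψ j' from rfl, ← hjj]) r hr
      omega
    funext i
    have hi : (i : ℕ) < s / 2 := i.isLt
    have ht := htop i.val (by omega)
    unfold topA bfull at ht
    rw [if_pos hi, if_pos hi] at ht
    have hcanc : bfn j i.val = bfn j' i.val := by
      have := mul_left_cancel₀ (show (s:ℤ) ≠ 0 by omega) (show (s:ℤ) * bfn j i.val = (s:ℤ) * bfn j' i.val by linarith)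
      exact this
    rw [hbfn_val j i.val hi, hbfn_val j' i.val hi] at hcanc
    have hieq : (⟨i.val, hi⟩ : Fin (s/2)) = i := rfl
    rw [hieq] at hcanc
    have : ((j i : ℕ) : ℤ) = ((j' i : ℕ) : ℤ) := by omega
    exact Fin.ext (by exact_mod_cast this)
  -- count
  have himg : betaSet '' A = Set.range Ψ := Set.Subset.antisymm hsub2 hsub1
  calc A.ncard = (betaSet '' A).ncard := (Set.ncard_image_of_injective A betaSet_injective).symm
    _ = (Set.range Ψ).ncard := by rw [himg]
    _ = (Set.univ : Set (Fin (s/2) → Fin N)).ncard := by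
        rw [← Set.image_univ, Set.ncard_image_of_injective _ hinj]
    _ = N ^ (s / 2) := by
        rw [Set.ncard_univ, Nat.card_eq_fintype_card, Fintype.card_fun]
        simp

/-- The number of self-conjugate `s`-cores `λ` with `k - l < Ns` for all
`k, l ∈ S(λ)` is `N^⌊s/2⌋`. -/
theorem count_bounded_sc_cores (s N : ℕ) (hs : 2 ≤ s) (hN : 1 ≤ N) :
    Set.ncard {p : Partn | IsCore s p ∧ SelfConj p ∧
        ∀ k ∈ sSet s p, ∀ l ∈ sSet s p, k - l < (N : ℤ) * s} = N ^ (s / 2) := by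
  exact SCC.count_bounded_sc_cores_aux s N hs hN
end
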